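/- arXiv:math/0412535 — 5 statements merged into one kernel-verified Lean document; each statement's English description precedes it below -/
import Mathlib

section
/- The cut polytope Cut(K₅) of the complete graph on 5 vertices is not compressed. (Lemma 3.5 of the paper.) -/
noncomputable section

/-- The unit hypercube `[0,1]^N ⊆ ℝ^N`. -/
def stdCube (N : ℕ) : Set (Fin N → ℝ) := {x | ∀ i, x i ∈ Set.Icc (0 : ℝ) 1}

/-- The set of `0/1` points `{0,1}^N ⊆ ℝ^N`. -/
def zeroOneSet (N : ℕ) : Set (Fin N → ℝ) := {x | ∀ i, x i = 0 ∨ x i = 1}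

/-- A polytope presented as the convex hull of a finite set `A` of integer points in `ℝ^E`
is compressed (characterization (3) of the paper's Theorem 2.4): there are `N ∈ ℕ` and an
affine map `π : ℝ^E → ℝ^N`, injective on `conv A`, mapping every point of `conv A` lying in
the subgroup of `ℤ^E` generated by `A` into `{0,1}^N`, with
`π(conv A) = [0,1]^N ∩ affineSpan ℝ (π(conv A))`. -/
def IsCompressed {E : Type*} (A : Set (E → ℝ)) : Prop :=
  ∃ (N : ℕ) (π : (E → ℝ) →ᵃ[ℝ] (Fin N → ℝ)),
    Set.InjOn π (convexHull ℝ A) ∧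
    (∀ x ∈ convexHull ℝ A ∩ (AddSubgroup.closure A : Set (E → ℝ)), π x ∈ zeroOneSet N) ∧
    π '' convexHull ℝ A
      = stdCube N ∩ (affineSpan ℝ (π '' convexHull ℝ A) : Set (Fin N → ℝ))

open Classical in
/-- The cut semimetric `δ_G(S) ∈ ℝ^E` of a subset `S` of the vertices of `G`: the coordinate
at an edge is `1` if exactly one of its endpoints lies in `S`, and `0` otherwise. -/
noncomputable def cutVec {V : Type*} (G : SimpleGraph V) (S : Set V) : G.edgeSet → ℝ :=
  fun e =>
    if Sym2.lift ⟨fun u v => ((u ∈ S) ↔ (v ∈ S)), fun _ _ => propext iff_comm⟩ e.1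
    then 0 else 1

namespace CutK5

abbrev Kg : SimpleGraph (Fin 5) := ⊤
abbrev Ee := Kg.edgeSet

lemma mem_edge {u v : Fin 5} (h : u ≠ v) : s(u,v) ∈ Kg.edgeSet := by simp [h]

noncomputable def cc (S : Set (Fin 5)) : Ee → ℝ := cutVec Kg S

open Classical in
lemma cutVec_apply (S : Set (Fin 5)) (u v : Fin 5) (h : s(u,v) ∈ Kg.edgeSet) :
    cc S ⟨s(u,v), h⟩ = if (u ∈ S ↔ v ∈ S) then 0 else 1 := by
  simp [cc, cutVec]
  split_ifs <;> simp_all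

noncomputable def w0 : Ee → ℝ := cc {0}
noncomputable def w1 : Ee → ℝ := cc {1}
noncomputable def w2 : Ee → ℝ := cc {2}
noncomputable def w3 : Ee → ℝ := cc {0,3}
noncomputable def w4 : Ee → ℝ := cc {0,4}
noncomputable def w5 : Ee → ℝ := cc {1,3}
noncomputable def w6 : Ee → ℝ := cc {1,4}
noncomputable def w7 : Ee → ℝ := cc {2,3}
noncomputable def w8 : Ee → ℝ := cc {2,4}
noncomputable def uu : Ee → ℝ := cc {0,1}
noncomputable def w9 : Ee → ℝ := cc (∅ : Set (Fin 5))
noncomputable def vv : Ee → ℝ := cc {0,1,2}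

def bb : Fin 5 → ℝ := ![1,1,1,-1,-1]

noncomputable def ff : (Ee → ℝ) →ₗ[ℝ] ℝ where
  toFun x := -(∑ u : Fin 5, ∑ v : Fin 5,
      if h : u ≠ v then bb u * bb v * x ⟨s(u,v), mem_edge h⟩ else 0) / 2
  map_add' x y := by
    have h1 : ∀ u v : Fin 5,
        (if h : u ≠ v then bb u * bb v * (x + y) ⟨s(u,v), mem_edge h⟩ else 0)
        = (if h : u ≠ v then bb u * bb v * x ⟨s(u,v), mem_edge h⟩ else 0)
          + (if h : u ≠ v then bb u * bb v * y ⟨s(u,v), mem_edge h⟩ else 0) := by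
      intro u v
      by_cases h : u ≠ v <;> simp [h] <;> ring
    simp only [h1, Finset.sum_add_distrib]
    ring
  map_smul' t x := by
    have h1 : ∀ u v : Fin 5,
        (if h : u ≠ v then bb u * bb v * (t • x) ⟨s(u,v), mem_edge h⟩ else 0)
        = t * (if h : u ≠ v then bb u * bb v * x ⟨s(u,v), mem_edge h⟩ else 0) := by
      intro u v
      by_cases h : u ≠ v <;> simp [h] <;> ring
    simp only [h1, ← Finset.mul_sum]
    simp
    ring

lemma ff_w0 : ff w0 = 0 := by
  simp only [w0, ff, LinearMap.coe_mk, AddHom.coe_mk, Fin.sum_univ_five]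
  simp [cutVec_apply, bb]
  all_goals norm_num

lemma ff_w1 : ff w1 = 0 := by
  simp only [w1, ff, LinearMap.coe_mk, AddHom.coe_mk, Fin.sum_univ_five]
  simp [cutVec_apply, bb]
  all_goals norm_num

lemma ff_w2 : ff w2 = 0 := by
  simp only [w2, ff, LinearMap.coe_mk, AddHom.coe_mk, Fin.sum_univ_five]
  simp [cutVec_apply, bb]
  all_goals norm_num

lemma ff_w3 : ff w3 = 0 := by
  simp only [w3, ff, LinearMap.coe_mk, AddHom.coe_mk, Fin.sum_univ_five]
  simp [cutVec_apply, bb]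
  all_goals norm_num

lemma ff_w4 : ff w4 = 0 := by
  simp only [w4, ff, LinearMap.coe_mk, AddHom.coe_mk, Fin.sum_univ_five]
  simp [cutVec_apply, bb]
  all_goals norm_num

lemma ff_w5 : ff w5 = 0 := by
  simp only [w5, ff, LinearMap.coe_mk, AddHom.coe_mk, Fin.sum_univ_five]
  simp [cutVec_apply, bb]
  all_goals norm_num

lemma ff_w6 : ff w6 = 0 := by
  simp only [w6, ff, LinearMap.coe_mk, AddHom.coe_mk, Fin.sum_univ_five]
  simp [cutVec_apply, bb]
  all_goals norm_num

lemma ff_w7 : ff w7 = 0 := by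
  simp only [w7, ff, LinearMap.coe_mk, AddHom.coe_mk, Fin.sum_univ_five]
  simp [cutVec_apply, bb]
  all_goals norm_num

lemma ff_w8 : ff w8 = 0 := by
  simp only [w8, ff, LinearMap.coe_mk, AddHom.coe_mk, Fin.sum_univ_five]
  simp [cutVec_apply, bb]
  all_goals norm_num

lemma ff_uu : ff uu = 2 := by
  simp only [uu, ff, LinearMap.coe_mk, AddHom.coe_mk, Fin.sum_univ_five]
  simp [cutVec_apply, bb]
  all_goals norm_num

lemma ff_w9 : ff w9 = 0 := by
  simp only [w9, ff, LinearMap.coe_mk, AddHom.coe_mk, Fin.sum_univ_five]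
  simp [cutVec_apply, bb]
  all_goals norm_num

lemma ff_nonneg (S : Set (Fin 5)) : 0 ≤ ff (cc S) := by
  simp only [ff, LinearMap.coe_mk, AddHom.coe_mk, Fin.sum_univ_five]
  by_cases h0 : (0:Fin 5) ∈ S <;> by_cases h1 : (1:Fin 5) ∈ S <;>
    by_cases h2 : (2:Fin 5) ∈ S <;> by_cases h3 : (3:Fin 5) ∈ S <;>
    by_cases h4 : (4:Fin 5) ∈ S <;>
    · simp [cutVec_apply, bb, h0, h1, h2, h3, h4]
      all_goals norm_num

lemma w9_zero : w9 = 0 := by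
  funext e'
  obtain ⟨e, he⟩ := e'
  induction e using Sym2.ind with
  | _ u v => simp [w9, cutVec_apply]

noncomputable def E01 : Ee := ⟨s((0:Fin 5),(1:Fin 5)), mem_edge (by decide)⟩
noncomputable def E02 : Ee := ⟨s((0:Fin 5),(2:Fin 5)), mem_edge (by decide)⟩
noncomputable def E03 : Ee := ⟨s((0:Fin 5),(3:Fin 5)), mem_edge (by decide)⟩
noncomputable def E04 : Ee := ⟨s((0:Fin 5),(4:Fin 5)), mem_edge (by decide)⟩
noncomputable def E12 : Ee := ⟨s((1:Fin 5),(2:Fin 5)), mem_edge (by decide)⟩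
noncomputable def E13 : Ee := ⟨s((1:Fin 5),(3:Fin 5)), mem_edge (by decide)⟩
noncomputable def E14 : Ee := ⟨s((1:Fin 5),(4:Fin 5)), mem_edge (by decide)⟩
noncomputable def E23 : Ee := ⟨s((2:Fin 5),(3:Fin 5)), mem_edge (by decide)⟩
noncomputable def E24 : Ee := ⟨s((2:Fin 5),(4:Fin 5)), mem_edge (by decide)⟩
noncomputable def E34 : Ee := ⟨s((3:Fin 5),(4:Fin 5)), mem_edge (by decide)⟩

def sgl (e : Ee) : Ee → ℝ := fun e' => if e = e' then 1 else 0

lemma sing01 : sgl E01 = (1/2 : ℝ) • w0 + (1/2 : ℝ) • w1 + (-(1/2) : ℝ) • uu := by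
  funext e'
  obtain ⟨e, he⟩ := e'
  induction e using Sym2.ind with
  | _ u v =>
    fin_cases u <;> fin_cases v <;> (try simp at he) <;>
      · simp [sgl, E01, w0, w1, w2, w3, w4, w5, w6, w7, w8, uu, cutVec_apply, Sym2.eq_iff]
        all_goals norm_num

lemma sing02 : sgl E02 = (1/2 : ℝ) • w0 + (1/2 : ℝ) • w1 + (-(1/2) : ℝ) • w5 + (-(1/2) : ℝ) • w6 + (1/2 : ℝ) • w7 + (1/2 : ℝ) • w8 + (-(1/2) : ℝ) • uu := by
  funext e'
  obtain ⟨e, he⟩ := e'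
  induction e using Sym2.ind with
  | _ u v =>
    fin_cases u <;> fin_cases v <;> (try simp at he) <;>
      · simp [sgl, E02, w0, w1, w2, w3, w4, w5, w6, w7, w8, uu, cutVec_apply, Sym2.eq_iff]
        all_goals norm_num

lemma sing03 : sgl E03 = (-(1/2) : ℝ) • w1 + (1/2 : ℝ) • w5 + (-(1/2) : ℝ) • w8 + (1/2 : ℝ) • uu := by
  funext e'
  obtain ⟨e, he⟩ := e'
  induction e using Sym2.ind with
  | _ u v =>
    fin_cases u <;> fin_cases v <;> (try simp at he) <;>
      · simp [sgl, E03, w0, w1, w2, w3, w4, w5, w6, w7, w8, uu, cutVec_apply, Sym2.eq_iff]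
        all_goals norm_num

lemma sing04 : sgl E04 = (-(1/2) : ℝ) • w1 + (1/2 : ℝ) • w6 + (-(1/2) : ℝ) • w7 + (1/2 : ℝ) • uu := by
  funext e'
  obtain ⟨e, he⟩ := e'
  induction e using Sym2.ind with
  | _ u v =>
    fin_cases u <;> fin_cases v <;> (try simp at he) <;>
      · simp [sgl, E04, w0, w1, w2, w3, w4, w5, w6, w7, w8, uu, cutVec_apply, Sym2.eq_iff]
        all_goals norm_num

lemma sing12 : sgl E12 = (1/2 : ℝ) • w0 + (1/2 : ℝ) • w1 + (-(1/2) : ℝ) • w3 + (-(1/2) : ℝ) • w4 + (1/2 : ℝ) • w7 + (1/2 : ℝ) • w8 + (-(1/2) : ℝ) • uu := by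
  funext e'
  obtain ⟨e, he⟩ := e'
  induction e using Sym2.ind with
  | _ u v =>
    fin_cases u <;> fin_cases v <;> (try simp at he) <;>
      · simp [sgl, E12, w0, w1, w2, w3, w4, w5, w6, w7, w8, uu, cutVec_apply, Sym2.eq_iff]
        all_goals norm_num

lemma sing13 : sgl E13 = (-(1/2) : ℝ) • w0 + (1/2 : ℝ) • w3 + (-(1/2) : ℝ) • w8 + (1/2 : ℝ) • uu := by
  funext e'
  obtain ⟨e, he⟩ := e'
  induction e using Sym2.ind with
  | _ u v =>
    fin_cases u <;> fin_cases v <;> (try simp at he) <;>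
      · simp [sgl, E13, w0, w1, w2, w3, w4, w5, w6, w7, w8, uu, cutVec_apply, Sym2.eq_iff]
        all_goals norm_num

lemma sing14 : sgl E14 = (-(1/2) : ℝ) • w0 + (1/2 : ℝ) • w4 + (-(1/2) : ℝ) • w7 + (1/2 : ℝ) • uu := by
  funext e'
  obtain ⟨e, he⟩ := e'
  induction e using Sym2.ind with
  | _ u v =>
    fin_cases u <;> fin_cases v <;> (try simp at he) <;>
      · simp [sgl, E14, w0, w1, w2, w3, w4, w5, w6, w7, w8, uu, cutVec_apply, Sym2.eq_iff]
        all_goals norm_num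

lemma sing23 : sgl E23 = (-(1/2) : ℝ) • w0 + (-(1/2) : ℝ) • w1 + (1/2 : ℝ) • w2 + (1/2 : ℝ) • w3 + (1/2 : ℝ) • w5 + (-(1/2) : ℝ) • w7 + (-(1/2) : ℝ) • w8 + (1/2 : ℝ) • uu := by
  funext e'
  obtain ⟨e, he⟩ := e'
  induction e using Sym2.ind with
  | _ u v =>
    fin_cases u <;> fin_cases v <;> (try simp at he) <;>
      · simp [sgl, E23, w0, w1, w2, w3, w4, w5, w6, w7, w8, uu, cutVec_apply, Sym2.eq_iff]
        all_goals norm_num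

lemma sing24 : sgl E24 = (-(1/2) : ℝ) • w0 + (-(1/2) : ℝ) • w1 + (1/2 : ℝ) • w2 + (1/2 : ℝ) • w4 + (1/2 : ℝ) • w6 + (-(1/2) : ℝ) • w7 + (-(1/2) : ℝ) • w8 + (1/2 : ℝ) • uu := by
  funext e'
  obtain ⟨e, he⟩ := e'
  induction e using Sym2.ind with
  | _ u v =>
    fin_cases u <;> fin_cases v <;> (try simp at he) <;>
      · simp [sgl, E24, w0, w1, w2, w3, w4, w5, w6, w7, w8, uu, cutVec_apply, Sym2.eq_iff]
        all_goals norm_num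

lemma sing34 : sgl E34 = (-(1/2) : ℝ) • w2 + (1/2 : ℝ) • w7 + (1/2 : ℝ) • w8 + (-(1/2) : ℝ) • uu := by
  funext e'
  obtain ⟨e, he⟩ := e'
  induction e using Sym2.ind with
  | _ u v =>
    fin_cases u <;> fin_cases v <;> (try simp at he) <;>
      · simp [sgl, E34, w0, w1, w2, w3, w4, w5, w6, w7, w8, uu, cutVec_apply, Sym2.eq_iff]
        all_goals norm_num

lemma relvv : vv = (3:ℝ) • uu + ((-2:ℝ) • w0 + (-2:ℝ) • w1 + w2 + w3 + w4 + w5 + w6 + (-2:ℝ) • w7 + (-2:ℝ) • w8) := by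
  funext e'
  obtain ⟨e, he⟩ := e'
  induction e using Sym2.ind with
  | _ u v =>
    fin_cases u <;> fin_cases v <;> (try simp at he) <;>
      · simp [vv, w0, w1, w2, w3, w4, w5, w6, w7, w8, uu, cutVec_apply]
        all_goals norm_num

lemma edge_cases (e : Ee) : e = E01 ∨ e = E02 ∨ e = E03 ∨ e = E04 ∨ e = E12 ∨ e = E13 ∨ e = E14 ∨ e = E23 ∨ e = E24 ∨ e = E34 := by
  obtain ⟨e, he⟩ := e
  induction e using Sym2.ind with
  | _ u v =>
    fin_cases u <;> fin_cases v <;> (try simp at he) <;>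
      · simp [E01, E02, E03, E04, E12, E13, E14, E23, E24, E34, Subtype.ext_iff, Sym2.eq_iff]

lemma psi_zero (ψ : (Ee → ℝ) →ₗ[ℝ] ℝ) (h0 : ψ w0 = 0) (h1 : ψ w1 = 0) (h2 : ψ w2 = 0)
    (h3 : ψ w3 = 0) (h4 : ψ w4 = 0) (h5 : ψ w5 = 0) (h6 : ψ w6 = 0) (h7 : ψ w7 = 0)
    (h8 : ψ w8 = 0) (hu : ψ uu = 0) : ψ = 0 := by
  have hsgl : ∀ e : Ee, ψ (sgl e) = 0 := by
    intro e
    rcases edge_cases e with rfl|rfl|rfl|rfl|rfl|rfl|rfl|rfl|rfl|rfl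
    · rw [sing01]; simp [map_add, map_smul, h0, h1, h2, h3, h4, h5, h6, h7, h8, hu]
    · rw [sing02]; simp [map_add, map_smul, h0, h1, h2, h3, h4, h5, h6, h7, h8, hu]
    · rw [sing03]; simp [map_add, map_smul, h0, h1, h2, h3, h4, h5, h6, h7, h8, hu]
    · rw [sing04]; simp [map_add, map_smul, h0, h1, h2, h3, h4, h5, h6, h7, h8, hu]
    · rw [sing12]; simp [map_add, map_smul, h0, h1, h2, h3, h4, h5, h6, h7, h8, hu]
    · rw [sing13]; simp [map_add, map_smul, h0, h1, h2, h3, h4, h5, h6, h7, h8, hu]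
    · rw [sing14]; simp [map_add, map_smul, h0, h1, h2, h3, h4, h5, h6, h7, h8, hu]
    · rw [sing23]; simp [map_add, map_smul, h0, h1, h2, h3, h4, h5, h6, h7, h8, hu]
    · rw [sing24]; simp [map_add, map_smul, h0, h1, h2, h3, h4, h5, h6, h7, h8, hu]
    · rw [sing34]; simp [map_add, map_smul, h0, h1, h2, h3, h4, h5, h6, h7, h8, hu]
  refine LinearMap.ext fun x => ?_
  have hx : x = ∑ e : Ee, x e • sgl e := pi_eq_sum_univ x
  rw [LinearMap.zero_apply]
  conv_lhs => rw [hx]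
  rw [map_sum]
  refine Finset.sum_eq_zero fun e _ => ?_
  rw [map_smul, hsgl]
  simp

end CutK5
namespace CutK5

noncomputable def psi {N : ℕ} (π : ((Ee → ℝ)) →ᵃ[ℝ] (Fin N → ℝ)) (i : Fin N) :
    (Ee → ℝ) →ₗ[ℝ] ℝ := (LinearMap.proj i).comp π.linear

lemma pidecomp' {N : ℕ} (π : ((Ee → ℝ)) →ᵃ[ℝ] (Fin N → ℝ)) (x : Ee → ℝ) :
    π x = π.linear x + π 0 := by
  have h := congrFun (AffineMap.decomp π) x
  simp only [Pi.add_apply] at h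
  exact h

lemma pidecomp {N : ℕ} (π : ((Ee → ℝ)) →ᵃ[ℝ] (Fin N → ℝ)) (x : Ee → ℝ) (i : Fin N) :
    π x i = psi π i x + π 0 i := by
  have h := congrFun (congrFun (AffineMap.decomp π) x) i
  simp only [Pi.add_apply] at h
  exact h

noncomputable def qq : Ee → ℝ := (1/10 : ℝ) • (w0 + w1 + w2 + w3 + w4 + w5 + w6 + w7 + w8 + w9)

lemma psi_qq (ψ : (Ee → ℝ) →ₗ[ℝ] ℝ) :
    ψ qq = (1/10) * (ψ w0 + ψ w1 + ψ w2 + ψ w3 + ψ w4 + ψ w5 + ψ w6 + ψ w7 + ψ w8 + ψ w9) := by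
  simp only [qq, map_smul, map_add, smul_eq_mul]
  try ring

lemma ff_qq : ff qq = 0 := by
  rw [psi_qq, ff_w0, ff_w1, ff_w2, ff_w3, ff_w4, ff_w5, ff_w6, ff_w7, ff_w8, ff_w9]
  try norm_num

lemma qq_memP : qq ∈ convexHull ℝ (Set.range (cutVec Kg)) := by
  have hmemP : ∀ S : Set (Fin 5), cc S ∈ convexHull ℝ (Set.range (cutVec Kg)) :=
    fun S => subset_convexHull ℝ _ ⟨S, rfl⟩
  have h10 : qq = ∑ k : Fin 10, (1/10 : ℝ) • (![w0, w1, w2, w3, w4, w5, w6, w7, w8, w9] k) := by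
    rw [qq]
    simp [Fin.sum_univ_succ]
    module
  rw [h10]
  refine (convex_convexHull ℝ _).sum_mem (fun k _ => by norm_num) (by simp) ?_
  intro k _
  fin_cases k
  · exact hmemP {0}
  · exact hmemP {1}
  · exact hmemP {2}
  · exact hmemP {0,3}
  · exact hmemP {0,4}
  · exact hmemP {1,3}
  · exact hmemP {1,4}
  · exact hmemP {2,3}
  · exact hmemP {2,4}
  · exact hmemP (∅ : Set (Fin 5))

lemma span_sgl (e : Ee) : sgl e ∈ Submodule.span ℝ (Set.range (cutVec Kg)) := by
  have hmem : ∀ S : Set (Fin 5), cc S ∈ Submodule.span ℝ (Set.range (cutVec Kg)) :=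
    fun S => Submodule.subset_span ⟨S, rfl⟩
  rcases edge_cases e with rfl|rfl|rfl|rfl|rfl|rfl|rfl|rfl|rfl|rfl <;>
    first
      | (rw [sing01]; repeat first | apply Submodule.add_mem | apply Submodule.smul_mem | exact hmem _)
      | (rw [sing02]; repeat first | apply Submodule.add_mem | apply Submodule.smul_mem | exact hmem _)
      | (rw [sing03]; repeat first | apply Submodule.add_mem | apply Submodule.smul_mem | exact hmem _)
      | (rw [sing04]; repeat first | apply Submodule.add_mem | apply Submodule.smul_mem | exact hmem _)
      | (rw [sing12]; repeat first | apply Submodule.add_mem | apply Submodule.smul_mem | exact hmem _)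
      | (rw [sing13]; repeat first | apply Submodule.add_mem | apply Submodule.smul_mem | exact hmem _)
      | (rw [sing14]; repeat first | apply Submodule.add_mem | apply Submodule.smul_mem | exact hmem _)
      | (rw [sing23]; repeat first | apply Submodule.add_mem | apply Submodule.smul_mem | exact hmem _)
      | (rw [sing24]; repeat first | apply Submodule.add_mem | apply Submodule.smul_mem | exact hmem _)
      | (rw [sing34]; repeat first | apply Submodule.add_mem | apply Submodule.smul_mem | exact hmem _)

lemma spanA_top : Submodule.span ℝ (Set.range (cutVec Kg)) = ⊤ := by
  rw [eq_top_iff]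
  intro x _
  have hx : x = ∑ e : Ee, x e • sgl e := pi_eq_sum_univ x
  rw [hx]
  exact Submodule.sum_mem _ fun e _ => Submodule.smul_mem _ _ (span_sgl e)

lemma zero_memA : (0 : Ee → ℝ) ∈ Set.range (cutVec Kg) := ⟨∅, w9_zero⟩

lemma affineSpanA_top : affineSpan ℝ (Set.range (cutVec Kg)) = ⊤ := by
  rw [AffineSubspace.affineSpan_eq_top_iff_vectorSpan_eq_top_of_nonempty ℝ _ _ ⟨0, zero_memA⟩]
  rw [vectorSpan_eq_span_vsub_set_right ℝ zero_memA]
  have himg : (· -ᵥ (0 : Ee → ℝ)) '' (Set.range (cutVec Kg)) = Set.range (cutVec Kg) := by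
    simp [vsub_eq_sub]
  rw [himg, spanA_top]

end CutK5

set_option maxHeartbeats 2000000

open CutK5 in
/-- Lemma 3.5: the cut polytope of the complete graph `K₅` on `5` vertices is not
compressed. -/
theorem cutPolytope_K5_not_compressed :
    ¬ IsCompressed (Set.range (cutVec (⊤ : SimpleGraph (Fin 5)))) := by
  rintro ⟨N, π, hinj, H01, Him⟩
  have hmemA : ∀ S : Set (Fin 5), cc S ∈ Set.range (cutVec (⊤ : SimpleGraph (Fin 5))) :=
    fun S => ⟨S, rfl⟩
  have hmemP : ∀ S : Set (Fin 5),
      cc S ∈ convexHull ℝ (Set.range (cutVec (⊤ : SimpleGraph (Fin 5)))) :=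
    fun S => subset_convexHull ℝ _ (hmemA S)
  have zo : ∀ S : Set (Fin 5), ∀ i, π (cc S) i = 0 ∨ π (cc S) i = 1 :=
    fun S i => H01 (cc S) ⟨hmemP S, AddSubgroup.subset_closure (hmemA S)⟩ i
  have hqP : qq ∈ convexHull ℝ (Set.range (cutVec (⊤ : SimpleGraph (Fin 5)))) := qq_memP
  have hcube0 : ∀ i, π qq i ∈ Set.Icc (0:ℝ) 1 := by
    have h : π qq ∈ π '' convexHull ℝ (Set.range (cutVec (⊤ : SimpleGraph (Fin 5)))) :=
      ⟨qq, hqP, rfl⟩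
    rw [Him] at h
    exact h.1
  by_cases hcase : ∃ i, (π qq i = 0 ∨ π qq i = 1) ∧
      ∃ x, x ∈ convexHull ℝ (Set.range (cutVec (⊤ : SimpleGraph (Fin 5)))) ∧ π x i ≠ π qq i
  · -- Case A
    obtain ⟨i, hpi, x, hxP, hxne⟩ := hcase
    have d0 := pidecomp π w0 i
    have d1 := pidecomp π w1 i
    have d2 := pidecomp π w2 i
    have d3 := pidecomp π w3 i
    have d4 := pidecomp π w4 i
    have d5 := pidecomp π w5 i
    have d6 := pidecomp π w6 i
    have d7 := pidecomp π w7 i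
    have d8 := pidecomp π w8 i
    have d9 := pidecomp π w9 i
    have du := pidecomp π uu i
    have dv := pidecomp π vv i
    have dq := pidecomp π qq i
    have hqpsi := psi_qq (psi π i)
    have r0 : π w0 i = 0 ∨ π w0 i = 1 := zo {0} i
    have r1 : π w1 i = 0 ∨ π w1 i = 1 := zo {1} i
    have r2 : π w2 i = 0 ∨ π w2 i = 1 := zo {2} i
    have r3 : π w3 i = 0 ∨ π w3 i = 1 := zo {0,3} i
    have r4 : π w4 i = 0 ∨ π w4 i = 1 := zo {0,4} i
    have r5 : π w5 i = 0 ∨ π w5 i = 1 := zo {1,3} i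
    have r6 : π w6 i = 0 ∨ π w6 i = 1 := zo {1,4} i
    have r7 : π w7 i = 0 ∨ π w7 i = 1 := zo {2,3} i
    have r8 : π w8 i = 0 ∨ π w8 i = 1 := zo {2,4} i
    have r9 : π w9 i = 0 ∨ π w9 i = 1 := zo (∅ : Set (Fin 5)) i
    have b0 : 0 ≤ π w0 i ∧ π w0 i ≤ 1 := by rcases r0 with h|h <;> rw [h] <;> norm_num
    have b1 : 0 ≤ π w1 i ∧ π w1 i ≤ 1 := by rcases r1 with h|h <;> rw [h] <;> norm_num
    have b2 : 0 ≤ π w2 i ∧ π w2 i ≤ 1 := by rcases r2 with h|h <;> rw [h] <;> norm_num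
    have b3 : 0 ≤ π w3 i ∧ π w3 i ≤ 1 := by rcases r3 with h|h <;> rw [h] <;> norm_num
    have b4 : 0 ≤ π w4 i ∧ π w4 i ≤ 1 := by rcases r4 with h|h <;> rw [h] <;> norm_num
    have b5 : 0 ≤ π w5 i ∧ π w5 i ≤ 1 := by rcases r5 with h|h <;> rw [h] <;> norm_num
    have b6 : 0 ≤ π w6 i ∧ π w6 i ≤ 1 := by rcases r6 with h|h <;> rw [h] <;> norm_num
    have b7 : 0 ≤ π w7 i ∧ π w7 i ≤ 1 := by rcases r7 with h|h <;> rw [h] <;> norm_num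
    have b8 : 0 ≤ π w8 i ∧ π w8 i ≤ 1 := by rcases r8 with h|h <;> rw [h] <;> norm_num
    have b9 : 0 ≤ π w9 i ∧ π w9 i ≤ 1 := by rcases r9 with h|h <;> rw [h] <;> norm_num
    have hsum : π w0 i + π w1 i + π w2 i + π w3 i + π w4 i + π w5 i + π w6 i + π w7 i + π w8 i + π w9 i = 10 * π qq i := by
      rw [d0, d1, d2, d3, d4, d5, d6, d7, d8, d9, dq, hqpsi]
      ring
    have e0 : π w0 i = π qq i := by
      rcases hpi with h|h <;> rw [h] at hsum ⊢ <;> linarith [b0.1, b0.2, b1.1, b1.2, b2.1, b2.2, b3.1, b3.2, b4.1, b4.2, b5.1, b5.2, b6.1, b6.2, b7.1, b7.2, b8.1, b8.2, b9.1, b9.2]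
    have e1 : π w1 i = π qq i := by
      rcases hpi with h|h <;> rw [h] at hsum ⊢ <;> linarith [b0.1, b0.2, b1.1, b1.2, b2.1, b2.2, b3.1, b3.2, b4.1, b4.2, b5.1, b5.2, b6.1, b6.2, b7.1, b7.2, b8.1, b8.2, b9.1, b9.2]
    have e2 : π w2 i = π qq i := by
      rcases hpi with h|h <;> rw [h] at hsum ⊢ <;> linarith [b0.1, b0.2, b1.1, b1.2, b2.1, b2.2, b3.1, b3.2, b4.1, b4.2, b5.1, b5.2, b6.1, b6.2, b7.1, b7.2, b8.1, b8.2, b9.1, b9.2]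
    have e3 : π w3 i = π qq i := by
      rcases hpi with h|h <;> rw [h] at hsum ⊢ <;> linarith [b0.1, b0.2, b1.1, b1.2, b2.1, b2.2, b3.1, b3.2, b4.1, b4.2, b5.1, b5.2, b6.1, b6.2, b7.1, b7.2, b8.1, b8.2, b9.1, b9.2]
    have e4 : π w4 i = π qq i := by
      rcases hpi with h|h <;> rw [h] at hsum ⊢ <;> linarith [b0.1, b0.2, b1.1, b1.2, b2.1, b2.2, b3.1, b3.2, b4.1, b4.2, b5.1, b5.2, b6.1, b6.2, b7.1, b7.2, b8.1, b8.2, b9.1, b9.2]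
    have e5 : π w5 i = π qq i := by
      rcases hpi with h|h <;> rw [h] at hsum ⊢ <;> linarith [b0.1, b0.2, b1.1, b1.2, b2.1, b2.2, b3.1, b3.2, b4.1, b4.2, b5.1, b5.2, b6.1, b6.2, b7.1, b7.2, b8.1, b8.2, b9.1, b9.2]
    have e6 : π w6 i = π qq i := by
      rcases hpi with h|h <;> rw [h] at hsum ⊢ <;> linarith [b0.1, b0.2, b1.1, b1.2, b2.1, b2.2, b3.1, b3.2, b4.1, b4.2, b5.1, b5.2, b6.1, b6.2, b7.1, b7.2, b8.1, b8.2, b9.1, b9.2]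
    have e7 : π w7 i = π qq i := by
      rcases hpi with h|h <;> rw [h] at hsum ⊢ <;> linarith [b0.1, b0.2, b1.1, b1.2, b2.1, b2.2, b3.1, b3.2, b4.1, b4.2, b5.1, b5.2, b6.1, b6.2, b7.1, b7.2, b8.1, b8.2, b9.1, b9.2]
    have e8 : π w8 i = π qq i := by
      rcases hpi with h|h <;> rw [h] at hsum ⊢ <;> linarith [b0.1, b0.2, b1.1, b1.2, b2.1, b2.2, b3.1, b3.2, b4.1, b4.2, b5.1, b5.2, b6.1, b6.2, b7.1, b7.2, b8.1, b8.2, b9.1, b9.2]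
    have e9 : π w9 i = π qq i := by
      rcases hpi with h|h <;> rw [h] at hsum ⊢ <;> linarith [b0.1, b0.2, b1.1, b1.2, b2.1, b2.2, b3.1, b3.2, b4.1, b4.2, b5.1, b5.2, b6.1, b6.2, b7.1, b7.2, b8.1, b8.2, b9.1, b9.2]
    have hc : π (0 : Ee → ℝ) i = π qq i := by rw [← w9_zero]; exact e9
    have s0 : psi π i w0 = 0 := by linarith [d0, e0, hc]
    have s1 : psi π i w1 = 0 := by linarith [d1, e1, hc]
    have s2 : psi π i w2 = 0 := by linarith [d2, e2, hc]
    have s3 : psi π i w3 = 0 := by linarith [d3, e3, hc]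
    have s4 : psi π i w4 = 0 := by linarith [d4, e4, hc]
    have s5 : psi π i w5 = 0 := by linarith [d5, e5, hc]
    have s6 : psi π i w6 = 0 := by linarith [d6, e6, hc]
    have s7 : psi π i w7 = 0 := by linarith [d7, e7, hc]
    have s8 : psi π i w8 = 0 := by linarith [d8, e8, hc]
    have ru : π uu i = 0 ∨ π uu i = 1 := zo {0,1} i
    have rv : π vv i = 0 ∨ π vv i = 1 := zo {0,1,2} i
    have hv3 : psi π i vv = 3 * psi π i uu := by
      rw [relvv]
      simp only [map_add, map_smul, smul_eq_mul, s0, s1, s2, s3, s4, s5, s6, s7, s8]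
      ring
    have hbu : psi π i uu = 0 := by
      rcases hpi with h|h <;> rcases ru with h1|h1 <;> rcases rv with h2|h2 <;>
        linarith [du, dv, hv3, hc]
    have hz : psi π i = 0 := psi_zero _ s0 s1 s2 s3 s4 s5 s6 s7 s8 hbu
    apply hxne
    rw [pidecomp π x i, pidecomp π qq i, hz]
    simp
  · -- Case B
    push_neg at hcase
    have hPaff : affineSpan ℝ (convexHull ℝ (Set.range (cutVec (⊤ : SimpleGraph (Fin 5))))) = ⊤ := by
      rw [affineSpan_convexHull]
      exact affineSpanA_top
    have hint : (interior (convexHull ℝ (Set.range (cutVec (⊤ : SimpleGraph (Fin 5)))))).Nonempty :=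
      ((convex_convexHull ℝ _).interior_nonempty_iff_affineSpan_eq_top).mpr hPaff
    obtain ⟨x₀, hx₀⟩ := hint
    have hginj : Function.Injective π := by
      intro a b hab
      by_contra hne
      have hld : π.linear (a - b) = 0 := by
        have ha := pidecomp' π a
        have hb := pidecomp' π b
        rw [ha, hb] at hab
        have h3 : π.linear a = π.linear b := by
          have := add_right_cancel hab
          exact this
        rw [map_sub, h3, sub_self]
      obtain ⟨δ, hδpos, hball⟩ := Metric.isOpen_iff.mp isOpen_interior x₀ hx₀
      have hdne : a - b ≠ 0 := sub_ne_zero.mpr hne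
      have hεpos : 0 < δ / (2 * (‖a - b‖ + 1)) := by positivity
      have hmem : x₀ + (δ / (2 * (‖a - b‖ + 1))) • (a - b) ∈
          convexHull ℝ (Set.range (cutVec (⊤ : SimpleGraph (Fin 5)))) := by
        refine interior_subset (hball ?_)
        rw [Metric.mem_ball, dist_eq_norm]
        have h4 : x₀ + (δ / (2 * (‖a - b‖ + 1))) • (a - b) - x₀ = (δ / (2 * (‖a - b‖ + 1))) • (a - b) := by abel
        rw [h4, norm_smul, Real.norm_eq_abs, abs_of_pos hεpos]
        rw [div_mul_eq_mul_div, div_lt_iff₀ (by positivity)]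
        nlinarith [norm_nonneg (a - b), hδpos]
      have heq : π (x₀ + (δ / (2 * (‖a - b‖ + 1))) • (a - b)) = π x₀ := by
        rw [pidecomp' π, pidecomp' π x₀, map_add, map_smul, hld, smul_zero, add_zero]
      have h5 := hinj hmem (interior_subset hx₀) heq
      have h0 : (δ / (2 * (‖a - b‖ + 1))) • (a - b) = 0 := by
        have h6 := congrArg (fun z => z - x₀) h5
        simpa using h6
      rcases smul_eq_zero.mp h0 with h|h
      · exact absurd h (ne_of_gt hεpos)
      · exact hdne h
    have hconstci : ∀ i, (π qq i = 0 ∨ π qq i = 1) → ∀ x, π x i = π qq i := by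
      intro i hi
      have hall := hcase i hi
      have h9 : π (0 : Ee → ℝ) i = π qq i := by
        rw [← w9_zero]
        exact hall w9 (hmemP (∅ : Set (Fin 5)))
      have s0 : psi π i w0 = 0 := by
        have hd := pidecomp π w0 i
        have h' := hall w0 (hmemP {0})
        linarith
      have s1 : psi π i w1 = 0 := by
        have hd := pidecomp π w1 i
        have h' := hall w1 (hmemP {1})
        linarith
      have s2 : psi π i w2 = 0 := by
        have hd := pidecomp π w2 i
        have h' := hall w2 (hmemP {2})
        linarith
      have s3 : psi π i w3 = 0 := by
        have hd := pidecomp π w3 i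
        have h' := hall w3 (hmemP {0,3})
        linarith
      have s4 : psi π i w4 = 0 := by
        have hd := pidecomp π w4 i
        have h' := hall w4 (hmemP {0,4})
        linarith
      have s5 : psi π i w5 = 0 := by
        have hd := pidecomp π w5 i
        have h' := hall w5 (hmemP {1,3})
        linarith
      have s6 : psi π i w6 = 0 := by
        have hd := pidecomp π w6 i
        have h' := hall w6 (hmemP {1,4})
        linarith
      have s7 : psi π i w7 = 0 := by
        have hd := pidecomp π w7 i
        have h' := hall w7 (hmemP {2,3})
        linarith
      have s8 : psi π i w8 = 0 := by
        have hd := pidecomp π w8 i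
        have h' := hall w8 (hmemP {2,4})
        linarith
      have su : psi π i uu = 0 := by
        have hd := pidecomp π uu i
        have h' := hall uu (hmemP {0,1})
        linarith
      have hz : psi π i = 0 := psi_zero _ s0 s1 s2 s3 s4 s5 s6 s7 s8 su
      intro x
      rw [pidecomp π x i, pidecomp π qq i, hz]
      simp
    have hfP : ∀ z ∈ convexHull ℝ (Set.range (cutVec (⊤ : SimpleGraph (Fin 5)))), 0 ≤ ff z := by
      intro z hz
      have hsub : convexHull ℝ (Set.range (cutVec (⊤ : SimpleGraph (Fin 5)))) ⊆
          {x : Ee → ℝ | 0 ≤ ff x} := by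
        refine convexHull_min ?_ (convex_halfSpace_ge ⟨ff.map_add, ff.map_smul⟩ 0)
        rintro _ ⟨S, rfl⟩
        exact ff_nonneg S
      exact hsub hz
    have hval : ∀ (t : ℝ) (i : Fin N), π (qq + (-t) • uu) i = π qq i - t * psi π i uu := by
      intro t i
      rw [pidecomp π (qq + (-t) • uu) i, pidecomp π qq i, map_add, map_smul]
      simp only [smul_eq_mul]
      ring
    have hcube : ∀ᶠ t in nhds (0:ℝ), ∀ i, π (qq + (-t) • uu) i ∈ Set.Icc (0:ℝ) 1 := by
      rw [Filter.eventually_all]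
      intro i
      by_cases hi : π qq i = 0 ∨ π qq i = 1
      · have hcst := hconstci i hi
        refine Filter.Eventually.of_forall fun t => ?_
        rw [hcst (qq + (-t) • uu)]
        rcases hi with h|h <;> rw [h] <;> norm_num
      · have hIcc : π qq i ∈ Set.Icc (0:ℝ) 1 := hcube0 i
        push_neg at hi
        have hIoo : π qq i ∈ Set.Ioo (0:ℝ) 1 :=
          ⟨lt_of_le_of_ne hIcc.1 (Ne.symm hi.1), lt_of_le_of_ne hIcc.2 hi.2⟩
        have hcont : Continuous fun t : ℝ => π qq i - t * psi π i uu := by fun_prop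
        have h0 : π qq i - (0:ℝ) * psi π i uu ∈ Set.Ioo (0:ℝ) 1 := by simpa using hIoo
        have hev := (hcont.continuousAt (x := 0)).eventually_mem (isOpen_Ioo.mem_nhds h0)
        filter_upwards [hev] with t ht
        rw [hval t i]
        exact Set.mem_Icc_of_Ioo ht
    have hpos : ∃ t : ℝ, (∀ i, π (qq + (-t) • uu) i ∈ Set.Icc (0:ℝ) 1) ∧ 0 < t := by
      have h1 := hcube.filter_mono (nhdsWithin_le_nhds (s := Set.Ioi (0:ℝ)))
      have h2 : ∀ᶠ t in nhdsWithin (0:ℝ) (Set.Ioi (0:ℝ)), t ∈ Set.Ioi (0:ℝ) :=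
        self_mem_nhdsWithin
      exact ((h1.and h2).exists).imp fun t ht => ⟨ht.1, ht.2⟩
    obtain ⟨t, htc, htpos⟩ := hpos
    have hyP : π (qq + (-t) • uu) ∈
        π '' convexHull ℝ (Set.range (cutVec (⊤ : SimpleGraph (Fin 5)))) := by
      rw [Him]
      refine ⟨htc, ?_⟩
      have hx : (qq + (-t) • uu) ∈
          affineSpan ℝ (convexHull ℝ (Set.range (cutVec (⊤ : SimpleGraph (Fin 5))))) := by
        rw [hPaff]
        exact AffineSubspace.mem_top ℝ _ _
      have hmap : π (qq + (-t) • uu) ∈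
          (affineSpan ℝ (convexHull ℝ (Set.range (cutVec (⊤ : SimpleGraph (Fin 5)))))).map π :=
        AffineSubspace.mem_map.mpr ⟨_, hx, rfl⟩
      rwa [AffineSubspace.map_span] at hmap
    obtain ⟨z, hzP, hz⟩ := hyP
    have hzeq : z = qq + (-t) • uu := hginj hz
    have h1 : 0 ≤ ff z := hfP z hzP
    rw [hzeq] at h1
    have h2 : ff (qq + (-t) • uu) = -2 * t := by
      rw [map_add, map_smul, ff_qq, ff_uu]
      simp only [smul_eq_mul]
      ring
    rw [h2] at h1
    linarith
end
end

section
/- Let 𝓕 be a finite family of subsets of [n] = {1,…,n}, let d : [n] → ℕ with d_i ≥ 1 for all i, and let W ⊆ [n]. If the marginal polytope P_{𝓕,d} is compressed, then the marginal polytope P_{𝓕|W, d|W} is compressed, where 𝓕|W = {F ∩ W : F ∈ 𝓕} and d|W is the restriction of d to W. (Part (1) of Proposition 5.3 of the paper: passing to an induced subcomplex preserves compressedness of the marginal polytope.) -/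
noncomputable section

/-- The coordinate index set of the marginal problem: pairs `(F, y)` with `F ∈ 𝓕` and
`y ∈ ∏_{i ∈ F} {0,…,d_i − 1}`. -/
def MargIndex {ι : Type*} (𝓕 : Finset (Finset ι)) (d : ι → ℕ) : Type _ :=
  (F : {F // F ∈ 𝓕}) × ((i : {a // a ∈ F.1}) → Fin (d i.1))

open Classical in
/-- The `0/1` marginal vector `A_x` of a cell `x ∈ ∏_i {0,…,d_i − 1}`: its coordinate at
`(F, y)` is `1` if `x_i = y_i` for all `i ∈ F`, and `0` otherwise.  The marginal polytope
`P_{𝓕,d}` is the convex hull of the vectors `A_x` over all cells `x`. -/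
noncomputable def margVec {ι : Type*} (𝓕 : Finset (Finset ι)) (d : ι → ℕ)
    (x : ∀ i, Fin (d i)) : MargIndex 𝓕 d → ℝ :=
  fun p => if ∀ i : {a // a ∈ p.1.1}, x i.1 = p.2 i then 1 else 0

lemma injOn_span_of_injOn_hull {V W : Type*} [AddCommGroup V] [Module ℝ V]
    [AddCommGroup W] [Module ℝ W]
    (f : V →ᵃ[ℝ] W) (A : Set V) (hA : A.Nonempty)
    (hf : Set.InjOn f (convexHull ℝ A)) :
    Set.InjOn f (affineSpan ℝ A : Set V) := by
  have hQ : ∀ v ∈ vectorSpan ℝ A, ∃ ε > (0:ℝ), ∀ t : ℝ, |t| ≤ ε →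
      ∃ p ∈ convexHull ℝ A, p + t • v ∈ convexHull ℝ A := by
    intro v hv
    rw [vectorSpan_def] at hv
    induction hv using Submodule.span_induction with
    | mem x hx =>
      obtain ⟨a, ha, b, hb, rfl⟩ := hx
      refine ⟨1/2, by norm_num, fun t ht => ?_⟩
      have ha' := subset_convexHull ℝ A ha
      have hb' := subset_convexHull ℝ A hb
      have habs := abs_le.mp ht
      refine ⟨(1/2 : ℝ) • a + (1/2 : ℝ) • b, ?_, ?_⟩
      · exact (convex_convexHull ℝ A) ha' hb' (by norm_num) (by norm_num) (by norm_num)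
      · have : (1/2 : ℝ) • a + (1/2 : ℝ) • b + t • (a -ᵥ b)
            = (1/2 + t) • a + (1/2 - t) • b := by
          simp only [vsub_eq_sub]
          module
        rw [this]
        exact (convex_convexHull ℝ A) ha' hb' (by linarith [habs.1]) (by linarith [habs.2])
          (by ring)
    | zero =>
      obtain ⟨a, ha⟩ := hA
      exact ⟨1, by norm_num, fun t _ => ⟨a, subset_convexHull ℝ A ha, by simpa using subset_convexHull ℝ A ha⟩⟩
    | add x y hx hy ihx ihy =>
      obtain ⟨ε1, hε1, H1⟩ := ihx
      obtain ⟨ε2, hε2, H2⟩ := ihy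
      refine ⟨min ε1 ε2 / 2, by positivity, fun t ht => ?_⟩
      have h2t1 : |2 * t| ≤ ε1 := by
        rw [abs_mul]
        have := min_le_left ε1 ε2
        simp only [abs_two]
        nlinarith [abs_nonneg t]
      have h2t2 : |2 * t| ≤ ε2 := by
        rw [abs_mul]
        have := min_le_right ε1 ε2
        simp only [abs_two]
        nlinarith [abs_nonneg t]
      obtain ⟨p1, hp1, hq1⟩ := H1 (2*t) h2t1
      obtain ⟨p2, hp2, hq2⟩ := H2 (2*t) h2t2
      refine ⟨(1/2 : ℝ) • p1 + (1/2 : ℝ) • p2,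
        (convex_convexHull ℝ A) hp1 hp2 (by norm_num) (by norm_num) (by norm_num), ?_⟩
      have : (1/2 : ℝ) • p1 + (1/2 : ℝ) • p2 + t • (x + y)
          = (1/2 : ℝ) • (p1 + (2*t) • x) + (1/2 : ℝ) • (p2 + (2*t) • y) := by module
      rw [this]
      exact (convex_convexHull ℝ A) hq1 hq2 (by norm_num) (by norm_num) (by norm_num)
    | smul c x hx ih =>
      obtain ⟨ε, hε, H⟩ := ih
      refine ⟨ε / (|c| + 1), by positivity, fun t ht => ?_⟩
      have habs : |t * c| ≤ ε := by
        rw [abs_mul]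
        have h1 : |t| * |c| ≤ (ε / (|c| + 1)) * (|c| + 1) := by
          have := abs_nonneg c
          have := abs_nonneg t
          nlinarith
        rw [div_mul_cancel₀] at h1
        · linarith [abs_nonneg t, mul_le_mul_of_nonneg_right ht (abs_nonneg c)]
        · positivity
      obtain ⟨p, hp, hq⟩ := H (t * c) habs
      refine ⟨p, hp, ?_⟩
      have : p + t • c • x = p + (t * c) • x := by rw [smul_smul]
      rw [this]; exact hq
  have hker : ∀ v ∈ vectorSpan ℝ A, f.linear v = 0 → v = 0 := by
    intro v hv hlin
    obtain ⟨ε, hε, H⟩ := hQ v hv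
    obtain ⟨p, hp, hq⟩ := H ε (by rw [abs_of_pos hε])
    have heq : f (p + ε • v) = f p := by
      have h1 : f (ε • v +ᵥ p) = f.linear (ε • v) +ᵥ f p := f.map_vadd p (ε • v)
      simp only [vadd_eq_add, map_smul, hlin, smul_zero, zero_add] at h1
      rw [add_comm] at h1
      exact h1
    have := hf hq hp heq
    have hεv : ε • v = 0 := by
      have := congrArg (· - p) this
      simpa using this
    rcases smul_eq_zero.mp hεv with h | h
    · exact absurd h (ne_of_gt hε)
    · exact h
  intro x hx y hy hxy
  have hvec : x -ᵥ y ∈ vectorSpan ℝ A := by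
    have := AffineSubspace.vsub_mem_direction hx hy
    rwa [direction_affineSpan] at this
  have hlin : f.linear (x -ᵥ y) = 0 := by
    rw [AffineMap.linearMap_vsub, hxy]
    exact vsub_self _
  have := hker _ hvec hlin
  rw [vsub_eq_sub, sub_eq_zero] at this
  exact this


namespace MargRestrict

variable {n : ℕ} (𝓕 : Finset (Finset (Fin n))) (d : Fin n → ℕ) (W : Finset (Fin n))

abbrev famW : Finset (Finset {a : Fin n // a ∈ W}) := 𝓕.image fun F => F.subtype (· ∈ W)

abbrev dW : {a : Fin n // a ∈ W} → ℕ := fun i => d i.1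

def projIdx (p : MargIndex 𝓕 d) : MargIndex (famW 𝓕 W) (dW d W) :=
  ⟨⟨p.1.1.subtype (· ∈ W), Finset.mem_image_of_mem _ p.1.2⟩,
    fun j => p.2 ⟨j.1.1, Finset.mem_subtype.mp j.2⟩⟩

def offW (p : MargIndex 𝓕 d) : Prop :=
  ∀ i : {a // a ∈ p.1.1}, i.1 ∉ W → (p.2 i).1 = 0

open Classical in
def Mmap : (MargIndex (famW 𝓕 W) (dW d W) → ℝ) →ₗ[ℝ] (MargIndex 𝓕 d → ℝ) where
  toFun v p := if offW 𝓕 d W p then v (projIdx 𝓕 d W p) else 0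
  map_add' u v := by funext p; by_cases h : offW 𝓕 d W p <;> simp [h]
  map_smul' c v := by funext p; by_cases h : offW 𝓕 d W p <;> simp [h]

def extendCell (hd : ∀ i, 1 ≤ d i) (w : ∀ j : {a : Fin n // a ∈ W}, Fin (d j.1))
    (i : Fin n) : Fin (d i) :=
  if h : i ∈ W then w ⟨i, h⟩ else ⟨0, hd i⟩

lemma Mmap_margVec (hd : ∀ i, 1 ≤ d i) (w : ∀ j : {a : Fin n // a ∈ W}, Fin (d j.1)) :
    Mmap 𝓕 d W (margVec (famW 𝓕 W) (dW d W) w) = margVec 𝓕 d (extendCell d W hd w) := by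
  funext p
  simp only [Mmap, LinearMap.coe_mk, AddHom.coe_mk, margVec]
  by_cases h : offW 𝓕 d W p
  · rw [if_pos h]
    have hiff : (∀ j : {b // b ∈ (projIdx 𝓕 d W p).1.1}, w j.1 = (projIdx 𝓕 d W p).2 j)
        ↔ (∀ i : {a // a ∈ p.1.1}, extendCell d W hd w i.1 = p.2 i) := by
      constructor
      · intro h1 i
        by_cases hi : i.1 ∈ W
        · have := h1 ⟨⟨i.1, hi⟩, Finset.mem_subtype.mpr i.2⟩
          simpa [extendCell, hi, projIdx] using this
        · have hz := h i hi
          apply Fin.ext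
          simp [extendCell, hi, hz]
      · intro h2 j
        show w j.1 = p.2 ⟨j.1.1, Finset.mem_subtype.mp j.2⟩
        rw [← h2 ⟨j.1.1, Finset.mem_subtype.mp j.2⟩]
        simp [extendCell, j.1.2]
    by_cases hc : ∀ i : {a // a ∈ p.1.1}, extendCell d W hd w i.1 = p.2 i
    · rw [if_pos (hiff.mpr hc), if_pos hc]
    · rw [if_neg (fun h1 => hc (hiff.mp h1)), if_neg hc]
  · rw [if_neg h]
    unfold offW at h
    obtain ⟨i, hi⟩ := not_forall.mp h
    push_neg at hi
    rw [if_neg]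
    intro hc
    apply hi.2
    rw [← hc i]
    simp [extendCell, hi.1]

instance : Fintype (MargIndex 𝓕 d) := by unfold MargIndex; infer_instance

def rmem (q : MargIndex (famW 𝓕 W) (dW d W))
    (i : {a // a ∈ (Finset.mem_image.mp q.1.2).choose}) (h : i.1 ∈ W) :
    (⟨i.1, h⟩ : {a : Fin n // a ∈ W}) ∈ q.1.1 := by
  exact (Finset.ext_iff.mp (Finset.mem_image.mp q.1.2).choose_spec.2 ⟨i.1, h⟩).mp
    (Finset.mem_subtype.mpr i.2)

open Classical in
def rmap : (MargIndex 𝓕 d → ℝ) →ₗ[ℝ] (MargIndex (famW 𝓕 W) (dW d W) → ℝ) where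
  toFun v q :=
    ∑ z : (i : {a // a ∈ (Finset.mem_image.mp q.1.2).choose}) →
        Fin (d i.1),
      if (∀ (i : {a // a ∈ (Finset.mem_image.mp q.1.2).choose}) (h : i.1 ∈ W),
          z i = q.2 ⟨⟨i.1, h⟩, rmem 𝓕 d W q i h⟩) then
        v ⟨⟨(Finset.mem_image.mp q.1.2).choose,
            (Finset.mem_image.mp q.1.2).choose_spec.1⟩, z⟩ else 0
  map_add' u v := by
    funext q
    simp only [Pi.add_apply]
    rw [← Finset.sum_add_distrib]
    congr 1; funext z
    split_ifs
    · rfl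
    · exact (add_zero 0).symm
  map_smul' c v := by
    funext q
    simp only [Pi.smul_apply, RingHom.id_apply, smul_eq_mul, Finset.mul_sum]
    congr 1; funext z
    split_ifs
    · rfl
    · exact (mul_zero c).symm

lemma rmap_margVec (x : ∀ i, Fin (d i)) :
    rmap 𝓕 d W (margVec 𝓕 d x)
      = margVec (famW 𝓕 W) (dW d W) (fun j => x j.1) := by
  classical
  funext q
  simp only [rmap, LinearMap.coe_mk, AddHom.coe_mk, margVec]
  set F := (Finset.mem_image.mp q.1.2).choose with hFdef
  have hFG : F.subtype (· ∈ W) = q.1.1 := (Finset.mem_image.mp q.1.2).choose_spec.2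
  have hmem : ∀ (i : {a // a ∈ F}) (h : i.1 ∈ W), (⟨i.1, h⟩ : {a : Fin n // a ∈ W}) ∈ q.1.1 :=
    fun i h => (Finset.ext_iff.mp hFG ⟨i.1, h⟩).mp (Finset.mem_subtype.mpr i.2)
  have hiff : (∀ (i : {a // a ∈ F}) (h : i.1 ∈ W), x i.1 = q.2 ⟨⟨i.1, h⟩, hmem i h⟩)
      ↔ (∀ j : {b // b ∈ q.1.1}, x j.1.1 = q.2 j) := by
    constructor
    · intro hc j
      have hjF : j.1.1 ∈ F :=
        Finset.mem_subtype.mp ((Finset.ext_iff.mp hFG j.1).mpr j.2)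
      exact hc ⟨j.1.1, hjF⟩ j.1.2
    · intro hc i h
      exact hc ⟨⟨i.1, h⟩, hmem i h⟩
  have hstep : ∀ z : (i : {a // a ∈ F}) → Fin (d i.1),
      (if (∀ (i : {a // a ∈ F}) (h : i.1 ∈ W), z i = q.2 ⟨⟨i.1, h⟩, hmem i h⟩) then
        (if ∀ i : {a // a ∈ F}, x i.1 = z i then (1:ℝ) else 0) else 0)
      = (if z = (fun i : {a // a ∈ F} => x i.1) then
          (if (∀ (i : {a // a ∈ F}) (h : i.1 ∈ W), x i.1 = q.2 ⟨⟨i.1, h⟩, hmem i h⟩)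
            then (1:ℝ) else 0) else 0) := by
    intro z
    by_cases hz : z = fun i : {a // a ∈ F} => x i.1
    · subst hz
      rw [if_pos rfl, if_pos (fun i : {a // a ∈ F} => rfl)]
    · rw [if_neg hz]
      by_cases hc : (∀ (i : {a // a ∈ F}) (h : i.1 ∈ W), z i = q.2 ⟨⟨i.1, h⟩, hmem i h⟩)
      · rw [if_pos hc, if_neg]
        intro hxz
        exact hz (funext fun i => (hxz i).symm)
      · rw [if_neg hc]
  have final : (∑ z : (i : {a // a ∈ F}) → Fin (d i.1),
      if z = (fun i : {a // a ∈ F} => x i.1) then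
          (if (∀ (i : {a // a ∈ F}) (h : i.1 ∈ W), x i.1 = q.2 ⟨⟨i.1, h⟩, hmem i h⟩)
            then (1:ℝ) else 0) else 0)
      = (if (∀ j : {b // b ∈ q.1.1}, x j.1.1 = q.2 j) then (1:ℝ) else 0) := by
    rw [Fintype.sum_ite_eq']
    exact if_congr hiff rfl rfl
  exact (Finset.sum_congr rfl fun z _ => hstep z).trans final


lemma projIdx_eq (F : Finset (Fin n)) (hF : F ∈ 𝓕) (G : Finset {a : Fin n // a ∈ W})
    (hG : G ∈ famW 𝓕 W) (hFG : F.subtype (· ∈ W) = G)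
    (y : (j : {b // b ∈ G}) → Fin (dW d W j.1)) (z : (i : {a // a ∈ F}) → Fin (d i.1))
    (hz : ∀ (i : {a // a ∈ F}) (h : i.1 ∈ W),
        z i = y ⟨⟨i.1, h⟩, (Finset.ext_iff.mp hFG ⟨i.1, h⟩).mp (Finset.mem_subtype.mpr i.2)⟩) :
    projIdx 𝓕 d W ⟨⟨F, hF⟩, z⟩ = ⟨⟨G, hG⟩, y⟩ := by
  subst hFG
  unfold projIdx
  refine Sigma.ext rfl (heq_of_eq (funext fun j => ?_))
  exact hz ⟨j.1.1, Finset.mem_subtype.mp j.2⟩ j.1.2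

lemma rmap_Mmap (hd : ∀ i, 1 ≤ d i) (v : MargIndex (famW 𝓕 W) (dW d W) → ℝ) :
    rmap 𝓕 d W (Mmap 𝓕 d W v) = v := by
  classical
  funext q
  simp only [rmap, Mmap, LinearMap.coe_mk, AddHom.coe_mk]
  set F := (Finset.mem_image.mp q.1.2).choose with hFdef
  have hF : F ∈ 𝓕 := (Finset.mem_image.mp q.1.2).choose_spec.1
  have hFG : F.subtype (· ∈ W) = q.1.1 := (Finset.mem_image.mp q.1.2).choose_spec.2
  set zhat : (i : {a // a ∈ F}) → Fin (d i.1) := fun i =>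
    if h : i.1 ∈ W then q.2 ⟨⟨i.1, h⟩, rmem 𝓕 d W q i h⟩ else ⟨0, hd i.1⟩ with hzdef
  have hzhat : ∀ (i : {a // a ∈ F}) (h : i.1 ∈ W),
      zhat i = q.2 ⟨⟨i.1, h⟩,
        (Finset.ext_iff.mp hFG ⟨i.1, h⟩).mp (Finset.mem_subtype.mpr i.2)⟩ := by
    intro i h
    simp only [hzdef]
    rw [dif_pos h]
  have hproj : projIdx 𝓕 d W ⟨⟨F, hF⟩, zhat⟩ = ⟨⟨q.1.1, q.1.2⟩, q.2⟩ :=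
    projIdx_eq 𝓕 d W F hF q.1.1 q.1.2 hFG q.2 zhat hzhat
  have hstep : ∀ z : (i : {a // a ∈ F}) → Fin (d i.1),
      (if (∀ (i : {a // a ∈ F}) (h : i.1 ∈ W), z i = q.2 ⟨⟨i.1, h⟩, rmem 𝓕 d W q i h⟩) then
        (if offW 𝓕 d W ⟨⟨F, hF⟩, z⟩ then v (projIdx 𝓕 d W ⟨⟨F, hF⟩, z⟩) else 0) else 0)
      = (if z = zhat then v q else 0) := by
    intro z
    by_cases hz : z = zhat
    · subst hz
      rw [if_pos hzhat, if_pos, hproj, if_pos rfl]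
      · rfl
      · intro i hi
        simp only [hzdef]
        rw [dif_neg hi]
    · rw [if_neg hz]
      by_cases h1 : (∀ (i : {a // a ∈ F}) (h : i.1 ∈ W),
          z i = q.2 ⟨⟨i.1, h⟩, rmem 𝓕 d W q i h⟩)
      · rw [if_pos h1]
        by_cases h2 : offW 𝓕 d W ⟨⟨F, hF⟩, z⟩
        · exfalso
          apply hz
          funext i
          by_cases hi : i.1 ∈ W
          · rw [h1 i hi]
            simp only [hzdef]
            rw [dif_pos hi]
          · have := h2 i hi
            apply Fin.ext
            simp only [hzdef]
            rw [dif_neg hi]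
            exact this
        · rw [if_neg h2]
      · rw [if_neg h1]
  refine (Finset.sum_congr rfl fun z _ => hstep z).trans ?_
  rw [Fintype.sum_ite_eq']

end MargRestrict

open MargRestrict in
/-- Proposition 5.3 (1): if the marginal polytope `P_{𝓕,d}` is compressed, then so is the
marginal polytope of the restriction `𝓕|_W = {F ∩ W : F ∈ 𝓕}`, `d|_W` to a subset `W`
of the ground set. -/
theorem marginal_restrict_compressed
    (n : ℕ) (𝓕 : Finset (Finset (Fin n))) (d : Fin n → ℕ) (hd : ∀ i, 1 ≤ d i)
    (W : Finset (Fin n))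
    (h : IsCompressed (Set.range (margVec 𝓕 d))) :
    IsCompressed (Set.range
      (margVec (𝓕.image fun F => F.subtype (· ∈ W)) (fun i : {a // a ∈ W} => d i.1))) := by
  classical
  obtain ⟨N, π, hinj, hlat, heq⟩ := h
  set A : Set (MargIndex 𝓕 d → ℝ) := Set.range (margVec 𝓕 d) with hA
  set A' : Set (MargIndex (famW 𝓕 W) (dW d W) → ℝ)
    := Set.range (margVec (famW 𝓕 W) (dW d W)) with hA'
  set M := Mmap 𝓕 d W with hM
  set r := rmap 𝓕 d W with hr
  -- basic image facts
  have hMA : M '' A' ⊆ A := by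
    rintro _ ⟨_, ⟨w, rfl⟩, rfl⟩
    exact ⟨extendCell d W hd w, (Mmap_margVec 𝓕 d W hd w).symm⟩
  have hrA : r '' A ⊆ A' := by
    rintro _ ⟨_, ⟨x, rfl⟩, rfl⟩
    exact ⟨fun j => x j.1, (rmap_margVec 𝓕 d W x).symm⟩
  have hMhull : M '' convexHull ℝ A' ⊆ convexHull ℝ A := by
    rw [M.image_convexHull]
    exact convexHull_mono hMA
  have hrM : ∀ v, r (M v) = v := rmap_Mmap 𝓕 d W hd
  -- the affine map for the restricted polytope
  refine ⟨N, π.comp M.toAffineMap, ?_, ?_, ?_⟩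
  · -- injectivity
    intro x hx y hy hxy
    simp only [AffineMap.comp_apply, LinearMap.coe_toAffineMap] at hxy
    have hx' : M x ∈ convexHull ℝ A := hMhull ⟨x, hx, rfl⟩
    have hy' : M y ∈ convexHull ℝ A := hMhull ⟨y, hy, rfl⟩
    have := hinj hx' hy' hxy
    calc x = r (M x) := (hrM x).symm
    _ = r (M y) := by rw [this]
    _ = y := hrM y
  · -- lattice points map to 0/1 points
    rintro x ⟨hx1, hx2⟩
    have h1 : M x ∈ convexHull ℝ A := hMhull ⟨x, hx1, rfl⟩
    have h2 : M x ∈ (AddSubgroup.closure A : Set (MargIndex 𝓕 d → ℝ)) := by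
      have hmap : M x ∈ (AddSubgroup.closure A').map M.toAddMonoidHom :=
        AddSubgroup.mem_map_of_mem _ hx2
      rw [AddMonoidHom.map_closure] at hmap
      exact AddSubgroup.closure_mono hMA hmap
    exact hlat (M x) ⟨h1, h2⟩
  · -- the image is a slice of the cube
    set π' := π.comp M.toAffineMap with hπ'
    have hπ'eq : π' '' convexHull ℝ A' = π '' (M '' convexHull ℝ A') := by
      rw [Set.image_image]
      rfl
    apply Set.eq_of_subset_of_subset
    · rintro _ ⟨p, hp, rfl⟩
      refine ⟨?_, subset_affineSpan ℝ _ ⟨p, hp, rfl⟩⟩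
      have : π (M p) ∈ π '' convexHull ℝ A := ⟨M p, hMhull ⟨p, hp, rfl⟩, rfl⟩
      rw [heq] at this
      exact this.1
    · rintro u ⟨hu1, hu2⟩
      -- u lies in the affine span of the big image, hence in the big image
      have hsub : π' '' convexHull ℝ A' ⊆ π '' convexHull ℝ A := by
        rw [hπ'eq]
        exact Set.image_mono hMhull
      have huA : u ∈ π '' convexHull ℝ A := by
        rw [heq]
        exact ⟨hu1, affineSpan_mono ℝ hsub hu2⟩
      obtain ⟨p, hp, hpu⟩ := huA
      -- u = π (M b) with b in the affine span of conv A'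
      have hu2' : u ∈ (affineSpan ℝ (M '' convexHull ℝ A')).map π := by
        rw [AffineSubspace.map_span, ← hπ'eq]
        exact hu2
      obtain ⟨q, hq, hqu⟩ := hu2'
      have hq' : q ∈ (affineSpan ℝ (convexHull ℝ A')).map M.toAffineMap := by
        rw [AffineSubspace.map_span]
        exact hq
      obtain ⟨b, hb, hbq⟩ := hq'
      -- injectivity of π on the affine span gives p = q
      have hAne : A.Nonempty := ⟨margVec 𝓕 d (fun i => ⟨0, hd i⟩), Set.mem_range_self _⟩
      have hinj' : Set.InjOn π (affineSpan ℝ A : Set (MargIndex 𝓕 d → ℝ)) :=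
        injOn_span_of_injOn_hull π A hAne hinj
      have hpspan : p ∈ (affineSpan ℝ A : Set (MargIndex 𝓕 d → ℝ)) := by
        have := subset_affineSpan ℝ (convexHull ℝ A) hp
        rwa [affineSpan_convexHull] at this
      have hqspan : q ∈ (affineSpan ℝ A : Set (MargIndex 𝓕 d → ℝ)) := by
        have h1 : q ∈ affineSpan ℝ (convexHull ℝ A) :=
          affineSpan_mono ℝ hMhull hq
        rwa [affineSpan_convexHull] at h1
      have hpq : p = q := hinj' hpspan hqspan (by rw [hpu, hqu])
      -- now p = M b, and b = r p lies in conv A'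
      have hbp : M b = p := by rw [hpq]; exact hbq
      have hbhull : b ∈ convexHull ℝ A' := by
        have : b = r p := by rw [← hbp, hrM]
        rw [this]
        have : r p ∈ r '' convexHull ℝ A := ⟨p, hp, rfl⟩
        rw [r.image_convexHull] at this
        exact convexHull_mono hrA this
      refine ⟨b, hbhull, ?_⟩
      show π (M b) = u
      rw [hbp, hpu]
end
end

section
/- Let 𝓕 be a finite family of subsets of [n] = {1,…,n}, and let d, d′ : [n] → ℕ with 1 ≤ d′_i ≤ d_i for all i. If the marginal polytope P_{𝓕,d} is compressed, then the marginal polytope P_{𝓕,d′} is compressed. (Part (2) of Proposition 5.3 of the paper: decreasing the numbers of levels preserves compressedness of the marginal polytope.) -/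
noncomputable section

/-! ### Auxiliary lemmas -/

open Classical in
/-- If a convex combination of nonnegative vectors vanishes on `S`, it is a convex
combination of the generators vanishing on `S`. -/
lemma convexHull_zero_coords {E : Type*} (A : Set (E → ℝ)) (S : Set E)
    (hA : ∀ a ∈ A, ∀ e, 0 ≤ a e) {z : E → ℝ}
    (hz : z ∈ convexHull ℝ A) (hzS : ∀ e ∈ S, z e = 0) :
    z ∈ convexHull ℝ {a | a ∈ A ∧ ∀ e ∈ S, a e = 0} := by
  rw [convexHull_eq] at hz
  obtain ⟨ι, t, w, p, hw0, hw1, hp, hcm⟩ := hz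
  have hz' : z = ∑ i ∈ t, w i • p i := by
    rw [← hcm, Finset.centerMass, hw1]; simp
  have key : ∀ i ∈ t, w i ≠ 0 → ∀ e ∈ S, p i e = 0 := by
    intro i hi hwi e he
    have h0 : ∑ j ∈ t, w j * p j e = 0 := by
      have h1 := congrFun hz' e
      rw [hzS e he] at h1
      simpa [Finset.sum_apply] using h1.symm
    have hterm : ∀ j ∈ t, 0 ≤ w j * p j e := fun j hj =>
      mul_nonneg (hw0 j hj) (hA _ (hp j hj) e)
    have h2 := (Finset.sum_eq_zero_iff_of_nonneg hterm).mp h0 i hi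
    rcases mul_eq_zero.mp h2 with h | h
    · exact absurd h hwi
    · exact h
  rw [← Finset.centerMass_filter_ne_zero (w := w)] at hcm
  rw [← hcm]
  apply Finset.centerMass_mem_convexHull
  · intro i hi; exact hw0 i (Finset.mem_filter.mp hi).1
  · rw [Finset.sum_filter_ne_zero, hw1]; norm_num
  · intro i hi
    obtain ⟨hit, hwi⟩ := Finset.mem_filter.mp hi
    exact ⟨hp i hit, key i hit hwi⟩

/-- An affine map injective on a convex set is injective on its affine span. -/
lemma injOn_affineSpan_of_injOn_convex {E F : Type*} [AddCommGroup E] [Module ℝ E]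
    [AddCommGroup F] [Module ℝ F] (f : E →ᵃ[ℝ] F) {s : Set E} (hs : Convex ℝ s)
    (hinj : Set.InjOn f s) : Set.InjOn f (affineSpan ℝ s : Set E) := by
  intro a ha b hb hab
  have hv : b - a ∈ vectorSpan ℝ s := by
    rw [← direction_affineSpan]
    simpa using AffineSubspace.vsub_mem_direction hb ha
  have hlin : f.linear (b - a) = 0 := by
    have := f.linearMap_vsub b a
    rw [vsub_eq_sub, vsub_eq_sub] at this
    rw [this, hab, sub_self]
  rw [vectorSpan_def, Submodule.mem_span_set'] at hv
  obtain ⟨m, c, g, hg⟩ := hv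
  have hgm : ∀ i : Fin m, ∃ x ∈ s, ∃ y ∈ s, x - y = (g i : E) := by
    intro i
    have := (g i).2
    rw [Set.mem_vsub] at this
    obtain ⟨x, hx, y, hy, hxy⟩ := this
    exact ⟨x, hx, y, hy, by rw [← hxy, vsub_eq_sub]⟩
  choose p hp q hq hpq using hgm
  rcases Nat.eq_zero_or_pos m with hm | hm
  · subst hm
    have h0 : b - a = 0 := by rw [← hg]; simp
    linear_combination (norm := abel) -h0
  set K : ℝ := (2 * m : ℝ)⁻¹ with hK
  have hmpos : (0 : ℝ) < 2 * m := by positivity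
  have hKpos : 0 < K := by positivity
  set C : ℝ := ∑ i, |c i| with hC
  have hCnn : 0 ≤ C := Finset.sum_nonneg fun i _ => abs_nonneg _
  set τ : ℝ := K / (1 + C) with hτ
  have hτpos : 0 < τ := by positivity
  have hτc : ∀ i : Fin m, |τ * c i| ≤ K := by
    intro i
    rw [abs_mul, abs_of_pos hτpos]
    calc τ * |c i| ≤ τ * (1 + C) := by
          apply mul_le_mul_of_nonneg_left _ hτpos.le
          have : |c i| ≤ C := Finset.single_le_sum (f := fun j => |c j|)
            (fun j _ => abs_nonneg _) (Finset.mem_univ i)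
          linarith
      _ = K := by
          rw [hτ]; field_simp
  set x0 : E := ∑ i, (K • p i + K • q i) with hx0def
  have hx0 : x0 ∈ s := by
    have h := hs.sum_mem (t := (Finset.univ : Finset (Fin m ⊕ Fin m)))
      (w := Sum.elim (fun _ : Fin m => K) (fun _ : Fin m => K))
      (z := Sum.elim p q)
      (fun j _ => by cases j <;> simpa using hKpos.le)
      (by
        rw [Fintype.sum_sum_type]
        simp only [Sum.elim_inl, Sum.elim_inr, Finset.sum_const, Finset.card_univ,
          Fintype.card_fin, nsmul_eq_mul]
        rw [hK]; field_simp; ring)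
      (fun j _ => by cases j <;> simp [hp, hq])
    rw [Fintype.sum_sum_type] at h
    simpa [hx0def, ← Finset.sum_add_distrib] using h
  set x1 : E := ∑ i, ((K + τ * c i) • p i + (K - τ * c i) • q i) with hx1def
  have hx1 : x1 ∈ s := by
    have h := hs.sum_mem (t := (Finset.univ : Finset (Fin m ⊕ Fin m)))
      (w := Sum.elim (fun i : Fin m => K + τ * c i) (fun i : Fin m => K - τ * c i))
      (z := Sum.elim p q)
      (fun j _ => by
        cases j with
        | inl i =>
          simp only [Sum.elim_inl]
          have := abs_le.mp (hτc i); linarith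
        | inr i =>
          simp only [Sum.elim_inr]
          have := abs_le.mp (hτc i); linarith)
      (by
        rw [Fintype.sum_sum_type]
        simp only [Sum.elim_inl, Sum.elim_inr, Finset.sum_add_distrib, Finset.sum_sub_distrib,
          Finset.sum_const, Finset.card_univ, Fintype.card_fin, nsmul_eq_mul]
        rw [hK]; field_simp; ring)
      (fun j _ => by cases j <;> simp [hp, hq])
    rw [Fintype.sum_sum_type] at h
    simpa [hx1def, ← Finset.sum_add_distrib] using h
  have hid : x1 = x0 + τ • (b - a) := by
    rw [hx1def, hx0def, ← hg, Finset.smul_sum, ← Finset.sum_add_distrib]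
    apply Finset.sum_congr rfl
    intro i _
    rw [← hpq i]
    module
  have hfeq : f x1 = f x0 := by
    rw [hid, add_comm]
    have h1 := f.map_vadd x0 (τ • (b - a))
    simp only [vadd_eq_add] at h1
    rw [h1, map_smul, hlin, smul_zero, zero_add]
  have heq := hinj hx1 hx0 hfeq
  rw [hid] at heq
  have h0 : τ • (b - a) = 0 := by
    have h2 : x0 + τ • (b - a) - x0 = x0 - x0 := by rw [heq]
    simpa using h2
  have hba : b - a = 0 := by
    rcases smul_eq_zero.mp h0 with h | h
    · exact absurd h (ne_of_gt hτpos)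
    · exact h
  linear_combination (norm := abel) -hba

namespace MargAux

variable {ι : Type*} (𝓕 : Finset (Finset ι)) (d d' : ι → ℕ)

/-- "In range" indices: those `(F, y)` with every `y i < d' i`. -/
def InR (p : MargIndex 𝓕 d) : Prop := ∀ i : {a // a ∈ p.1.1}, ((p.2 i : ℕ)) < d' i.1

/-- Restriction of an in-range index to a `d'`-index. -/
def res (p : MargIndex 𝓕 d) (hp : InR 𝓕 d d' p) : MargIndex 𝓕 d' :=
  ⟨p.1, fun i => ⟨(p.2 i : ℕ), hp i⟩⟩

open Classical in
/-- The coordinate-sectioning linear map. -/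
noncomputable def σ : (MargIndex 𝓕 d' → ℝ) →ₗ[ℝ] (MargIndex 𝓕 d → ℝ) where
  toFun v p := if hp : InR 𝓕 d d' p then v (res 𝓕 d d' p hp) else 0
  map_add' u v := by
    funext p; by_cases hp : InR 𝓕 d d' p <;> simp [hp]
  map_smul' c v := by
    funext p; by_cases hp : InR 𝓕 d d' p <;> simp [hp]

theorem σ_apply_notInR (v : MargIndex 𝓕 d' → ℝ) (p : MargIndex 𝓕 d)
    (hp : ¬ InR 𝓕 d d' p) : σ 𝓕 d d' v p = 0 := by
  simp only [σ, LinearMap.coe_mk, AddHom.coe_mk, dif_neg hp]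

/-- Casting a `d'`-cell to a `d`-cell. -/
def castCell (hle : ∀ i, d' i ≤ d i) (x : ∀ i, Fin (d' i)) : ∀ i, Fin (d i) :=
  fun i => Fin.castLE (hle i) (x i)

theorem σ_margVec (hle : ∀ i, d' i ≤ d i) (x : ∀ i, Fin (d' i)) :
    σ 𝓕 d d' (margVec 𝓕 d' x) = margVec 𝓕 d (castCell d d' hle x) := by
  funext p
  simp only [σ, LinearMap.coe_mk, AddHom.coe_mk]
  by_cases hp : InR 𝓕 d d' p
  · rw [dif_pos hp]
    unfold margVec
    refine if_congr ?_ rfl rfl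
    constructor
    · intro h i
      have := congrArg Fin.val (h i)
      exact Fin.ext this
    · intro h i
      have := congrArg Fin.val (h i)
      exact Fin.ext this
  · rw [dif_neg hp]
    unfold margVec
    rw [if_neg]
    intro hc
    apply hp
    intro i
    have := congrArg Fin.val (hc i)
    simp only [castCell, Fin.coe_castLE] at this
    rw [← this]
    exact (x i.1).2

theorem σ_inj (hle : ∀ i, d' i ≤ d i) : Function.Injective (σ 𝓕 d d') := by
  intro u v huv
  funext q
  have hq : InR 𝓕 d d' ⟨q.1, fun i => Fin.castLE (hle i.1) (q.2 i)⟩ := fun i => (q.2 i).2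
  have h1 := congrFun huv ⟨q.1, fun i => Fin.castLE (hle i.1) (q.2 i)⟩
  have hres : res 𝓕 d d' ⟨q.1, fun i => Fin.castLE (hle i.1) (q.2 i)⟩ hq = q := by
    have : (fun i : {a // a ∈ q.1.1} =>
        (⟨((Fin.castLE (hle i.1) (q.2 i)) : ℕ), hq i⟩ : Fin (d' i.1))) = q.2 := by
      funext i; exact Fin.ext rfl
    exact Sigma.ext rfl (heq_of_eq this)
  show u q = v q
  rw [← hres]
  simpa only [σ, LinearMap.coe_mk, AddHom.coe_mk, dif_pos hq] using h1

theorem exists_cell (hd' : ∀ i, 1 ≤ d' i) (hle : ∀ i, d' i ≤ d i) (x : ∀ i, Fin (d i))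
    (hx : ∀ p : MargIndex 𝓕 d, ¬ InR 𝓕 d d' p → margVec 𝓕 d x p = 0) :
    ∃ x' : ∀ i, Fin (d' i), margVec 𝓕 d (castCell d d' hle x') = margVec 𝓕 d x := by
  classical
  refine ⟨fun i => if h : ((x i : ℕ)) < d' i then ⟨(x i : ℕ), h⟩ else ⟨0, hd' i⟩, ?_⟩
  funext p
  have hF : ∀ i : {a // a ∈ p.1.1}, ((x i.1 : ℕ)) < d' i.1 := by
    by_contra hc
    push_neg at hc
    obtain ⟨i0, hi0⟩ := hc
    have h1 : margVec 𝓕 d x ⟨p.1, fun i => x i.1⟩ = 0 :=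
      hx _ (fun hIn => absurd (hIn i0) (not_lt.mpr hi0))
    unfold margVec at h1
    rw [if_pos (fun _ => rfl)] at h1
    exact one_ne_zero h1
  have hcc : ∀ i : {a // a ∈ p.1.1},
      castCell d d' hle (fun i => if h : ((x i : ℕ)) < d' i then ⟨(x i : ℕ), h⟩
        else ⟨0, hd' i⟩) i.1 = x i.1 := by
    intro i
    apply Fin.ext
    simp only [castCell, Fin.coe_castLE]
    rw [dif_pos (hF i)]
  unfold margVec
  refine if_congr ?_ rfl rfl
  constructor
  · intro h i; rw [← hcc i]; exact h i
  · intro h i; rw [hcc i]; exact h i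

theorem margVec_nonneg (x : ∀ i, Fin (d i)) (p : MargIndex 𝓕 d) : 0 ≤ margVec 𝓕 d x p := by
  unfold margVec; split <;> norm_num

end MargAux

/-- Proposition 5.3 (2): if the marginal polytope `P_{𝓕,d}` is compressed and
`1 ≤ d′ᵢ ≤ dᵢ` for all `i`, then the marginal polytope `P_{𝓕,d′}` is compressed. -/
theorem marginal_shrink_levels_compressed
    (n : ℕ) (𝓕 : Finset (Finset (Fin n))) (d d' : Fin n → ℕ)
    (hd' : ∀ i, 1 ≤ d' i) (hle : ∀ i, d' i ≤ d i)
    (h : IsCompressed (Set.range (margVec 𝓕 d))) :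
    IsCompressed (Set.range (margVec 𝓕 d')) := by
  classical
  obtain ⟨N, π, hinj, hlat, hcube⟩ := h
  set A : Set (MargIndex 𝓕 d → ℝ) := Set.range (margVec 𝓕 d) with hAdef
  set A' : Set (MargIndex 𝓕 d' → ℝ) := Set.range (margVec 𝓕 d') with hA'def
  set σ : (MargIndex 𝓕 d' → ℝ) →ₗ[ℝ] (MargIndex 𝓕 d → ℝ) := MargAux.σ 𝓕 d d' with hσdef
  set W : Set (MargIndex 𝓕 d → ℝ) :=
    {v | ∀ p, ¬ MargAux.InR 𝓕 d d' p → v p = 0} with hWdef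
  have hWmem : ∀ v : MargIndex 𝓕 d → ℝ,
      v ∈ W ↔ ∀ p, ¬ MargAux.InR 𝓕 d d' p → v p = 0 := fun v => Iff.rfl
  -- σ maps A' into A ∩ W, and onto it
  have hσA'1 : σ '' A' ⊆ A ∩ W := by
    rintro _ ⟨_, ⟨x, rfl⟩, rfl⟩
    refine ⟨?_, ?_⟩
    · rw [MargAux.σ_margVec 𝓕 d d' hle x]
      exact ⟨_, rfl⟩
    · rw [hWmem]
      intro p hp
      exact MargAux.σ_apply_notInR 𝓕 d d' _ p hp
  have hσA'2 : A ∩ W ⊆ σ '' A' := by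
    rintro _ ⟨⟨x, rfl⟩, hW2⟩
    rw [hWmem] at hW2
    obtain ⟨x', hx'⟩ := MargAux.exists_cell 𝓕 d d' hd' hle x hW2
    exact ⟨margVec 𝓕 d' x', ⟨x', rfl⟩, by rw [MargAux.σ_margVec 𝓕 d d' hle x', hx']⟩
  have hσA' : σ '' A' = A ∩ W := subset_antisymm hσA'1 hσA'2
  -- convexity facts
  have hWconv : Convex ℝ W := by
    intro u hu v hv a b _ _ _
    rw [hWmem] at hu hv ⊢
    intro p hp
    simp [Pi.add_apply, Pi.smul_apply, hu p hp, hv p hp]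
  have hKey : convexHull ℝ (σ '' A') = convexHull ℝ A ∩ W := by
    apply subset_antisymm
    · apply convexHull_min
      · exact fun z hz => ⟨subset_convexHull ℝ A (hσA'1 hz).1, (hσA'1 hz).2⟩
      · exact (convex_convexHull ℝ A).inter hWconv
    · rintro z ⟨hzA, hzW⟩
      rw [hWmem] at hzW
      have hnn : ∀ a ∈ A, ∀ e, 0 ≤ a e := by
        rintro _ ⟨x, rfl⟩ e
        exact MargAux.margVec_nonneg 𝓕 d x e
      have hz2 := convexHull_zero_coords A {p | ¬ MargAux.InR 𝓕 d d' p} hnn hzA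
        (fun e he => hzW e he)
      refine convexHull_mono ?_ hz2
      intro a ha
      exact hσA'2 ⟨ha.1, (hWmem a).mpr ha.2⟩
  have hσconv : σ '' (convexHull ℝ A') = convexHull ℝ A ∩ W := by
    rw [σ.image_convexHull, hKey]
  refine ⟨N, π.comp σ.toAffineMap, ?_, ?_, ?_⟩
  · -- injectivity
    intro u hu v hv huv
    have hσu : σ u ∈ convexHull ℝ A ∩ W := by
      rw [← hσconv]; exact ⟨u, hu, rfl⟩
    have hσv : σ v ∈ convexHull ℝ A ∩ W := by
      rw [← hσconv]; exact ⟨v, hv, rfl⟩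
    have huv' : π (σ u) = π (σ v) := huv
    exact MargAux.σ_inj 𝓕 d d' hle (hinj hσu.1 hσv.1 huv')
  · -- lattice points go to 0/1 points
    rintro u ⟨huc, hug⟩
    have h1 : σ u ∈ convexHull ℝ A := by
      have : σ u ∈ convexHull ℝ A ∩ W := by rw [← hσconv]; exact ⟨u, huc, rfl⟩
      exact this.1
    have h2 : σ u ∈ AddSubgroup.closure A := by
      have hmap : σ.toAddMonoidHom u ∈ (AddSubgroup.closure A').map σ.toAddMonoidHom :=
        AddSubgroup.mem_map_of_mem _ hug
      rw [AddMonoidHom.map_closure] at hmap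
      have himg : (⇑σ.toAddMonoidHom) '' A' ⊆ A := by
        rintro _ ⟨v, hv, rfl⟩
        exact (hσA'1 ⟨v, hv, rfl⟩).1
      exact AddSubgroup.closure_mono himg hmap
    exact hlat _ ⟨h1, h2⟩
  · -- the cube condition
    have himg : (π.comp σ.toAffineMap) '' (convexHull ℝ A') = π '' (convexHull ℝ A ∩ W) := by
      rw [AffineMap.coe_comp, Set.image_comp, LinearMap.coe_toAffineMap, hσconv]
    rw [himg]
    apply subset_antisymm
    · rintro _ ⟨w, hw, rfl⟩
      refine ⟨?_, subset_affineSpan ℝ _ ⟨w, hw, rfl⟩⟩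
      have : π w ∈ π '' convexHull ℝ A := ⟨w, hw.1, rfl⟩
      rw [hcube] at this
      exact this.1
    · rintro z ⟨hz1, hz2⟩
      have hz2' : z ∈ (affineSpan ℝ (π '' convexHull ℝ A) : Set (Fin N → ℝ)) :=
        affineSpan_mono ℝ (Set.image_mono Set.inter_subset_left) hz2
      have hzim : z ∈ π '' convexHull ℝ A := by
        rw [hcube]; exact ⟨hz1, hz2'⟩
      obtain ⟨w, hwA, hwz⟩ := hzim
      have hspan : (affineSpan ℝ (π '' (convexHull ℝ A ∩ W)) : Set (Fin N → ℝ))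
          = π '' (affineSpan ℝ (convexHull ℝ A ∩ W) : Set (MargIndex 𝓕 d → ℝ)) := by
        rw [← AffineSubspace.map_span, AffineSubspace.coe_map]
      rw [hspan] at hz2
      obtain ⟨w', hw', hw'z⟩ := hz2
      have hinj2 := injOn_affineSpan_of_injOn_convex π (convex_convexHull ℝ A) hinj
      have hww : w = w' := by
        apply hinj2 (subset_affineSpan ℝ _ hwA)
          (affineSpan_mono ℝ Set.inter_subset_left hw')
        rw [hwz, hw'z]
      have hWsub : (affineSpan ℝ (convexHull ℝ A ∩ W) : Set (MargIndex 𝓕 d → ℝ)) ⊆ W := by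
        let WS : Submodule ℝ (MargIndex 𝓕 d → ℝ) :=
          { carrier := W
            zero_mem' := fun p hp => rfl
            add_mem' := fun {u v} hu hv p hp => by
              show u p + v p = 0
              rw [hu p hp, hv p hp, add_zero]
            smul_mem' := fun c v hv p hp => by
              show c * v p = 0
              rw [hv p hp, mul_zero] }
        have hle2 : affineSpan ℝ (convexHull ℝ A ∩ W) ≤ WS.toAffineSubspace := by
          rw [affineSpan_le]
          intro v hv
          exact Submodule.mem_toAffineSubspace.mpr hv.2
        intro v hv
        exact Submodule.mem_toAffineSubspace.mp (hle2 hv)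
      have hwW : w ∈ W := by rw [hww]; exact hWsub hw'
      exact ⟨w, ⟨hwA, hwW⟩, hwz⟩

end
end

section
/- Let 𝓕 be a finite family of subsets of [n] = {1,…,n} and d : [n] → ℕ with d_i ≥ 1, and suppose the marginal polytope P_{𝓕,d} is compressed. Let 𝓕′ = {F ∪ {n+1} : F ∈ 𝓕}, a family of subsets of [n+1], and let d′ : [n+1] → ℕ extend d by an arbitrary value d′_{n+1} ≥ 1. Then the marginal polytope P_{𝓕′,d′} is compressed. (Proposition 5.4 of the paper: coning a simplicial complex over a new vertex preserves compressedness of the marginal polytope.) -/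
noncomputable section

section Transfer

variable {E E' K : Type*} [Fintype K]

/-- `IsCompressed` from a witness with an arbitrary finite coordinate type. -/
theorem isCompressed_of_affineMap (A : Set (E → ℝ)) (π : (E → ℝ) →ᵃ[ℝ] (K → ℝ))
    (h1 : Set.InjOn π (convexHull ℝ A))
    (h2 : ∀ x ∈ convexHull ℝ A ∩ (AddSubgroup.closure A : Set (E → ℝ)),
      ∀ k, π x k = 0 ∨ π x k = 1)
    (h3 : π '' convexHull ℝ A
      = {z : K → ℝ | ∀ k, z k ∈ Set.Icc (0:ℝ) 1} ∩
        (affineSpan ℝ (π '' convexHull ℝ A) : Set (K → ℝ))) :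
    IsCompressed A := by
  classical
  set N := Fintype.card K with hN
  set e : Fin N ≃ K := (Fintype.equivFin K).symm with he
  set g : (K → ℝ) ≃ₗ[ℝ] (Fin N → ℝ) := LinearEquiv.funCongrLeft ℝ ℝ e with hg
  have hgapp : ∀ (v : K → ℝ) (i : Fin N), g v i = v (e i) := fun v i => rfl
  have himg : ((g.toLinearMap.toAffineMap).comp π) '' convexHull ℝ A
      = g '' (π '' convexHull ℝ A) := by
    rw [← Set.image_comp]; rfl
  refine ⟨N, (g.toLinearMap.toAffineMap).comp π, ?_, ?_, ?_⟩
  · intro x hx y hy hxy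
    refine h1 hx hy ?_
    have : g (π x) = g (π y) := hxy
    exact g.injective this
  · intro x hx i
    have := h2 x hx (e i)
    simpa [zeroOneSet, hgapp] using this
  · have hcube : g '' {z : K → ℝ | ∀ k, z k ∈ Set.Icc (0:ℝ) 1} = stdCube N := by
      ext z
      constructor
      · rintro ⟨v, hv, rfl⟩ i
        exact hv (e i)
      · intro hz
        refine ⟨fun k => z (e.symm k), fun k => hz _, ?_⟩
        funext i
        rw [hgapp]
        simp
    have hspan : g '' (affineSpan ℝ (π '' convexHull ℝ A) : Set (K → ℝ))
        = (affineSpan ℝ (((g.toLinearMap.toAffineMap).comp π) '' convexHull ℝ A) :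
            Set (Fin N → ℝ)) := by
      rw [himg]
      have e1 : g '' (affineSpan ℝ (π '' convexHull ℝ A) : Set (K → ℝ))
          = ((affineSpan ℝ (π '' convexHull ℝ A)).map g.toLinearMap.toAffineMap :
              Set (Fin N → ℝ)) := by
        rw [AffineSubspace.coe_map]
        rfl
      rw [e1, AffineSubspace.map_span]
      rfl
    calc ((g.toLinearMap.toAffineMap).comp π) '' convexHull ℝ A
        = g '' (π '' convexHull ℝ A) := himg
      _ = g '' ({z : K → ℝ | ∀ k, z k ∈ Set.Icc (0:ℝ) 1} ∩
            (affineSpan ℝ (π '' convexHull ℝ A) : Set (K → ℝ))) := by rw [← h3]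
      _ = g '' {z : K → ℝ | ∀ k, z k ∈ Set.Icc (0:ℝ) 1} ∩
            g '' (affineSpan ℝ (π '' convexHull ℝ A) : Set (K → ℝ)) :=
          Set.image_inter g.injective
      _ = _ := by rw [hcube, hspan]

/-- Compressedness is preserved under a linear change of ambient coordinates. -/
theorem IsCompressed.image (σ : (E → ℝ) ≃ₗ[ℝ] (E' → ℝ)) {A : Set (E → ℝ)}
    (hA : IsCompressed A) : IsCompressed (σ '' A) := by
  obtain ⟨N, π, h1, h2, h3⟩ := hA
  have hconv : convexHull ℝ (σ '' A) = σ '' convexHull ℝ A :=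
    (σ.toLinearMap.image_convexHull A).symm
  have hclos : (AddSubgroup.closure (σ '' A) : Set (E' → ℝ))
      = σ '' (AddSubgroup.closure A : Set (E → ℝ)) := by
    set f : (E → ℝ) →+ (E' → ℝ) := AddMonoidHom.mk' σ (map_add σ) with hf
    have hcoe : ⇑f = ⇑σ := rfl
    have h1' : (AddSubgroup.closure A).map f = AddSubgroup.closure (f '' A) :=
      AddMonoidHom.map_closure f A
    calc (AddSubgroup.closure (σ '' A) : Set (E' → ℝ))
        = (AddSubgroup.closure (f '' A) : Set (E' → ℝ)) := by rw [hcoe]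
      _ = ((AddSubgroup.closure A).map f : Set (E' → ℝ)) := by rw [h1']
      _ = f '' (AddSubgroup.closure A : Set (E → ℝ)) := AddSubgroup.coe_map f _
      _ = _ := by rw [hcoe]
  refine ⟨N, π.comp σ.symm.toLinearMap.toAffineMap, ?_, ?_, ?_⟩
  · rw [hconv]
    rintro _ ⟨u, hu, rfl⟩ _ ⟨v, hv, rfl⟩ hxy
    have : π u = π v := by
      simpa using hxy
    rw [h1 hu hv this]
  · rintro x ⟨hx1, hx2⟩
    rw [hconv] at hx1
    rw [hclos] at hx2
    obtain ⟨u, hu, rfl⟩ := hx1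
    obtain ⟨v, hv, hvu⟩ := hx2
    have huv : u = v := by
      have := congrArg σ.symm hvu
      simpa using this.symm
    have : π u ∈ zeroOneSet N := h2 u ⟨hu, huv ▸ hv⟩
    simpa using this
  · have himg : (π.comp σ.symm.toLinearMap.toAffineMap) '' convexHull ℝ (σ '' A)
        = π '' convexHull ℝ A := by
      rw [hconv, ← Set.image_comp]
      have : (⇑(π.comp σ.symm.toLinearMap.toAffineMap) ∘ ⇑σ) = ⇑π := by
        funext v; simp
      rw [this]
    rw [himg]
    exact h3

end Transfer

section Join

variable {E : Type*} {m : ℕ}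

/-- Embedding of the `t`-th block. -/
def iotaMap (t : Fin m) : (E → ℝ) →ₗ[ℝ] (E × Fin m → ℝ) where
  toFun v := fun p => if p.2 = t then v p.1 else 0
  map_add' u v := by funext p; by_cases h : p.2 = t <;> simp [h]
  map_smul' c v := by funext p; by_cases h : p.2 = t <;> simp [h]

/-- Projection to the `t`-th block. -/
def blkMap (t : Fin m) : (E × Fin m → ℝ) →ₗ[ℝ] (E → ℝ) where
  toFun q := fun e => q (e, t)
  map_add' _ _ := rfl
  map_smul' _ _ := rfl

lemma blk_iota (t s : Fin m) (v : E → ℝ) :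
    blkMap s (iotaMap t v) = if t = s then v else 0 := by
  funext e
  by_cases h : t = s
  · subst h; simp [blkMap, iotaMap]
  · simp [blkMap, iotaMap, h, Ne.symm h]

lemma sum_iota_blk (q : E × Fin m → ℝ) : ∑ t, iotaMap t (blkMap t q) = q := by
  funext p
  have h1 : (∑ t, iotaMap t (blkMap t q)) p = ∑ t, (if p.2 = t then q (p.1, t) else 0) := by
    rw [Finset.sum_apply]
    rfl
  rw [h1, Finset.sum_ite_eq]
  simp

lemma w_eq_one_on_hull (w : (E → ℝ) →ₗ[ℝ] ℝ) {A : Set (E → ℝ)}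
    (hw : ∀ a ∈ A, w a = 1) : ∀ p ∈ convexHull ℝ A, w p = 1 := by
  intro p hp
  have h : convexHull ℝ A ⊆ {v | w v = 1} :=
    convexHull_min hw (convex_hyperplane w.isLinear 1)
  exact h hp

lemma mem_span_of_mem_affineSpan {F : Type*} {S : Set (F → ℝ)} {q : F → ℝ}
    (hq : q ∈ affineSpan ℝ S) : q ∈ Submodule.span ℝ S := by
  have hSne : S.Nonempty := by
    rw [← affineSpan_nonempty (k := ℝ)]
    exact ⟨q, hq⟩
  obtain ⟨b0, hb0⟩ := hSne
  have hdir : q - b0 ∈ vectorSpan ℝ S := by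
    have := AffineSubspace.vsub_mem_direction hq (mem_affineSpan ℝ hb0)
    rwa [direction_affineSpan] at this
  have hle : vectorSpan ℝ S ≤ Submodule.span ℝ S := by
    rw [vectorSpan_def]
    refine Submodule.span_le.2 ?_
    rintro x hx
    obtain ⟨u, hu, v, hv, rfl⟩ := hx
    exact sub_mem (Submodule.subset_span hu) (Submodule.subset_span hv)
  have h1 : q - b0 ∈ Submodule.span ℝ S := hle hdir
  have := Submodule.add_mem _ h1 (Submodule.subset_span hb0)
  simpa using this

lemma smul_mem_affineSpan (w : (E → ℝ) →ₗ[ℝ] ℝ) {A : Set (E → ℝ)}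
    (hw : ∀ a ∈ A, w a = 1) {v : E → ℝ}
    (hv : v ∈ Submodule.span ℝ A) (hr : w v ≠ 0) :
    (w v)⁻¹ • v ∈ affineSpan ℝ A := by
  obtain ⟨c, hsupp, hv'⟩ := Submodule.mem_span_set.1 hv
  have hAne : A.Nonempty := by
    rcases c.support.eq_empty_or_nonempty with he | ⟨a, ha⟩
    · exfalso
      apply hr
      rw [← hv', Finsupp.sum, he, Finset.sum_empty, map_zero]
    · exact ⟨a, hsupp ha⟩
  obtain ⟨a0, ha0⟩ := hAne
  have hvsum : v = ∑ a ∈ c.support, c a • a := by rw [← hv']; rfl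
  have hwv : w v = ∑ a ∈ c.support, c a := by
    rw [hvsum, map_sum]
    refine Finset.sum_congr rfl fun a ha => ?_
    rw [map_smul, smul_eq_mul, hw a (hsupp ha), mul_one]
  set r := w v with hrdef
  have key : (r⁻¹ • v) - a0 = ∑ a ∈ c.support, (r⁻¹ * c a) • (a - a0) := by
    have e1 : ∑ a ∈ c.support, (r⁻¹ * c a) • (a - a0)
        = (∑ a ∈ c.support, (r⁻¹ * c a) • a) - (∑ a ∈ c.support, (r⁻¹ * c a)) • a0 := by
      rw [Finset.sum_smul, ← Finset.sum_sub_distrib]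
      refine Finset.sum_congr rfl fun a _ => ?_
      rw [smul_sub]
    rw [e1]
    have e2 : (∑ a ∈ c.support, (r⁻¹ * c a) • a) = r⁻¹ • v := by
      rw [hvsum, Finset.smul_sum]
      refine Finset.sum_congr rfl fun a _ => ?_
      rw [smul_smul]
    have e3 : (∑ a ∈ c.support, (r⁻¹ * c a)) = 1 := by
      rw [← Finset.mul_sum, ← hwv]
      exact inv_mul_cancel₀ hr
    rw [e2, e3, one_smul]
  have hdir : (r⁻¹ • v) - a0 ∈ vectorSpan ℝ A := by
    rw [key]
    refine Submodule.sum_mem _ fun a ha => Submodule.smul_mem _ _ ?_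
    have h4 := vsub_mem_vectorSpan ℝ (hsupp ha) ha0
    simpa using h4
  have h5 : ((r⁻¹ • v) - a0) +ᵥ a0 ∈ affineSpan ℝ A :=
    AffineSubspace.vadd_mem_of_mem_direction
      (by rw [direction_affineSpan]; exact hdir) (mem_affineSpan ℝ ha0)
  have h6 : ((r⁻¹ • v) - a0) +ᵥ a0 = r⁻¹ • v := by
    simp [vadd_eq_add]
  rwa [h6] at h5

lemma affine_eval_one {F : Type*} (φ : (F → ℝ) →ₗ[ℝ] ℝ) {S : Set (F → ℝ)}
    (hS : ∀ v ∈ S, φ v = 1) {q : F → ℝ} (hq : q ∈ affineSpan ℝ S) : φ q = 1 := by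
  have hSne : S.Nonempty := by
    rw [← affineSpan_nonempty (k := ℝ)]
    exact ⟨q, hq⟩
  obtain ⟨b0, hb0⟩ := hSne
  have hdir : q - b0 ∈ vectorSpan ℝ S := by
    have := AffineSubspace.vsub_mem_direction hq (mem_affineSpan ℝ hb0)
    rwa [direction_affineSpan] at this
  have hker : vectorSpan ℝ S ≤ LinearMap.ker φ := by
    rw [vectorSpan_def]
    refine Submodule.span_le.2 ?_
    rintro x hx
    obtain ⟨u, hu, v, hv, rfl⟩ := hx
    have : φ (u - v) = 0 := by
      rw [map_sub, hS u hu, hS v hv, sub_self]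
    simpa using this
  have h0 : φ (q - b0) = 0 := hker hdir
  have : φ q - φ b0 = 0 := by rw [← map_sub]; exact h0
  have hb := hS b0 hb0
  linarith

lemma conv_join_decomp {A : Set (E → ℝ)} (hne : A.Nonempty)
    (w : (E → ℝ) →ₗ[ℝ] ℝ) (hw : ∀ a ∈ A, w a = 1) {q : E × Fin m → ℝ}
    (hq : q ∈ convexHull ℝ (⋃ t : Fin m, iotaMap t '' A)) :
    ∃ p : Fin m → (E → ℝ), (∀ t, p t ∈ convexHull ℝ A) ∧
      (∀ t, 0 ≤ w (blkMap t q)) ∧ (∑ t, w (blkMap t q)) = 1 ∧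
      ∀ t, blkMap t q = w (blkMap t q) • p t := by
  classical
  obtain ⟨a0, ha0⟩ := hne
  rw [mem_convexHull_iff_exists_fintype] at hq
  obtain ⟨ι, hι, c, z, hc0, hc1, hz, hqz⟩ := hq
  have hz' : ∀ i, ∃ (t : Fin m) (a : E → ℝ), a ∈ A ∧ z i = iotaMap t a := by
    intro i
    have := hz i
    simp only [Set.mem_iUnion, Set.mem_image] at this
    obtain ⟨t, a, haA, hza⟩ := this
    exact ⟨t, a, haA, hza.symm⟩
  choose τ a haA hza using hz'
  have hblk : ∀ t, blkMap t q = ∑ i, (if τ i = t then c i • a i else 0) := by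
    intro t
    rw [← hqz, map_sum]
    refine Finset.sum_congr rfl fun i _ => ?_
    rw [map_smul, hza i, blk_iota]
    split <;> simp
  have hwblk : ∀ t, w (blkMap t q) = ∑ i, (if τ i = t then c i else 0) := by
    intro t
    rw [hblk, map_sum]
    refine Finset.sum_congr rfl fun i _ => ?_
    split
    · rw [map_smul, smul_eq_mul, hw _ (haA i), mul_one]
    · exact map_zero w
  have hpos : ∀ t, 0 ≤ w (blkMap t q) := by
    intro t
    rw [hwblk]
    refine Finset.sum_nonneg fun i _ => ?_
    by_cases h : τ i = t <;> simp [h, hc0 i]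
  have hsum : (∑ t, w (blkMap t q)) = 1 := by
    calc ∑ t, w (blkMap t q) = ∑ t, ∑ i, (if τ i = t then c i else 0) :=
          Finset.sum_congr rfl fun t _ => hwblk t
      _ = ∑ i, ∑ t, (if τ i = t then c i else 0) := Finset.sum_comm
      _ = ∑ i, c i := by
          refine Finset.sum_congr rfl fun i _ => ?_
          rw [Finset.sum_ite_eq]
          simp
      _ = 1 := hc1
  refine ⟨fun t => if h : w (blkMap t q) = 0 then a0
    else (w (blkMap t q))⁻¹ • blkMap t q, ?_, hpos, hsum, ?_⟩
  · intro t
    by_cases h : w (blkMap t q) = 0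
    · simp only [h, dif_pos]
      exact subset_convexHull ℝ A ha0
    · simp only [h, dif_neg, not_false_iff]
      have heq : (w (blkMap t q))⁻¹ • blkMap t q
          = ∑ i, (if τ i = t then (w (blkMap t q))⁻¹ * c i else 0) • a i := by
        rw [hblk, Finset.smul_sum]
        refine Finset.sum_congr rfl fun i _ => ?_
        split
        · rw [smul_smul]
        · rw [smul_zero, zero_smul]
      rw [heq]
      refine Convex.sum_mem (convex_convexHull ℝ A) (fun i _ => ?_) ?_
        (fun i _ => subset_convexHull ℝ A (haA i))
      · split
        · exact mul_nonneg (inv_nonneg.2 (hpos t)) (hc0 i)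
        · exact le_rfl
      · have : ∑ i, (if τ i = t then (w (blkMap t q))⁻¹ * c i else 0)
            = (w (blkMap t q))⁻¹ * ∑ i, (if τ i = t then c i else 0) := by
          rw [Finset.mul_sum]
          refine Finset.sum_congr rfl fun i _ => ?_
          rw [mul_ite, mul_zero]
        rw [this, ← hwblk, inv_mul_cancel₀ h]
  · intro t
    by_cases h : w (blkMap t q) = 0
    · simp only [h, dif_pos, zero_smul]
      rw [hblk]
      have hall : ∀ i ∈ Finset.univ, (if τ i = t then c i else 0) = 0 := by
        refine (Finset.sum_eq_zero_iff_of_nonneg fun i _ => ?_).1 ?_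
        · by_cases h' : τ i = t <;> simp [h', hc0 i]
        · rw [← hwblk]; exact h
      refine Finset.sum_eq_zero fun i _ => ?_
      have := hall i (Finset.mem_univ i)
      by_cases h' : τ i = t
      · rw [if_pos h'] at this ⊢
        rw [this, zero_smul]
      · rw [if_neg h']
    · simp only [h, dif_neg, not_false_iff]
      rw [smul_smul, mul_inv_cancel₀ h, one_smul]

end Join

section JoinMain

variable {E : Type*} {m : ℕ}

theorem isCompressed_join (A : Set (E → ℝ)) (hne : A.Nonempty)
    (w : (E → ℝ) →ₗ[ℝ] ℝ) (hw : ∀ a ∈ A, w a = 1)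
    (hA : IsCompressed A) :
    IsCompressed (⋃ t : Fin m, iotaMap t '' A) := by
  classical
  obtain ⟨N, π, h1, h2, h3⟩ := hA
  set B := ⋃ t : Fin m, iotaMap (E := E) t '' A with hB
  have hwhull := w_eq_one_on_hull w hw
  have hπdec : ∀ (x : E → ℝ) (j : Fin N), π x j = π.linear x j + π 0 j := by
    intro x j
    have h0 : π x = π.linear x + π 0 := congrFun (AffineMap.decomp π) x
    rw [h0]; rfl
  set lamL : Fin m → ((E × Fin m → ℝ) →ₗ[ℝ] ℝ) := fun t => w.comp (blkMap t) with hlamL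
  set uL : Fin m × Fin N → ((E × Fin m → ℝ) →ₗ[ℝ] ℝ) := fun pr =>
    (LinearMap.proj pr.2).comp (π.linear.comp (blkMap pr.1))
      + (π 0 pr.2) • (w.comp (blkMap pr.1)) with huL
  set Lmap : (E × Fin m → ℝ) →ₗ[ℝ]
      ((Sum (Fin m) (Sum (Fin m × Fin N) (Fin m × Fin N))) → ℝ) :=
    LinearMap.pi (Sum.elim lamL (Sum.elim uL (fun pr => lamL pr.1 - uL pr))) with hLmap
  set πK := Lmap.toAffineMap with hπK
  have hev1 : ∀ q t, πK q (Sum.inl t) = w (blkMap t q) := fun q t => rfl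
  have hev2 : ∀ q t j, πK q (Sum.inr (Sum.inl (t, j)))
      = π.linear (blkMap t q) j + π 0 j * w (blkMap t q) := fun q t j => rfl
  have hev3 : ∀ q t j, πK q (Sum.inr (Sum.inr (t, j)))
      = πK q (Sum.inl t) - πK q (Sum.inr (Sum.inl (t, j))) := fun q t j => rfl
  have hueq : ∀ (r : ℝ) (p : E → ℝ), p ∈ convexHull ℝ A →
      ∀ j, π.linear (r • p) j + π 0 j * w (r • p) = r * π p j := by
    intro r p hp j
    have hwp : w (r • p) = r := by
      rw [map_smul, smul_eq_mul, hwhull p hp, mul_one]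
    have hlin : π.linear (r • p) j = r * π.linear p j := by
      rw [map_smul]; rfl
    rw [hwp, hlin, hπdec p j]
    ring
  refine isCompressed_of_affineMap B πK ?_ ?_ ?_
  · -- injectivity
    intro q hq q' hq' hqq'
    obtain ⟨p, hp, hp0, hps, hpe⟩ := conv_join_decomp hne w hw hq
    obtain ⟨p', hp', hp0', hps', hpe'⟩ := conv_join_decomp hne w hw hq'
    have hlam : ∀ t, w (blkMap t q) = w (blkMap t q') := by
      intro t
      have hc := congrFun hqq' (Sum.inl t)
      rwa [hev1, hev1] at hc
    have hblkeq : ∀ t, blkMap t q = blkMap t q' := by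
      intro t
      by_cases h : w (blkMap t q) = 0
      · rw [hpe t, hpe' t, ← hlam t, h, zero_smul, zero_smul]
      · have hplam : π (p t) = π (p' t) := by
          funext j
          have hc := congrFun hqq' (Sum.inr (Sum.inl (t, j)))
          rw [hev2, hev2] at hc
          have e1 : π.linear (blkMap t q) j + π 0 j * w (blkMap t q)
              = w (blkMap t q) * π (p t) j := by
            conv_lhs => rw [hpe t]
            exact hueq (w (blkMap t q)) (p t) (hp t) j
          have e1' : π.linear (blkMap t q') j + π 0 j * w (blkMap t q')
              = w (blkMap t q') * π (p' t) j := by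
            conv_lhs => rw [hpe' t]
            exact hueq (w (blkMap t q')) (p' t) (hp' t) j
          rw [e1, e1', ← hlam t] at hc
          exact mul_left_cancel₀ h hc
        have hpp := h1 (hp t) (hp' t) hplam
        rw [hpe t, hpe' t, ← hlam t, hpp]
    calc q = ∑ t, iotaMap t (blkMap t q) := (sum_iota_blk q).symm
      _ = ∑ t, iotaMap t (blkMap t q') := by
          exact Finset.sum_congr rfl fun t _ => by rw [hblkeq t]
      _ = q' := sum_iota_blk q'
  · -- 0/1 on lattice points
    rintro q ⟨hq1, hq2⟩ k
    obtain ⟨p, hp, hp0, hps, hpe⟩ := conv_join_decomp hne w hw hq1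
    have hblkclos : ∀ t, blkMap t q ∈ (AddSubgroup.closure A : Set (E → ℝ)) := by
      intro t
      have hle : AddSubgroup.closure B
          ≤ (AddSubgroup.closure A).comap (blkMap t).toAddMonoidHom := by
        rw [AddSubgroup.closure_le]
        intro v hv
        simp only [hB, Set.mem_iUnion, Set.mem_image] at hv
        obtain ⟨s, aa, haa, rfl⟩ := hv
        show blkMap t (iotaMap s aa) ∈ AddSubgroup.closure A
        rw [blk_iota]
        split
        · exact AddSubgroup.subset_closure haa
        · exact zero_mem _
      exact hle hq2
    have h01 : ∀ t, w (blkMap t q) = 0 ∨ w (blkMap t q) = 1 := by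
      intro t
      have hle : AddSubgroup.closure A
          ≤ (AddSubgroup.zmultiples (1:ℝ)).comap w.toAddMonoidHom := by
        rw [AddSubgroup.closure_le]
        intro aa haa
        show w aa ∈ AddSubgroup.zmultiples (1:ℝ)
        rw [hw aa haa]
        exact AddSubgroup.mem_zmultiples 1
      obtain ⟨kk, hk⟩ := AddSubgroup.mem_zmultiples_iff.1 (hle (hblkclos t))
      have hk' : w (blkMap t q) = (kk : ℝ) := by
        have := hk
        simp only [zsmul_eq_mul, mul_one, LinearMap.toAddMonoidHom_coe] at this
        exact this.symm
      have hge : (0:ℝ) ≤ (kk:ℝ) := by rw [← hk']; exact hp0 t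
      have hle1 : (kk:ℝ) ≤ 1 := by
        rw [← hk']
        rw [← hps]
        exact Finset.single_le_sum (fun s _ => hp0 s) (Finset.mem_univ t)
      have hkk : kk = 0 ∨ kk = 1 := by
        have g1 : (0:ℤ) ≤ kk := by exact_mod_cast hge
        have g2 : kk ≤ (1:ℤ) := by exact_mod_cast hle1
        omega
      rcases hkk with h | h
      · left; rw [hk', h]; norm_num
      · right; rw [hk', h]; norm_num
    have hu : ∀ t j, (w (blkMap t q) = 0 →
          π.linear (blkMap t q) j + π 0 j * w (blkMap t q) = 0) ∧
        (w (blkMap t q) = 1 →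
          π.linear (blkMap t q) j + π 0 j * w (blkMap t q) = π (p t) j) := by
      intro t j
      constructor
      · intro h
        have hbz : blkMap t q = 0 := by rw [hpe t, h, zero_smul]
        rw [hbz]
        simp
      · intro h
        have hbp : blkMap t q = p t := by rw [hpe t, h, one_smul]
        rw [h, mul_one, hbp]
        exact (hπdec (p t) j).symm
    obtain t | pr := k
    · rw [hev1]; exact h01 t
    · obtain ⟨t, j⟩ | ⟨t, j⟩ := pr
      · rw [hev2]
        rcases h01 t with h | h
        · left; exact (hu t j).1 h
        · have hbp : blkMap t q = p t := by rw [hpe t, h, one_smul]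
          have hmem : p t ∈ convexHull ℝ A ∩ (AddSubgroup.closure A : Set (E → ℝ)) :=
            ⟨hp t, by rw [← hbp]; exact hblkclos t⟩
          rw [(hu t j).2 h]
          exact h2 (p t) hmem j
      · rw [hev3, hev1, hev2]
        rcases h01 t with h | h
        · rw [(hu t j).1 h, h]
          norm_num
        · have hbp : blkMap t q = p t := by rw [hpe t, h, one_smul]
          have hmem : p t ∈ convexHull ℝ A ∩ (AddSubgroup.closure A : Set (E → ℝ)) :=
            ⟨hp t, by rw [← hbp]; exact hblkclos t⟩
          rw [(hu t j).2 h, h]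
          rcases h2 (p t) hmem j with h' | h' <;> rw [h'] <;> norm_num
  · -- image = cube ∩ span
    apply Set.eq_of_subset_of_subset
    · rintro _ ⟨q, hq, rfl⟩
      refine ⟨?_, subset_affineSpan ℝ _ ⟨q, hq, rfl⟩⟩
      obtain ⟨p, hp, hp0, hps, hpe⟩ := conv_join_decomp hne w hw hq
      have hπcube : ∀ t j, π (p t) j ∈ Set.Icc (0:ℝ) 1 := by
        intro t j
        have hmem : π (p t) ∈ π '' convexHull ℝ A := ⟨p t, hp t, rfl⟩
        rw [h3] at hmem
        exact hmem.1 j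
      have hlam01 : ∀ t, w (blkMap t q) ∈ Set.Icc (0:ℝ) 1 := by
        intro t
        refine ⟨hp0 t, ?_⟩
        rw [← hps]
        exact Finset.single_le_sum (fun s _ => hp0 s) (Finset.mem_univ t)
      intro k
      obtain t | pr := k
      · rw [hev1]; exact hlam01 t
      · obtain ⟨t, j⟩ | ⟨t, j⟩ := pr
        · rw [hev2]
          have e1 : π.linear (blkMap t q) j + π 0 j * w (blkMap t q)
              = w (blkMap t q) * π (p t) j := by
            conv_lhs => rw [hpe t]
            exact hueq (w (blkMap t q)) (p t) (hp t) j
          rw [e1]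
          obtain ⟨hl0, hl1⟩ := hlam01 t
          obtain ⟨hc0, hc1⟩ := hπcube t j
          constructor
          · exact mul_nonneg hl0 hc0
          · calc w (blkMap t q) * π (p t) j ≤ 1 * 1 :=
                mul_le_mul hl1 hc1 hc0 zero_le_one
              _ = 1 := one_mul 1
        · rw [hev3, hev1, hev2]
          have e1 : π.linear (blkMap t q) j + π 0 j * w (blkMap t q)
              = w (blkMap t q) * π (p t) j := by
            conv_lhs => rw [hpe t]
            exact hueq (w (blkMap t q)) (p t) (hp t) j
          rw [e1]
          obtain ⟨hl0, hl1⟩ := hlam01 t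
          obtain ⟨hc0, hc1⟩ := hπcube t j
          have hb1 : w (blkMap t q) * π (p t) j ≤ w (blkMap t q) :=
            mul_le_of_le_one_right hl0 hc1
          have hb0 : 0 ≤ w (blkMap t q) * π (p t) j := mul_nonneg hl0 hc0
          constructor
          · linarith
          · linarith
    · rintro z ⟨hzc, hzs⟩
      have hspan : (affineSpan ℝ (πK '' convexHull ℝ B)) = (affineSpan ℝ B).map πK := by
        rw [AffineSubspace.map_span, AffineMap.image_convexHull, affineSpan_convexHull]
      rw [hspan, AffineSubspace.coe_map] at hzs
      obtain ⟨q, hq, rfl⟩ := hzs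
      have hzc' : ∀ k, πK q k ∈ Set.Icc (0:ℝ) 1 := hzc
      have hlamIcc : ∀ t, w (blkMap t q) ∈ Set.Icc (0:ℝ) 1 := by
        intro t
        have := hzc' (Sum.inl t)
        rwa [hev1] at this
      have huIcc : ∀ t j, πK q (Sum.inr (Sum.inl (t, j))) ∈ Set.Icc (0:ℝ) 1 :=
        fun t j => hzc' _
      have huLe : ∀ t j, πK q (Sum.inr (Sum.inl (t, j))) ≤ w (blkMap t q) := by
        intro t j
        have h5 := (hzc' (Sum.inr (Sum.inr (t, j)))).1
        rw [hev3, hev1] at h5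
        linarith
      have hsum1 : ∑ t, w (blkMap t q) = 1 := by
        have hφ : ∀ v ∈ B, (∑ t, w.comp (blkMap t) :
            (E × Fin m → ℝ) →ₗ[ℝ] ℝ) v = 1 := by
          intro v hv
          simp only [hB, Set.mem_iUnion, Set.mem_image] at hv
          obtain ⟨s, aa, haa, rfl⟩ := hv
          rw [LinearMap.sum_apply]
          have e1 : ∀ t, (w.comp (blkMap t)) (iotaMap s aa)
              = if s = t then (1:ℝ) else 0 := by
            intro t
            rw [LinearMap.comp_apply, blk_iota]
            split
            · exact hw aa haa
            · exact map_zero w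
          rw [Finset.sum_congr rfl fun t _ => e1 t, Finset.sum_ite_eq]
          simp
        have h6 := affine_eval_one _ hφ hq
        rw [LinearMap.sum_apply] at h6
        exact h6
      have hex : ∀ t, ∃ pp, pp ∈ convexHull ℝ A ∧
          (w (blkMap t q) ≠ 0 → ∀ j,
            w (blkMap t q) * π pp j = πK q (Sum.inr (Sum.inl (t, j)))) := by
        intro t
        by_cases h : w (blkMap t q) = 0
        · exact ⟨hne.choose, subset_convexHull ℝ A hne.choose_spec,
            fun h' => absurd h h'⟩
        · have hpos : 0 < w (blkMap t q) := lt_of_le_of_ne (hlamIcc t).1 (Ne.symm h)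
          have hqspan : blkMap t q ∈ Submodule.span ℝ A := by
            have hqB : q ∈ Submodule.span ℝ B := mem_span_of_mem_affineSpan hq
            have hle : Submodule.span ℝ B ≤ (Submodule.span ℝ A).comap (blkMap t) := by
              refine Submodule.span_le.2 ?_
              intro v hv
              simp only [hB, Set.mem_iUnion, Set.mem_image] at hv
              obtain ⟨s, aa, haa, rfl⟩ := hv
              show blkMap t (iotaMap s aa) ∈ Submodule.span ℝ A
              rw [blk_iota]
              split
              · exact Submodule.subset_span haa
              · exact zero_mem _
            exact hle hqB
          have hvspan : (w (blkMap t q))⁻¹ • blkMap t q ∈ affineSpan ℝ A :=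
            smul_mem_affineSpan w hw hqspan h
          have hπvj : ∀ j, π ((w (blkMap t q))⁻¹ • blkMap t q) j
              = (w (blkMap t q))⁻¹ * πK q (Sum.inr (Sum.inl (t, j))) := by
            intro j
            rw [hev2, hπdec]
            have e2 : π.linear ((w (blkMap t q))⁻¹ • blkMap t q) j
                = (w (blkMap t q))⁻¹ * π.linear (blkMap t q) j := by
              rw [map_smul]; rfl
            rw [e2]
            field_simp
          have hπvc : π ((w (blkMap t q))⁻¹ • blkMap t q) ∈ stdCube N := by
            intro j
            rw [hπvj j]
            constructor
            · exact mul_nonneg (inv_nonneg.2 hpos.le) (huIcc t j).1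
            · calc (w (blkMap t q))⁻¹ * πK q (Sum.inr (Sum.inl (t, j)))
                  ≤ (w (blkMap t q))⁻¹ * w (blkMap t q) :=
                    mul_le_mul_of_nonneg_left (huLe t j) (inv_nonneg.2 hpos.le)
                _ = 1 := inv_mul_cancel₀ h
          have hπvs : π ((w (blkMap t q))⁻¹ • blkMap t q)
              ∈ (affineSpan ℝ (π '' convexHull ℝ A) : Set (Fin N → ℝ)) := by
            have h5 : π ((w (blkMap t q))⁻¹ • blkMap t q)
                ∈ ((affineSpan ℝ A).map π : Set (Fin N → ℝ)) := by
              rw [AffineSubspace.coe_map]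
              exact ⟨_, hvspan, rfl⟩
            rw [AffineSubspace.map_span] at h5
            have he : affineSpan ℝ (π '' A) = affineSpan ℝ (π '' convexHull ℝ A) := by
              rw [AffineMap.image_convexHull, affineSpan_convexHull]
            rwa [he] at h5
          have hπv : π ((w (blkMap t q))⁻¹ • blkMap t q) ∈ π '' convexHull ℝ A := by
            rw [h3]
            exact ⟨hπvc, hπvs⟩
          obtain ⟨pp, hppA, hppv⟩ := hπv
          refine ⟨pp, hppA, fun _ j => ?_⟩
          rw [hppv, hπvj j]
          field_simp
      choose p hpA hpu using hex
      refine ⟨∑ t, w (blkMap t q) • iotaMap t (p t), ?_, ?_⟩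
      · refine Convex.sum_mem (convex_convexHull ℝ B) (fun t _ => (hlamIcc t).1)
          hsum1 (fun t _ => ?_)
        have himg : iotaMap t '' convexHull ℝ A
            = convexHull ℝ (iotaMap (E := E) t '' A) := (iotaMap t).image_convexHull A
        have hmem : iotaMap t (p t) ∈ convexHull ℝ (iotaMap (E := E) t '' A) := by
          rw [← himg]
          exact ⟨p t, hpA t, rfl⟩
        refine convexHull_mono ?_ hmem
        rw [hB]
        exact Set.subset_iUnion (fun t => iotaMap (E := E) t '' A) t
      · set q' := ∑ t, w (blkMap t q) • iotaMap t (p t) with hq'def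
        have hblkq' : ∀ s, blkMap s q' = w (blkMap s q) • p s := by
          intro s
          rw [hq'def, map_sum]
          have e1 : ∀ t, blkMap s (w (blkMap t q) • iotaMap t (p t))
              = if t = s then w (blkMap t q) • p t else 0 := by
            intro t
            rw [map_smul, blk_iota]
            split <;> simp
          rw [Finset.sum_congr rfl fun t _ => e1 t, Finset.sum_ite_eq']
          simp
        have hc1 : ∀ s, πK q' (Sum.inl s) = πK q (Sum.inl s) := by
          intro s
          rw [hev1, hev1, hblkq', map_smul, smul_eq_mul, hwhull _ (hpA s), mul_one]
        have hc2 : ∀ s j, πK q' (Sum.inr (Sum.inl (s, j)))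
            = πK q (Sum.inr (Sum.inl (s, j))) := by
          intro s j
          rw [hev2, hblkq']
          rw [hueq (w (blkMap s q)) (p s) (hpA s) j]
          by_cases h : w (blkMap s q) = 0
          · have hu0 : πK q (Sum.inr (Sum.inl (s, j))) = 0 :=
              le_antisymm (h ▸ huLe s j) (huIcc s j).1
            rw [h, zero_mul, hu0]
          · exact hpu s h j
        funext k
        obtain t | pr := k
        · exact hc1 t
        · obtain ⟨t, j⟩ | ⟨t, j⟩ := pr
          · exact hc2 t j
          · rw [hev3, hev3, hc1, hc2]

end JoinMain

section Marginal

variable {n : ℕ}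

lemma isCompressed_of_subsingleton {E : Type*} [Subsingleton (E → ℝ)]
    (A : Set (E → ℝ)) (hne : A.Nonempty) : IsCompressed A := by
  refine ⟨0, AffineMap.const ℝ _ 0, ?_, ?_, ?_⟩
  · intro a _ b _ _
    exact Subsingleton.elim a b
  · intro x _ i
    exact i.elim0
  · have h1 : ((AffineMap.const ℝ (E → ℝ) (0 : Fin 0 → ℝ)) ''
        convexHull ℝ A).Nonempty := by
      obtain ⟨a, ha⟩ := hne
      exact ⟨_, ⟨a, subset_convexHull ℝ A ha, rfl⟩⟩
    obtain ⟨y, hy⟩ := h1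
    have key : ∀ S T : Set (Fin 0 → ℝ), S.Nonempty → T.Nonempty → S = T := by
      rintro S T ⟨s, hs⟩ ⟨t, ht⟩
      ext u
      constructor <;> intro _
      · rwa [Subsingleton.elim u t]
      · rwa [Subsingleton.elim u s]
    exact key _ _ ⟨y, hy⟩ ⟨y, fun i => i.elim0, subset_affineSpan ℝ _ hy⟩

lemma cone_mem_base {F : Finset (Fin n)} {i : Fin (n + 1)}
    (hi : i ∈ insert (Fin.last n) (F.map Fin.castSuccEmb)) (h : i ≠ Fin.last n) :
    i.castPred h ∈ F := by
  rcases Finset.mem_insert.1 hi with h' | h'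
  · exact absurd h' h
  · obtain ⟨j, hj, rfl⟩ := Finset.mem_map.1 h'
    have he : (Fin.castSuccEmb j : Fin (n + 1)).castPred h = j := by
      apply Fin.ext
      simp [Fin.coe_castSuccEmb]
    rwa [he]

lemma cone_f_inj {F G : Finset (Fin n)}
    (h : insert (Fin.last n) (F.map Fin.castSuccEmb)
      = insert (Fin.last n) (G.map Fin.castSuccEmb)) : F = G := by
  have hF : Fin.last n ∉ F.map Fin.castSuccEmb := by
    intro hmem
    obtain ⟨j, _, hj⟩ := Finset.mem_map.1 hmem
    exact absurd hj (Fin.castSucc_lt_last j).ne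
  have hG : Fin.last n ∉ G.map Fin.castSuccEmb := by
    intro hmem
    obtain ⟨j, _, hj⟩ := Finset.mem_map.1 hmem
    exact absurd hj (Fin.castSucc_lt_last j).ne
  have h2 := congrArg (fun s => Finset.erase s (Fin.last n)) h
  simp only [Finset.erase_insert hF, Finset.erase_insert hG] at h2
  exact Finset.map_injective _ h2

variable (𝓕 : Finset (Finset (Fin n))) (d' : Fin (n + 1) → ℕ)

/-- Forward map for the reindexing of the cone marginal coordinates. -/
def coneToFun
    (q : MargIndex 𝓕 (fun i => d' i.castSucc) × Fin (d' (Fin.last n))) :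
    MargIndex (𝓕.image fun F => insert (Fin.last n) (F.map Fin.castSuccEmb)) d' :=
  ⟨⟨insert (Fin.last n) (q.1.1.1.map Fin.castSuccEmb),
      Finset.mem_image_of_mem _ q.1.1.2⟩,
    fun i =>
      if h : (i.1 : Fin (n + 1)) = Fin.last n then
        Fin.cast (congrArg d' h.symm) q.2
      else
        Fin.cast (congrArg d' (Fin.castSucc_castPred i.1 h))
          (q.1.2 ⟨i.1.castPred h, cone_mem_base i.2 h⟩)⟩

lemma coneToFun_bijective : Function.Bijective (coneToFun 𝓕 d') := by
  constructor
  · rintro ⟨⟨⟨F1, hF1⟩, y1⟩, t1⟩ ⟨⟨⟨F2, hF2⟩, y2⟩, t2⟩ heq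
    have h1 : insert (Fin.last n) (F1.map Fin.castSuccEmb)
        = insert (Fin.last n) (F2.map Fin.castSuccEmb) :=
      congrArg (fun p => p.1.1) heq
    have hFF : F1 = F2 := cone_f_inj h1
    subst hFF
    have hsnd := eq_of_heq (Sigma.ext_iff.mp heq).2
    have ht : t1 = t2 := by
      have h5 := congrFun hsnd ⟨Fin.last n, Finset.mem_insert_self _ _⟩
      simp only [coneToFun] at h5
      rw [dif_pos trivial, dif_pos trivial] at h5
      apply Fin.ext
      have h6 := congrArg Fin.val h5
      simpa using h6
    have hy : y1 = y2 := by
      funext j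
      have hmem : (j.1.castSucc : Fin (n + 1))
          ∈ insert (Fin.last n) (F1.map Fin.castSuccEmb) :=
        Finset.mem_insert_of_mem (Finset.mem_map_of_mem _ j.2)
      have hne : (j.1.castSucc : Fin (n + 1)) ≠ Fin.last n :=
        (Fin.castSucc_lt_last j.1).ne
      have h5 := congrFun hsnd ⟨j.1.castSucc, hmem⟩
      simp only [coneToFun] at h5
      rw [dif_neg hne, dif_neg hne] at h5
      have hval := congrArg Fin.val h5
      simp only [Fin.coe_cast] at hval
      have harg : (⟨(j.1.castSucc).castPred hne, cone_mem_base hmem hne⟩ :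
          {a // a ∈ F1}) = j := by
        apply Subtype.ext
        apply Fin.ext
        simp
      have h7 := congrArg (fun z => ((y1 z : ℕ))) harg
      have h8 := congrArg (fun z => ((y2 z : ℕ))) harg
      exact Fin.ext (h7.symm.trans (hval.trans h8))
    subst ht
    subst hy
    rfl
  · rintro ⟨⟨F', hF'⟩, y'⟩
    obtain ⟨F, hF, rfl⟩ := Finset.mem_image.1 hF'
    refine ⟨(⟨⟨F, hF⟩, fun j =>
      y' ⟨j.1.castSucc, Finset.mem_insert_of_mem (Finset.mem_map_of_mem _ j.2)⟩⟩,
      y' ⟨Fin.last n, Finset.mem_insert_self _ _⟩), ?_⟩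
    refine Sigma.ext rfl (heq_of_eq ?_)
    funext i
    obtain ⟨iv, hiv⟩ := i
    by_cases h : iv = Fin.last n
    · subst h
      show dite _ _ _ = _
      rw [dif_pos rfl]
      apply Fin.ext
      simp only [Fin.coe_cast]
      rfl
    · show dite _ _ _ = _
      rw [dif_neg h]
      apply Fin.ext
      simp only [Fin.coe_cast]
      have harg : (⟨(iv.castPred h).castSucc,
          Finset.mem_insert_of_mem (Finset.mem_map_of_mem _ (cone_mem_base hiv h))⟩ :
          {a // a ∈ insert (Fin.last n) (F.map Fin.castSuccEmb)}) = ⟨iv, hiv⟩ :=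
        Subtype.ext (Fin.castSucc_castPred iv h)
      exact congrArg (fun z => ((y' z : ℕ))) harg

end Marginal

/-- Proposition 5.4: coning over a new vertex preserves compressedness.  If `P_{𝓕,d}` is
compressed, `𝓕′ = {F ∪ {n+1} : F ∈ 𝓕}` on the ground set `[n+1]`, and `d′` extends `d` by
any value `d′_{n+1} ≥ 1` at the new vertex, then `P_{𝓕′,d′}` is compressed. -/
theorem marginal_cone_compressed
    (n : ℕ) (𝓕 : Finset (Finset (Fin n))) (d : Fin n → ℕ) (hd : ∀ i, 1 ≤ d i)
    (h : IsCompressed (Set.range (margVec 𝓕 d)))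
    (d' : Fin (n + 1) → ℕ)
    (hd'c : ∀ i : Fin n, d' i.castSucc = d i)
    (hd'l : 1 ≤ d' (Fin.last n)) :
    IsCompressed (Set.range
      (margVec (𝓕.image fun F => insert (Fin.last n) (F.map Fin.castSuccEmb)) d')) := by
  classical
  have hdd : d = fun i => d' i.castSucc := funext fun i => (hd'c i).symm
  subst hdd
  have hpos : ∀ i : Fin (n + 1), 0 < d' i := by
    intro i
    refine Fin.lastCases ?_ ?_ i
    · exact hd'l
    · intro j
      exact hd j
  rcases 𝓕.eq_empty_or_nonempty with hFe | ⟨F0, hF0⟩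
  · subst hFe
    haveI he1 : IsEmpty {F // F ∈ (Finset.image
        (fun F => insert (Fin.last n) (F.map Fin.castSuccEmb))
        (∅ : Finset (Finset (Fin n))))} := by
      constructor
      rintro ⟨F', hF'⟩
      simp at hF'
    haveI he2 : IsEmpty (MargIndex (Finset.image
        (fun F => insert (Fin.last n) (F.map Fin.castSuccEmb))
        (∅ : Finset (Finset (Fin n)))) d') := by
      constructor
      intro p
      exact isEmptyElim p.1
    haveI : Subsingleton ((MargIndex (Finset.image
        (fun F => insert (Fin.last n) (F.map Fin.castSuccEmb))
        (∅ : Finset (Finset (Fin n)))) d') → ℝ) :=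
      ⟨fun f g => funext fun p => isEmptyElim p⟩
    apply isCompressed_of_subsingleton
    exact ⟨_, ⟨fun i => ⟨0, hpos i⟩, rfl⟩⟩
  · set m := d' (Fin.last n) with hm
    set A := Set.range (margVec 𝓕 (fun i => d' i.castSucc)) with hA
    have hAne : A.Nonempty := ⟨_, ⟨fun i => ⟨0, hd i⟩, rfl⟩⟩
    set w : ((MargIndex 𝓕 (fun i => d' i.castSucc)) → ℝ) →ₗ[ℝ] ℝ :=
      ∑ y : ((i : {a // a ∈ F0}) → Fin (d' i.1.castSucc)),
        LinearMap.proj (⟨⟨F0, hF0⟩, y⟩ : MargIndex 𝓕 (fun i => d' i.castSucc)) with hwdef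
    have hw : ∀ a ∈ A, w a = 1 := by
      rintro _ ⟨x, rfl⟩
      rw [hwdef]
      refine (LinearMap.sum_apply Finset.univ (fun y : ((i : {a // a ∈ F0}) → Fin (d' i.1.castSucc)) =>
        (LinearMap.proj (⟨⟨F0, hF0⟩, y⟩ : MargIndex 𝓕 (fun i => d' i.castSucc)) :
          ((MargIndex 𝓕 (fun i => d' i.castSucc)) → ℝ) →ₗ[ℝ] ℝ))
        (margVec 𝓕 (fun i => d' i.castSucc) x)).trans ?_
      have e1 : ∀ y : ((i : {a // a ∈ F0}) → Fin (d' i.1.castSucc)),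
          (LinearMap.proj (R := ℝ)
            (⟨⟨F0, hF0⟩, y⟩ : MargIndex 𝓕 (fun i => d' i.castSucc)))
            (margVec 𝓕 (fun i => d' i.castSucc) x)
          = if y = (fun i : {a // a ∈ F0} => x i.1) then (1:ℝ) else 0 := by
        intro y
        show (if (∀ i : {a // a ∈ F0}, x i.1 = y i) then (1:ℝ) else 0) = _
        refine if_congr ?_ rfl rfl
        constructor
        · intro hxy
          funext i
          exact (hxy i).symm
        · intro hxy i
          rw [hxy]
      have e3 : ∀ b : ((i : {a // a ∈ F0}) → Fin (d' i.1.castSucc)),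
          b ≠ (fun i : {a // a ∈ F0} => x i.1) →
          (LinearMap.proj (R := ℝ)
            (⟨⟨F0, hF0⟩, b⟩ : MargIndex 𝓕 (fun i => d' i.castSucc)))
            (margVec 𝓕 (fun i => d' i.castSucc) x) = 0 := by
        intro b hb
        show (if (∀ i : {a // a ∈ F0}, x i.1 = b i) then (1:ℝ) else 0) = 0
        rw [if_neg]
        intro hxb
        exact hb (funext fun i => (hxb i).symm)
      have e4 : (LinearMap.proj (R := ℝ)
          (⟨⟨F0, hF0⟩, (fun i : {a // a ∈ F0} => x i.1)⟩ :
            MargIndex 𝓕 (fun i => d' i.castSucc)))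
            (margVec 𝓕 (fun i => d' i.castSucc) x) = 1 := by
        show (if (∀ i : {a // a ∈ F0}, x i.1 = x i.1) then (1:ℝ) else 0) = 1
        rw [if_pos (fun i => rfl)]
      exact (Fintype.sum_eq_single _ e3).trans e4
    set ε : MargIndex (𝓕.image fun F => insert (Fin.last n) (F.map Fin.castSuccEmb)) d'
        ≃ (MargIndex 𝓕 (fun i => d' i.castSucc) × Fin m) :=
      (Equiv.ofBijective _ (coneToFun_bijective 𝓕 d')).symm with hε
    set σ := LinearEquiv.funCongrLeft ℝ ℝ ε with hσ
    have hσap : ∀ (v : (MargIndex 𝓕 (fun i => d' i.castSucc) × Fin m) → ℝ) p',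
        σ v p' = v (ε p') := fun v p' => rfl
    have hεcone : ∀ q, ε (coneToFun 𝓕 d' q) = q := fun q =>
      (Equiv.ofBijective _ (coneToFun_bijective 𝓕 d')).symm_apply_apply q
    have hPW : ∀ (x : ∀ i : Fin n, Fin (d' i.castSucc)) (t : Fin m),
        margVec (𝓕.image fun F => insert (Fin.last n) (F.map Fin.castSuccEmb)) d'
            (Fin.lastCases (motive := fun i => Fin (d' i)) t x)
          = σ (iotaMap t (margVec 𝓕 (fun i => d' i.castSucc) x)) := by
      intro x t
      funext p'
      obtain ⟨q, rfl⟩ := (coneToFun_bijective 𝓕 d').2 p'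
      rw [hσap, hεcone]
      obtain ⟨⟨⟨F, hF⟩, y⟩, s⟩ := q
      simp only [margVec, iotaMap, LinearMap.coe_mk, AddHom.coe_mk]
      by_cases hst : s = t
      · rw [if_pos hst]
        refine if_congr ?_ rfl rfl
        constructor
        · intro hC' i
          have hne : (i.1.castSucc : Fin (n + 1)) ≠ Fin.last n :=
            (Fin.castSucc_lt_last i.1).ne
          have hmem : (i.1.castSucc : Fin (n + 1))
              ∈ insert (Fin.last n) (F.map Fin.castSuccEmb) :=
            Finset.mem_insert_of_mem (Finset.mem_map_of_mem _ i.2)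
          have h5 := hC' ⟨i.1.castSucc, hmem⟩
          simp only [coneToFun] at h5
          rw [dif_neg hne] at h5
          rw [Fin.lastCases_castSucc] at h5
          have hval := congrArg Fin.val h5
          simp only [Fin.coe_cast] at hval
          have harg : (⟨(i.1.castSucc).castPred hne, cone_mem_base hmem hne⟩ :
              {a // a ∈ F}) = i := by
            apply Subtype.ext
            apply Fin.ext
            simp
          have h8 := congrArg (fun z => ((y z : ℕ))) harg
          exact Fin.ext (hval.trans h8)
        · intro hC i
          obtain ⟨iv, hiv⟩ := i
          show _ = dite _ _ _
          by_cases hlast : iv = Fin.last n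
          · subst hlast
            rw [dif_pos rfl]
            have hl : Fin.lastCases (motive := fun i => Fin (d' i)) t x (Fin.last n) = t :=
              Fin.lastCases_last
            apply Fin.ext
            simp only [Fin.coe_cast]
            exact (congrArg Fin.val hl).trans (congrArg Fin.val hst.symm)
          · rw [dif_neg hlast]
            apply Fin.ext
            simp only [Fin.coe_cast]
            have hiv' : iv = (iv.castPred hlast).castSucc :=
              (Fin.castSucc_castPred iv hlast).symm
            have h9 := congrArg
              (fun z => ((Fin.lastCases (motive := fun i => Fin (d' i)) t x z : ℕ))) hiv'
            have h10' : Fin.lastCases (motive := fun i => Fin (d' i)) t x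
                ((iv.castPred hlast).castSucc) = x (iv.castPred hlast) :=
              Fin.lastCases_castSucc _
            have h10 := congrArg Fin.val h10'
            have h11 := congrArg Fin.val (hC ⟨iv.castPred hlast, cone_mem_base hiv hlast⟩)
            exact (h9.trans h10).trans h11
      · rw [if_neg hst]
        have hnC' : ¬ (∀ i : {a // a ∈ (coneToFun 𝓕 d' (⟨⟨F, hF⟩, y⟩, s)).1.1},
            Fin.lastCases (motive := fun i => Fin (d' i)) t x i.1
              = (coneToFun 𝓕 d' (⟨⟨F, hF⟩, y⟩, s)).2 i) := by
          intro hC'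
          have h5 := hC' ⟨Fin.last n, Finset.mem_insert_self _ _⟩
          simp only [coneToFun] at h5
          rw [dif_pos trivial] at h5
          rw [Fin.lastCases_last] at h5
          have hval := congrArg Fin.val h5
          simp only [Fin.coe_cast] at hval
          exact hst (Fin.ext hval.symm)
        rw [if_neg hnC']
    have hset : Set.range (margVec
          (𝓕.image fun F => insert (Fin.last n) (F.map Fin.castSuccEmb)) d')
        = σ '' (⋃ t : Fin m, iotaMap t '' A) := by
      apply Set.eq_of_subset_of_subset
      · rintro _ ⟨x', rfl⟩
        have hx' : x' = Fin.lastCases (motive := fun i => Fin (d' i))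
            (x' (Fin.last n)) (fun i => x' i.castSucc) := by
          funext i
          refine Fin.lastCases ?_ ?_ i
          · rw [Fin.lastCases_last]
          · intro j
            rw [Fin.lastCases_castSucc]
        rw [hx', hPW]
        refine ⟨_, ?_, rfl⟩
        exact Set.mem_iUnion.2 ⟨x' (Fin.last n),
          Set.mem_image_of_mem _ (Set.mem_range_self _)⟩
      · rintro _ ⟨v, hv, rfl⟩
        simp only [Set.mem_iUnion, Set.mem_image, hA, Set.mem_range] at hv
        obtain ⟨t, a, ⟨x, rfl⟩, rfl⟩ := hv
        exact ⟨Fin.lastCases (motive := fun i => Fin (d' i)) t x, hPW x t⟩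
    rw [hset]
    exact IsCompressed.image σ (isCompressed_join A hAne w hw h)
end
end

section
/- Let Δ be a simplicial complex on [n] = {1,…,n} (a family of subsets of [n] closed under taking subsets) and let d : [n] → ℕ with d_i ≥ 1. Suppose Δ is reducible with decomposition (Δ₁, S, Δ₂): there are vertex subsets W₁, W₂ ⊆ [n] with Δ₁ = {F ∈ Δ : F ⊆ W₁} and Δ₂ = {F ∈ Δ : F ⊆ W₂} (induced subcomplexes), S ⊆ [n], Δ₁ ∪ Δ₂ = Δ, and Δ₁ ∩ Δ₂ = 2^S (the full power set of S). If the marginal polytopes P_{Δ₁, d|W₁} and P_{Δ₂, d|W₂} are compressed, then the marginal polytope P_{Δ,d} is compressed. (Proposition 5.5 of the paper.) -/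
noncomputable section

/-- The facets (maximal faces) of a finite family `Δ` of finite sets. -/
def facets {ι : Type*} [DecidableEq ι] (Δ : Finset (Finset ι)) : Finset (Finset ι) :=
  Δ.filter fun F => ∀ G ∈ Δ, F ⊆ G → F = G


set_option linter.unusedSectionVars false
set_option linter.unusedVariables false

section Aux

lemma facets_subset {ι : Type*} [DecidableEq ι] {Δ : Finset (Finset ι)} : facets Δ ⊆ Δ :=
  Finset.filter_subset _ _

lemma mem_facets_iff {ι : Type*} [DecidableEq ι] {Δ : Finset (Finset ι)} {F : Finset ι} :
    F ∈ facets Δ ↔ F ∈ Δ ∧ ∀ G ∈ Δ, F ⊆ G → F = G := Finset.mem_filter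

lemma exists_facet_superset {ι : Type*} [DecidableEq ι] {Δ : Finset (Finset ι)} {G : Finset ι}
    (hG : G ∈ Δ) : ∃ F ∈ facets Δ, G ⊆ F := by
  obtain ⟨F, hF, hmax⟩ := (Δ.filter (G ⊆ ·)).exists_max_image Finset.card
    ⟨G, by simp [hG]⟩
  rw [Finset.mem_filter] at hF
  refine ⟨F, mem_facets_iff.mpr ⟨hF.1, fun H hH hFH => ?_⟩, hF.2⟩
  exact Finset.eq_of_subset_of_card_le hFH
    (hmax H (Finset.mem_filter.mpr ⟨hH, hF.2.trans hFH⟩))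

/-- A chosen facet of `Δ` containing a given face. -/
def superFacet {ι : Type*} [DecidableEq ι] (Δ : Finset (Finset ι)) (G : Finset ι) : Finset ι :=
  if h : ∃ F ∈ facets Δ, G ⊆ F then h.choose else ∅

lemma superFacet_spec {ι : Type*} [DecidableEq ι] {Δ : Finset (Finset ι)} {G : Finset ι}
    (hG : G ∈ Δ) : superFacet Δ G ∈ facets Δ ∧ G ⊆ superFacet Δ G := by
  have h : ∃ F ∈ facets Δ, G ⊆ F := exists_facet_superset hG
  rw [superFacet, dif_pos h]
  exact ⟨h.choose_spec.1, h.choose_spec.2⟩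

/-- Collapse of a sum over sections of a face against the membership indicator. -/
lemma sum_collapse_ind {ι : Type*} [Fintype ι] [DecidableEq ι] (F : Finset ι) (dd : ι → ℕ)
    (x : (i : {a // a ∈ F}) → Fin (dd i.1))
    (P : ((i : {a // a ∈ F}) → Fin (dd i.1)) → Prop) [DecidablePred P]
    [Decidable (∀ y : ((i : {a // a ∈ F}) → Fin (dd i.1)), True)] :
    ∀ [inst : ∀ y : ((i : {a // a ∈ F}) → Fin (dd i.1)), Decidable (∀ i, x i = y i)],
    (∑ y : ((i : {a // a ∈ F}) → Fin (dd i.1)),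
      (if P y then (if (∀ i, x i = y i) then (1:ℝ) else 0) else 0)) = if P x then 1 else 0 := by
  intro inst
  have hterm : ∀ y, (if P y then (if (∀ i, x i = y i) then (1:ℝ) else 0) else 0)
      = if (∀ i, x i = y i) then (if P y then (1:ℝ) else 0) else 0 := by
    intro y
    by_cases h1 : P y <;> by_cases h2 : ∀ i, x i = y i <;> simp [h1, h2]
  rw [Finset.sum_congr rfl fun y _ => hterm y]
  rw [Fintype.sum_eq_single x]
  · simp
  · intro y hy
    rw [if_neg]
    intro h
    exact hy (funext fun i => (h i).symm)

end Aux

lemma margIdx_sum_apply {ι κ : Type*} {𝓕 : Finset (Finset ι)} {dd : ι → ℕ} (s : Finset κ)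
    (g : κ → MargIndex 𝓕 dd → ℝ) (a : (F : {F // F ∈ 𝓕}) × ((i : {a // a ∈ F.1}) → Fin (dd i.1))) :
    (∑ c ∈ s, g c) a = ∑ c ∈ s, g c a :=
  Finset.sum_apply _ _ _

lemma margIdx_smul_apply {ι : Type*} {𝓕 : Finset (Finset ι)} {dd : ι → ℕ} (r : ℝ)
    (g : MargIndex 𝓕 dd → ℝ) (a : (F : {F // F ∈ 𝓕}) × ((i : {a // a ∈ F.1}) → Fin (dd i.1))) :
    (r • g) a = r * g a :=
  rfl

section Marg
open Finset

variable {n : ℕ} (Δ : Finset (Finset (Fin n))) (d : Fin n → ℕ)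

/-- The induced subcomplex on `W`, as a family of subsets of the subtype. -/
def sideFam (W : Finset (Fin n)) : Finset (Finset {a // a ∈ W}) :=
  (Δ.filter (· ⊆ W)).image (Finset.subtype (· ∈ W))

def unsub {W : Finset (Fin n)} (F : Finset {a // a ∈ W}) : Finset (Fin n) :=
  F.map (Function.Embedding.subtype _)

lemma mem_unsub {W : Finset (Fin n)} {F : Finset {a // a ∈ W}} {i : {a // a ∈ W}} :
    i.1 ∈ unsub F ↔ i ∈ F := Finset.mem_map' _

lemma unsub_mem {W : Finset (Fin n)} {F : Finset {a // a ∈ W}} (hF : F ∈ sideFam Δ W) :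
    unsub F ∈ Δ ∧ unsub F ⊆ W ∧ (unsub F).subtype (· ∈ W) = F := by
  rw [sideFam, Finset.mem_image] at hF
  obtain ⟨G, hG, rfl⟩ := hF
  rw [Finset.mem_filter] at hG
  have hun : unsub (G.subtype (· ∈ W)) = G := by
    rw [unsub, Finset.subtype_map_of_mem (fun x hx => hG.2 hx)]
  rw [hun]
  exact ⟨hG.1, hG.2, rfl⟩

def restr (W : Finset (Fin n)) (x : ∀ i, Fin (d i)) : (i : {a // a ∈ W}) → Fin (d i.1) :=
  fun i => x i.1

open Classical in
def rhoFun (W : Finset (Fin n)) (p : MargIndex (facets Δ) d → ℝ)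
    (q : MargIndex (facets (sideFam Δ W)) (fun i : {a // a ∈ W} => d i.1)) : ℝ :=
  ∑ y : ((i : {a // a ∈ superFacet Δ (unsub q.1.1)}) → Fin (d i.1)),
    if (∀ i : {a // a ∈ q.1.1}, y ⟨i.1.1,
          (superFacet_spec (unsub_mem Δ (facets_subset q.1.2)).1).2 (mem_unsub.mpr i.2)⟩ = q.2 i)
    then p ⟨⟨superFacet Δ (unsub q.1.1),
        (superFacet_spec (unsub_mem Δ (facets_subset q.1.2)).1).1⟩, y⟩
    else 0

set_option maxHeartbeats 1000000 in
def rho (W : Finset (Fin n)) : (MargIndex (facets Δ) d → ℝ) →ₗ[ℝ]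
    (MargIndex (facets (sideFam Δ W)) (fun i : {a // a ∈ W} => d i.1) → ℝ) where
  toFun := rhoFun Δ d W
  map_add' p p' := by
    funext q
    show rhoFun Δ d W (p + p') q = rhoFun Δ d W p q + rhoFun Δ d W p' q
    rw [rhoFun, rhoFun, rhoFun, ← Finset.sum_add_distrib]
    exact Finset.sum_congr rfl fun y _ => by split <;> [rfl; simp]
  map_smul' c p := by
    funext q
    show rhoFun Δ d W (c • p) q = c * rhoFun Δ d W p q
    rw [rhoFun, rhoFun, Finset.mul_sum]
    exact Finset.sum_congr rfl fun y _ => by split <;> [rfl; simp]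

end Marg

section Marg2
open Finset
variable {n : ℕ} (Δ : Finset (Finset (Fin n))) (d : Fin n → ℕ)

set_option maxHeartbeats 1000000 in
lemma rho_margVec (W : Finset (Fin n)) (x : ∀ i, Fin (d i)) :
    rho Δ d W (margVec (facets Δ) d x)
      = margVec (facets (sideFam Δ W)) (fun i : {a // a ∈ W} => d i.1) (restr d W x) := by
  funext q
  show rhoFun Δ d W _ q = _
  rw [rhoFun]
  simp only [margVec]
  rw [sum_collapse_ind (superFacet Δ (unsub q.1.1)) d (fun i => x i.1)]
  rfl
end Marg2

section Marg3
open Finset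
variable {n : ℕ} (Δ : Finset (Finset (Fin n))) (d : Fin n → ℕ)

lemma subtype_mem_facets {W F : Finset (Fin n)} (hF : F ∈ facets Δ) (hFW : F ⊆ W) :
    F.subtype (· ∈ W) ∈ facets (sideFam Δ W) := by
  rw [mem_facets_iff] at hF ⊢
  constructor
  · exact Finset.mem_image_of_mem _ (Finset.mem_filter.mpr ⟨hF.1, hFW⟩)
  · intro G hG hFG
    obtain ⟨hGΔ, hGW, hGsub⟩ := unsub_mem Δ hG
    have hFsub : F ⊆ unsub G := by
      intro a ha
      have : (⟨a, hFW ha⟩ : {x // x ∈ W}) ∈ G := hFG (Finset.mem_subtype.mpr ha)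
      exact mem_unsub.mpr this
    have : F = unsub G := hF.2 _ hGΔ hFsub
    rw [← hGsub, ← this]

set_option maxHeartbeats 1000000 in
/-- Coordinate recovery: on linear combinations of marginal vectors, the coordinate of the
original vector at a facet `F ⊆ W` can be read off from its image under `rho`. -/
lemma rho_comb_coord {W : Finset (Fin n)} {ι : Type*} [Fintype ι] (c : ι → ℝ)
    (g : ι → ∀ i, Fin (d i)) {F : Finset (Fin n)} (hF : F ∈ facets Δ) (hFW : F ⊆ W)
    (y : (i : {a // a ∈ F}) → Fin (d i.1)) :
    rho Δ d W (∑ i, c i • margVec (facets Δ) d (g i))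
        ⟨⟨F.subtype (· ∈ W), subtype_mem_facets Δ hF hFW⟩,
          fun i => y ⟨i.1.1, Finset.mem_subtype.mp i.2⟩⟩
      = (∑ i, c i • margVec (facets Δ) d (g i)) ⟨⟨F, hF⟩, y⟩ := by
  rw [map_sum]
  simp only [LinearMap.map_smul, rho_margVec, Finset.sum_apply, Pi.smul_apply, smul_eq_mul,
    margVec, margIdx_sum_apply, margIdx_smul_apply]
  refine Finset.sum_congr rfl fun i _ => ?_
  congr 1
  refine if_congr ?_ rfl rfl
  constructor
  · intro h j
    exact h ⟨⟨j.1, hFW j.2⟩, Finset.mem_subtype.mpr j.2⟩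
  · intro h i
    exact h ⟨i.1.1, Finset.mem_subtype.mp i.2⟩

open Classical in
def sigmaFun (W S : Finset (Fin n)) (hSW : S ⊆ W) (hS : S.subtype (· ∈ W) ∈ sideFam Δ W)
    (p : MargIndex (facets (sideFam Δ W)) (fun i : {a // a ∈ W} => d i.1) → ℝ)
    (s : (i : {a // a ∈ S}) → Fin (d i.1)) : ℝ :=
  ∑ y : ((i : {a // a ∈ superFacet (sideFam Δ W) (S.subtype (· ∈ W))}) → Fin (d i.1.1)),
    if (∀ i : {a // a ∈ S}, y ⟨⟨i.1, hSW i.2⟩,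
          (superFacet_spec hS).2 (Finset.mem_subtype.mpr i.2)⟩ = s i)
    then p ⟨⟨superFacet (sideFam Δ W) (S.subtype (· ∈ W)), (superFacet_spec hS).1⟩, y⟩
    else 0

set_option maxHeartbeats 1000000 in
lemma sigma_margVec (W S : Finset (Fin n)) (hSW : S ⊆ W)
    (hS : S.subtype (· ∈ W) ∈ sideFam Δ W)
    (x₁ : (i : {a // a ∈ W}) → Fin (d i.1)) (s : (i : {a // a ∈ S}) → Fin (d i.1)) :
    sigmaFun Δ d W S hSW hS (margVec (facets (sideFam Δ W)) (fun i : {a // a ∈ W} => d i.1) x₁) s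
      = if (∀ i : {a // a ∈ S}, x₁ ⟨i.1, hSW i.2⟩ = s i) then 1 else 0 := by
  rw [sigmaFun]
  simp only [margVec]
  rw [sum_collapse_ind (superFacet (sideFam Δ W) (S.subtype (· ∈ W)))
    (fun a : {a // a ∈ W} => d a.1) (fun i => x₁ i.1)]

set_option maxHeartbeats 1000000 in
lemma sigma_comb (W S : Finset (Fin n)) (hSW : S ⊆ W)
    (hS : S.subtype (· ∈ W) ∈ sideFam Δ W) {ι : Type*} [Fintype ι] (c : ι → ℝ)
    (v : ι → (MargIndex (facets (sideFam Δ W)) (fun i : {a // a ∈ W} => d i.1) → ℝ))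
    (s : (i : {a // a ∈ S}) → Fin (d i.1)) :
    sigmaFun Δ d W S hSW hS (∑ i, c i • v i) s = ∑ i, c i * sigmaFun Δ d W S hSW hS (v i) s := by
  rw [sigmaFun]
  simp only [Finset.sum_apply, Pi.smul_apply, smul_eq_mul, margIdx_sum_apply, margIdx_smul_apply]
  have hsplit : ∀ (P : Prop) [Decidable P] (t : ι → ℝ),
      (if P then (∑ i, t i) else 0) = ∑ i, if P then t i else 0 := by
    intro P _ t; split
    · rfl
    · simp
  rw [Finset.sum_congr rfl fun y _ => hsplit _ _]
  rw [Finset.sum_comm]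
  refine Finset.sum_congr rfl fun i _ => ?_
  rw [sigmaFun, Finset.mul_sum]
  refine Finset.sum_congr rfl fun y _ => ?_
  split <;> simp
end Marg3

section Glue
open Finset

/-- Row sums of the conditional-independence coupling. -/
lemma nu_row_sum {α β γ : Type*} [Fintype β] [DecidableEq γ] (f : α → γ) (g : β → γ)
    (w₁ : α → ℝ) (w₂ : β → ℝ) (m : γ → ℝ)
    (hB : ∀ a : α, ∑ b ∈ Finset.univ.filter (fun b => f a = g b), w₂ b = m (f a))
    (hzero : ∀ a : α, m (f a) = 0 → w₁ a = 0) (a : α)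
    [∀ b, Decidable (f a = g b ∧ m (f a) ≠ 0)] :
    ∑ b, (if f a = g b ∧ m (f a) ≠ 0 then w₁ a * w₂ b / m (f a) else 0) = w₁ a := by
  classical
  by_cases hm : m (f a) = 0
  · rw [Finset.sum_eq_zero fun b _ => by simp [hm], hzero a hm]
  · have hterm : ∀ b, (if f a = g b ∧ m (f a) ≠ 0 then w₁ a * w₂ b / m (f a) else 0)
        = (w₁ a / m (f a)) * (if f a = g b then w₂ b else 0) := by
      intro b
      by_cases hb : f a = g b
      · rw [if_pos ⟨hb, hm⟩, if_pos hb]; ring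
      · rw [if_neg (fun h => hb h.1), if_neg hb, mul_zero]
    rw [Finset.sum_congr rfl fun b _ => hterm b, ← Finset.mul_sum, ← Finset.sum_filter, hB a,
      div_mul_cancel₀ _ hm]

end Glue

section Convex

variable {ι V W : Type*} [Fintype ι] [Nonempty ι]
  [AddCommGroup V] [Module ℝ V] [AddCommGroup W] [Module ℝ W]

lemma mem_convexHull_range_iff (f : ι → V) (p : V) :
    p ∈ convexHull ℝ (Set.range f) ↔
      ∃ w : ι → ℝ, (∀ i, 0 ≤ w i) ∧ ∑ i, w i = 1 ∧ p = ∑ i, w i • f i := by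
  classical
  constructor
  · intro hp
    obtain ⟨κ', _, w, z, hw0, hw1, hz, hx⟩ := mem_convexHull_iff_exists_fintype.mp hp
    choose g hg using fun i => (hz i)
    refine ⟨fun a => ∑ i ∈ Finset.univ.filter (g · = a), w i,
      fun a => Finset.sum_nonneg fun i _ => hw0 i, ?_, ?_⟩
    · rw [Finset.sum_fiberwise_of_maps_to (fun x _ => Finset.mem_univ (g x)) w]
      exact hw1
    · rw [← hx]
      rw [← Finset.sum_fiberwise_of_maps_to (fun x _ => Finset.mem_univ (g x))
        (fun i => w i • z i)]
      refine (Finset.sum_congr rfl fun a _ => ?_).symm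
      rw [Finset.sum_smul]
      refine Finset.sum_congr rfl fun i hi => ?_
      rw [Finset.mem_filter] at hi
      rw [← hg i, hi.2]
  · rintro ⟨w, hw0, hw1, rfl⟩
    exact mem_convexHull_of_exists_fintype w f hw0 hw1 (fun i => Set.mem_range_self i) rfl

lemma affineMap_map_combination (π : V →ᵃ[ℝ] W) (f : ι → V) (c : ι → ℝ)
    (hc : ∑ i, c i = 1) :
    π (∑ i, c i • f i) = ∑ i, c i • π (f i) := by
  have h1 := Finset.univ.affineCombination_eq_linear_combination f c hc
  have h2 := Finset.univ.affineCombination_eq_linear_combination (π ∘ f) c hc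
  rw [← h1, Finset.univ.map_affineCombination f c hc π, h2]
  rfl

lemma comb_mem_affineSpan (f : ι → V) {s : Set V} (hf : ∀ i, f i ∈ s) (c : ι → ℝ)
    (hc : ∑ i, c i = 1) : (∑ i, c i • f i) ∈ affineSpan ℝ s := by
  rw [← Finset.univ.affineCombination_eq_linear_combination f c hc]
  exact affineSpan_mono ℝ (Set.range_subset_iff.mpr hf) (affineCombination_mem_affineSpan hc f)

lemma mem_affineSpan_range (f : ι → V) {q : V} (hq : q ∈ affineSpan ℝ (Set.range f)) :
    ∃ c : ι → ℝ, ∑ i, c i = 1 ∧ q = ∑ i, c i • f i := by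
  obtain ⟨w, hw, hrep⟩ := eq_affineCombination_of_mem_affineSpan_of_fintype hq
  exact ⟨w, hw, by rw [hrep, Finset.univ.affineCombination_eq_linear_combination f w hw]⟩

/-- An affine map injective on the convex hull of a finite range is injective on affine
combinations of the range. -/
lemma comb_eq_of_injOn_hull (f : ι → V) (π : V →ᵃ[ℝ] W)
    (hinj : Set.InjOn π (convexHull ℝ (Set.range f)))
    {c c' : ι → ℝ} (hc : ∑ i, c i = 1) (hc' : ∑ i, c' i = 1)
    (h : π (∑ i, c i • f i) = π (∑ i, c' i • f i)) :
    (∑ i, c i • f i) = ∑ i, c' i • f i := by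
  classical
  set nn : ℝ := (Fintype.card ι : ℝ) with hnn
  have hn1 : (1 : ℝ) ≤ nn := by
    rw [hnn]; exact_mod_cast Fintype.card_pos
  have hnpos : (0 : ℝ) < nn := lt_of_lt_of_le one_pos hn1
  set B : ℝ := 1 + ∑ i, (|c i| + |c' i|) with hB
  have hB1 : (1 : ℝ) ≤ B := by
    have : (0:ℝ) ≤ ∑ i, (|c i| + |c' i|) :=
      Finset.sum_nonneg fun i _ => add_nonneg (abs_nonneg _) (abs_nonneg _)
    simp only [hB]; linarith
  have hBpos : (0:ℝ) < B := lt_of_lt_of_le one_pos hB1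
  set t : ℝ := (nn * B)⁻¹ with ht
  have htpos : 0 < t := inv_pos.mpr (mul_pos hnpos hBpos)
  have habs : ∀ i, |c i| ≤ B - 1 ∧ |c' i| ≤ B - 1 := by
    intro i
    have h1 : |c i| + |c' i| ≤ ∑ j, (|c j| + |c' j|) :=
      Finset.single_le_sum (f := fun j => |c j| + |c' j|)
        (fun j _ => add_nonneg (abs_nonneg _) (abs_nonneg _)) (Finset.mem_univ i)
    constructor <;> [skip; skip] <;>
      (first
        | (have := abs_nonneg (c' i); simp only [hB]; linarith)
        | (have := abs_nonneg (c i); simp only [hB]; linarith))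
  have comb : ∀ e : ι → ℝ, ∑ i, ((1-t) * nn⁻¹ + t * e i) • f i
      = (1-t) • (∑ i, (nn⁻¹:ℝ) • f i) + t • ∑ i, e i • f i := by
    intro e
    rw [Finset.smul_sum, Finset.smul_sum, ← Finset.sum_add_distrib]
    exact Finset.sum_congr rfl fun i _ => by rw [add_smul, smul_smul, smul_smul]
  have sum1 : ∀ e : ι → ℝ, (∑ i, e i = 1) → ∑ i, ((1-t) * nn⁻¹ + t * e i) = 1 := by
    intro e he
    rw [Finset.sum_add_distrib, ← Finset.mul_sum, ← Finset.mul_sum, he, mul_one,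
      Finset.sum_const, Finset.card_univ, nsmul_eq_mul, ← hnn]
    field_simp
    ring
  have nonneg : ∀ (e : ι → ℝ), (∀ i, |e i| ≤ B - 1) → ∀ i, 0 ≤ (1-t) * nn⁻¹ + t * e i := by
    intro e he i
    have hkey : (1-t)*nn⁻¹ - t*(B-1) = nn⁻¹*B⁻¹*(1 - nn⁻¹) := by
      rw [ht]; field_simp; ring
    have hinv1 : nn⁻¹ ≤ 1 := by
      rw [inv_le_one_iff₀]; right; exact hn1
    have hpos2 : 0 ≤ nn⁻¹*B⁻¹*(1 - nn⁻¹) := by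
      have : (0:ℝ) ≤ 1 - nn⁻¹ := by linarith
      positivity
    have hte : t * (-(B-1)) ≤ t * e i :=
      mul_le_mul_of_nonneg_left (by have := (abs_le.mp (he i)).1; linarith) htpos.le
    nlinarith
  set b : V := ∑ i, (nn⁻¹:ℝ) • f i with hb
  set q : V := ∑ i, c i • f i with hq
  set q' : V := ∑ i, c' i • f i with hq'
  have hmem : ∀ (e : ι → ℝ), (∑ i, e i = 1) → (∀ i, 0 ≤ e i) →
      (∑ i, e i • f i) ∈ convexHull ℝ (Set.range f) := fun e he h0 =>
    mem_convexHull_of_exists_fintype e f h0 he (fun i => Set.mem_range_self i) rfl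
  have hπq : ∑ i, c i • π (f i) = ∑ i, c' i • π (f i) := by
    rw [← affineMap_map_combination π f c hc, ← affineMap_map_combination π f c' hc', h]
  have hπeq : π (∑ i, ((1-t) * nn⁻¹ + t * c i) • f i)
      = π (∑ i, ((1-t) * nn⁻¹ + t * c' i) • f i) := by
    rw [affineMap_map_combination π f _ (sum1 c hc),
      affineMap_map_combination π f _ (sum1 c' hc')]
    simp only [add_smul, Finset.sum_add_distrib]
    congr 1
    simp only [mul_smul]
    rw [← Finset.smul_sum, ← Finset.smul_sum, hπq]
  have heq := hinj
    (hmem _ (sum1 c hc) (nonneg c (fun i => (habs i).1)))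
    (hmem _ (sum1 c' hc') (nonneg c' (fun i => (habs i).2))) hπeq
  rw [comb c, comb c'] at heq
  have : t • q = t • q' := by
    rw [hq, hq']
    exact add_left_cancel heq
  have := smul_right_injective V (ne_of_gt htpos) this
  rw [hq, hq'] at this
  exact this

end Convex

set_option maxHeartbeats 4000000 in
/-- Proposition 5.5: marginal polytope of a reducible complex with compressed pieces is
compressed. -/
theorem marginal_reducible_compressed
    (n : ℕ) (Δ : Finset (Finset (Fin n)))
    (hcomplex : ∀ F ∈ Δ, ∀ G ⊆ F, G ∈ Δ)
    (d : Fin n → ℕ) (hd : ∀ i, 1 ≤ d i)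
    (W₁ W₂ S : Finset (Fin n))
    (Δ₁ Δ₂ : Finset (Finset (Fin n)))
    (hΔ₁ : Δ₁ = Δ.filter (· ⊆ W₁))
    (hΔ₂ : Δ₂ = Δ.filter (· ⊆ W₂))
    (hunion : Δ₁ ∪ Δ₂ = Δ)
    (hinter : Δ₁ ∩ Δ₂ = S.powerset)
    (h1 : IsCompressed (Set.range
      (margVec (facets (Δ₁.image (Finset.subtype (· ∈ W₁))))
        (fun i : {a // a ∈ W₁} => d i.1))))
    (h2 : IsCompressed (Set.range
      (margVec (facets (Δ₂.image (Finset.subtype (· ∈ W₂))))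
        (fun i : {a // a ∈ W₂} => d i.1)))) :
    IsCompressed (Set.range (margVec (facets Δ) d)) := by
  classical
  subst hΔ₁ hΔ₂
  -- rephrase the hypotheses in terms of `sideFam`
  replace h1 : IsCompressed (Set.range
      (margVec (facets (sideFam Δ W₁)) (fun i : {a // a ∈ W₁} => d i.1))) := h1
  replace h2 : IsCompressed (Set.range
      (margVec (facets (sideFam Δ W₂)) (fun i : {a // a ∈ W₂} => d i.1))) := h2
  -- basic combinatorial facts
  have hSmem : S ∈ Δ.filter (· ⊆ W₁) ∩ Δ.filter (· ⊆ W₂) := by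
    rw [hinter]; exact Finset.mem_powerset_self S
  have hSΔ : S ∈ Δ := (Finset.mem_filter.mp (Finset.mem_inter.mp hSmem).1).1
  have hSW₁ : S ⊆ W₁ := (Finset.mem_filter.mp (Finset.mem_inter.mp hSmem).1).2
  have hSW₂ : S ⊆ W₂ := (Finset.mem_filter.mp (Finset.mem_inter.mp hSmem).2).2
  have hSi₁ : S.subtype (· ∈ W₁) ∈ sideFam Δ W₁ :=
    Finset.mem_image_of_mem _ (Finset.mem_filter.mpr ⟨hSΔ, hSW₁⟩)
  have hSi₂ : S.subtype (· ∈ W₂) ∈ sideFam Δ W₂ :=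
    Finset.mem_image_of_mem _ (Finset.mem_filter.mpr ⟨hSΔ, hSW₂⟩)
  have hact : ∀ F ∈ Δ, ∀ i ∈ F, i ∈ W₁ → i ∈ W₂ → i ∈ S := by
    intro F hF i hi h1' h2'
    have hsing : {i} ∈ Δ := hcomplex F hF {i} (Finset.singleton_subset_iff.mpr hi)
    have : ({i} : Finset (Fin n)) ∈ S.powerset := by
      rw [← hinter]
      exact Finset.mem_inter.mpr
        ⟨Finset.mem_filter.mpr ⟨hsing, Finset.singleton_subset_iff.mpr h1'⟩,
         Finset.mem_filter.mpr ⟨hsing, Finset.singleton_subset_iff.mpr h2'⟩⟩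
    exact Finset.singleton_subset_iff.mp (Finset.mem_powerset.mp this)
  have hfacetside : ∀ F ∈ facets Δ, F ⊆ W₁ ∨ F ⊆ W₂ := by
    intro F hF
    have hFΔ : F ∈ Δ := facets_subset hF
    rw [← hunion] at hFΔ
    rcases Finset.mem_union.mp hFΔ with h | h
    · exact Or.inl (Finset.mem_filter.mp h).2
    · exact Or.inr (Finset.mem_filter.mp h).2
  obtain ⟨N₁, π₁, hinj₁, h01₁, hcs₁⟩ := h1
  obtain ⟨N₂, π₂, hinj₂, h01₂, hcs₂⟩ := h2
  -- abbreviations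
  haveI instX : Nonempty (∀ i : Fin n, Fin (d i)) := ⟨fun i => ⟨0, hd i⟩⟩
  haveI instX1 : Nonempty ((i : {a // a ∈ W₁}) → Fin (d i.1)) := ⟨fun i => ⟨0, hd i.1⟩⟩
  haveI instX2 : Nonempty ((i : {a // a ∈ W₂}) → Fin (d i.1)) := ⟨fun i => ⟨0, hd i.1⟩⟩
  set f := margVec (facets Δ) d with hf
  set f₁ := margVec (facets (sideFam Δ W₁)) (fun i : {a // a ∈ W₁} => d i.1) with hf₁
  set f₂ := margVec (facets (sideFam Δ W₂)) (fun i : {a // a ∈ W₂} => d i.1) with hf₂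
  -- the images of the two marginalization maps
  have himg₁ : ∀ p ∈ convexHull ℝ (Set.range f),
      rho Δ d W₁ p ∈ convexHull ℝ (Set.range f₁) := by
    intro p hp
    obtain ⟨w, hw0, hw1, rfl⟩ := (mem_convexHull_range_iff f p).mp hp
    rw [map_sum]
    simp only [LinearMap.map_smul, hf, rho_margVec]
    exact mem_convexHull_of_exists_fintype w _ hw0 hw1 (fun x => Set.mem_range_self _) rfl
  have himg₂ : ∀ p ∈ convexHull ℝ (Set.range f),
      rho Δ d W₂ p ∈ convexHull ℝ (Set.range f₂) := by
    intro p hp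
    obtain ⟨w, hw0, hw1, rfl⟩ := (mem_convexHull_range_iff f p).mp hp
    rw [map_sum]
    simp only [LinearMap.map_smul, hf, rho_margVec]
    exact mem_convexHull_of_exists_fintype w _ hw0 hw1 (fun x => Set.mem_range_self _) rfl
  -- joint injectivity of the two marginalization maps on combinations
  have hpairinj : ∀ (c c' : (∀ i, Fin (d i)) → ℝ),
      rho Δ d W₁ (∑ x, c x • f x) = rho Δ d W₁ (∑ x, c' x • f x) →
      rho Δ d W₂ (∑ x, c x • f x) = rho Δ d W₂ (∑ x, c' x • f x) →
      (∑ x, c x • f x) = ∑ x, c' x • f x := by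
    intro c c' hr1 hr2
    funext e
    obtain ⟨⟨F, hF⟩, y⟩ := e
    rcases hfacetside F hF with hFW | hFW
    · rw [← rho_comb_coord Δ d c (fun x => x) hF hFW y,
        ← rho_comb_coord Δ d c' (fun x => x) hF hFW y, hr1]
    · rw [← rho_comb_coord Δ d c (fun x => x) hF hFW y,
        ← rho_comb_coord Δ d c' (fun x => x) hF hFW y, hr2]
  -- the combined affine map
  refine ⟨N₁ + N₂, AffineMap.pi (fun k : Fin (N₁ + N₂) =>
    Fin.addCases (motive := fun _ => ((MargIndex (facets Δ) d → ℝ) →ᵃ[ℝ] ℝ))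
      (fun j => (AffineMap.proj j).comp (π₁.comp (rho Δ d W₁).toAffineMap))
      (fun j => (AffineMap.proj j).comp (π₂.comp (rho Δ d W₂).toAffineMap)) k), ?_, ?_, ?_⟩
  · -- injectivity on the hull
    intro p hp p' hp' heq
    have e1 : π₁ (rho Δ d W₁ p) = π₁ (rho Δ d W₁ p') := by
      funext j
      have := congrFun heq (Fin.castAdd N₂ j)
      simpa using this
    have e2 : π₂ (rho Δ d W₂ p) = π₂ (rho Δ d W₂ p') := by
      funext j
      have := congrFun heq (Fin.natAdd N₁ j)
      simpa using this
    have r1 : rho Δ d W₁ p = rho Δ d W₁ p' := hinj₁ (himg₁ p hp) (himg₁ p' hp') e1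
    have r2 : rho Δ d W₂ p = rho Δ d W₂ p' := hinj₂ (himg₂ p hp) (himg₂ p' hp') e2
    obtain ⟨w, hw0, hw1, rfl⟩ := (mem_convexHull_range_iff f p).mp hp
    obtain ⟨w', hw0', hw1', rfl⟩ := (mem_convexHull_range_iff f p').mp hp'
    exact hpairinj w w' r1 r2
  · -- lattice points go to 0/1 points
    rintro p ⟨hphull, hpgrp⟩
    have hg : ∀ (W : Finset (Fin n)) v, v ∈ AddSubgroup.closure (Set.range f) →
        rho Δ d W v ∈ AddSubgroup.closure
          (Set.range (margVec (facets (sideFam Δ W)) (fun i : {a // a ∈ W} => d i.1))) := by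
      intro W v hv
      refine AddSubgroup.closure_induction ?_ ?_ ?_ ?_ hv
      · rintro x ⟨x₀, rfl⟩
        rw [hf, rho_margVec]
        exact AddSubgroup.subset_closure (Set.mem_range_self _)
      · rw [map_zero]; exact zero_mem _
      · intro a b _ _ ha hb
        rw [map_add]; exact add_mem ha hb
      · intro a _ ha
        rw [map_neg]; exact neg_mem ha
    have haddC : ∀ (P : Fin (N₁ + N₂) → Prop), (∀ j, P (Fin.castAdd N₂ j)) →
        (∀ j, P (Fin.natAdd N₁ j)) → ∀ k, P k := fun P hL hR k => Fin.addCases hL hR k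
    simp only [zeroOneSet, Set.mem_setOf_eq]
    refine haddC _ ?_ ?_
    · intro j
      have h01 := h01₁ (rho Δ d W₁ p) ⟨himg₁ p hphull, hg W₁ p hpgrp⟩ j
      simpa using h01
    · intro j
      have h01 := h01₂ (rho Δ d W₂ p) ⟨himg₂ p hphull, hg W₂ p hpgrp⟩ j
      simpa using h01
  · -- the image is a slice of the cube
    have haddC : ∀ (P : Fin (N₁ + N₂) → Prop), (∀ j, P (Fin.castAdd N₂ j)) →
        (∀ j, P (Fin.natAdd N₁ j)) → ∀ k, P k := fun P hL hR k => Fin.addCases hL hR k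
    apply Set.eq_of_subset_of_subset
    · rintro z ⟨p, hp, rfl⟩
      refine ⟨?_, subset_affineSpan ℝ _ (Set.mem_image_of_mem _ hp)⟩
      simp only [stdCube, Set.mem_setOf_eq]
      refine haddC _ ?_ ?_
      · intro j
        have hmem : π₁ (rho Δ d W₁ p) ∈ stdCube N₁ ∩
            (affineSpan ℝ (π₁ '' convexHull ℝ (Set.range f₁)) : Set (Fin N₁ → ℝ)) := by
          rw [← hcs₁]
          exact Set.mem_image_of_mem _ (himg₁ p hp)
        have := hmem.1 j
        simpa using this
      · intro j
        have hmem : π₂ (rho Δ d W₂ p) ∈ stdCube N₂ ∩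
            (affineSpan ℝ (π₂ '' convexHull ℝ (Set.range f₂)) : Set (Fin N₂ → ℝ)) := by
          rw [← hcs₂]
          exact Set.mem_image_of_mem _ (himg₂ p hp)
        have := hmem.1 j
        simpa using this
    · rintro z ⟨hzc, hzs⟩
      simp only [stdCube, Set.mem_setOf_eq] at hzc
      rw [← AffineSubspace.map_span] at hzs
      obtain ⟨q, hq, hqz⟩ := AffineSubspace.mem_map.mp hzs
      rw [affineSpan_convexHull] at hq
      obtain ⟨c, hc1, rfl⟩ := mem_affineSpan_range f hq
      -- coordinates of z
      have hz₁ : ∀ j, π₁ (rho Δ d W₁ (∑ x, c x • f x)) j = z (Fin.castAdd N₂ j) := by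
        intro j
        rw [← hqz]
        simp
      have hz₂ : ∀ j, π₂ (rho Δ d W₂ (∑ x, c x • f x)) j = z (Fin.natAdd N₁ j) := by
        intro j
        rw [← hqz]
        simp
      have hρq₁ : rho Δ d W₁ (∑ x, c x • f x) = ∑ x, c x • f₁ (restr d W₁ x) := by
        rw [map_sum]
        simp only [LinearMap.map_smul, hf, rho_margVec]
        rfl
      have hρq₂ : rho Δ d W₂ (∑ x, c x • f x) = ∑ x, c x • f₂ (restr d W₂ x) := by
        rw [map_sum]
        simp only [LinearMap.map_smul, hf, rho_margVec]
        rfl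
      -- side 1 : recover a point of the hull
      have hπspan₁ : π₁ (rho Δ d W₁ (∑ x, c x • f x))
          ∈ affineSpan ℝ (⇑π₁ '' convexHull ℝ (Set.range f₁)) := by
        rw [← AffineSubspace.map_span]
        refine AffineSubspace.mem_map.mpr ⟨_, ?_, rfl⟩
        rw [affineSpan_convexHull, hρq₁]
        exact comb_mem_affineSpan _ (fun x => Set.mem_range_self _) c hc1
      have hcube₁ : π₁ (rho Δ d W₁ (∑ x, c x • f x)) ∈ stdCube N₁ := by
        intro j
        rw [hz₁ j]
        exact hzc (Fin.castAdd N₂ j)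
      have hmem₁ : π₁ (rho Δ d W₁ (∑ x, c x • f x)) ∈ ⇑π₁ '' convexHull ℝ (Set.range f₁) := by
        rw [hcs₁]
        exact ⟨hcube₁, hπspan₁⟩
      obtain ⟨p₁, hp₁hull, hp₁eq⟩ := hmem₁
      obtain ⟨w₁, hw₁0, hw₁1, hw₁rep⟩ := (mem_convexHull_range_iff f₁ p₁).mp hp₁hull
      have hfib₁sum : ∑ x₁ : (i : {a // a ∈ W₁}) → Fin (d i.1),
          (∑ x ∈ Finset.univ.filter (fun x => restr d W₁ x = x₁), c x) = 1 := by
        rw [Finset.sum_fiberwise_of_maps_to (fun x _ => Finset.mem_univ _) c]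
        exact hc1
      have hfib₁ : rho Δ d W₁ (∑ x, c x • f x) = ∑ x₁ : (i : {a // a ∈ W₁}) → Fin (d i.1),
          (∑ x ∈ Finset.univ.filter (fun x => restr d W₁ x = x₁), c x) • f₁ x₁ := by
        rw [hρq₁, ← Finset.sum_fiberwise_of_maps_to (fun x _ => Finset.mem_univ (restr d W₁ x))
          (fun x => c x • f₁ (restr d W₁ x))]
        refine Finset.sum_congr rfl fun x₁ _ => ?_
        rw [Finset.sum_smul]
        refine Finset.sum_congr rfl fun x hx => ?_
        rw [(Finset.mem_filter.mp hx).2]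
      have hp₁ρ : p₁ = rho Δ d W₁ (∑ x, c x • f x) := by
        rw [hw₁rep, hfib₁]
        refine comb_eq_of_injOn_hull f₁ π₁ hinj₁ hw₁1 hfib₁sum ?_
        rw [← hw₁rep, ← hfib₁]
        exact hp₁eq
      -- side 2 : recover a point of the hull
      have hπspan₂ : π₂ (rho Δ d W₂ (∑ x, c x • f x))
          ∈ affineSpan ℝ (⇑π₂ '' convexHull ℝ (Set.range f₂)) := by
        rw [← AffineSubspace.map_span]
        refine AffineSubspace.mem_map.mpr ⟨_, ?_, rfl⟩
        rw [affineSpan_convexHull, hρq₂]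
        exact comb_mem_affineSpan _ (fun x => Set.mem_range_self _) c hc1
      have hcube₂ : π₂ (rho Δ d W₂ (∑ x, c x • f x)) ∈ stdCube N₂ := by
        intro j
        rw [hz₂ j]
        exact hzc (Fin.natAdd N₁ j)
      have hmem₂ : π₂ (rho Δ d W₂ (∑ x, c x • f x)) ∈ ⇑π₂ '' convexHull ℝ (Set.range f₂) := by
        rw [hcs₂]
        exact ⟨hcube₂, hπspan₂⟩
      obtain ⟨p₂, hp₂hull, hp₂eq⟩ := hmem₂
      obtain ⟨w₂, hw₂0, hw₂1, hw₂rep⟩ := (mem_convexHull_range_iff f₂ p₂).mp hp₂hull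
      have hfib₂sum : ∑ x₂ : (i : {a // a ∈ W₂}) → Fin (d i.1),
          (∑ x ∈ Finset.univ.filter (fun x => restr d W₂ x = x₂), c x) = 1 := by
        rw [Finset.sum_fiberwise_of_maps_to (fun x _ => Finset.mem_univ _) c]
        exact hc1
      have hfib₂ : rho Δ d W₂ (∑ x, c x • f x) = ∑ x₂ : (i : {a // a ∈ W₂}) → Fin (d i.1),
          (∑ x ∈ Finset.univ.filter (fun x => restr d W₂ x = x₂), c x) • f₂ x₂ := by
        rw [hρq₂, ← Finset.sum_fiberwise_of_maps_to (fun x _ => Finset.mem_univ (restr d W₂ x))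
          (fun x => c x • f₂ (restr d W₂ x))]
        refine Finset.sum_congr rfl fun x₂ _ => ?_
        rw [Finset.sum_smul]
        refine Finset.sum_congr rfl fun x hx => ?_
        rw [(Finset.mem_filter.mp hx).2]
      have hp₂ρ : p₂ = rho Δ d W₂ (∑ x, c x • f x) := by
        rw [hw₂rep, hfib₂]
        refine comb_eq_of_injOn_hull f₂ π₂ hinj₂ hw₂1 hfib₂sum ?_
        rw [← hw₂rep, ← hfib₂]
        exact hp₂eq
      -- the common S-marginal
      set sres₁ : ((i : {a // a ∈ W₁}) → Fin (d i.1)) → ((j : {a // a ∈ S}) → Fin (d j.1)) :=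
        fun x₁ j => x₁ ⟨j.1, hSW₁ j.2⟩ with hsres₁
      set sres₂ : ((i : {a // a ∈ W₂}) → Fin (d i.1)) → ((j : {a // a ∈ S}) → Fin (d j.1)) :=
        fun x₂ j => x₂ ⟨j.1, hSW₂ j.2⟩ with hsres₂
      set m : ((j : {a // a ∈ S}) → Fin (d j.1)) → ℝ :=
        fun s => sigmaFun Δ d W₁ S hSW₁ hSi₁ (rho Δ d W₁ (∑ x, c x • f x)) s with hm
      have hσw₁ : ∀ s, sigmaFun Δ d W₁ S hSW₁ hSi₁ p₁ s
          = ∑ x₁, w₁ x₁ * (if sres₁ x₁ = s then (1:ℝ) else 0) := by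
        intro s
        rw [hw₁rep, sigma_comb]
        refine Finset.sum_congr rfl fun x₁ _ => ?_
        rw [sigma_margVec]
        congr 1
        exact if_congr funext_iff.symm rfl rfl
      have hσw₂ : ∀ s, sigmaFun Δ d W₂ S hSW₂ hSi₂ p₂ s
          = ∑ x₂, w₂ x₂ * (if sres₂ x₂ = s then (1:ℝ) else 0) := by
        intro s
        rw [hw₂rep, sigma_comb]
        refine Finset.sum_congr rfl fun x₂ _ => ?_
        rw [sigma_margVec]
        congr 1
        exact if_congr funext_iff.symm rfl rfl
      have hA : ∀ s, ∑ x₁ ∈ Finset.univ.filter (fun x₁ => sres₁ x₁ = s), w₁ x₁ = m s := by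
        intro s
        rw [Finset.sum_filter]
        simp only [hm]
        rw [← hp₁ρ, hσw₁ s]
        refine Finset.sum_congr rfl fun x₁ _ => ?_
        by_cases h : sres₁ x₁ = s <;> simp [h]
      have hmσ₂ : ∀ s, sigmaFun Δ d W₂ S hSW₂ hSi₂ (rho Δ d W₂ (∑ x, c x • f x)) s = m s := by
        intro s
        simp only [hm]
        rw [hρq₁, hρq₂, sigma_comb, sigma_comb]
        refine Finset.sum_congr rfl fun x _ => ?_
        rw [sigma_margVec, sigma_margVec]
        rfl
      have hB : ∀ s, ∑ x₂ ∈ Finset.univ.filter (fun x₂ => sres₂ x₂ = s), w₂ x₂ = m s := by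
        intro s
        rw [Finset.sum_filter, ← hmσ₂ s]
        rw [← hp₂ρ, hσw₂ s]
        refine Finset.sum_congr rfl fun x₂ _ => ?_
        by_cases h : sres₂ x₂ = s <;> simp [h]
      -- the coupling
      have hzero₁ : ∀ x₁, m (sres₁ x₁) = 0 → w₁ x₁ = 0 := by
        intro x₁ h0
        have hs := hA (sres₁ x₁)
        rw [h0] at hs
        exact (Finset.sum_eq_zero_iff_of_nonneg (fun x _ => hw₁0 x)).mp hs x₁
          (Finset.mem_filter.mpr ⟨Finset.mem_univ _, rfl⟩)
      have hzero₂ : ∀ x₂, m (sres₂ x₂) = 0 → w₂ x₂ = 0 := by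
        intro x₂ h0
        have hs := hB (sres₂ x₂)
        rw [h0] at hs
        exact (Finset.sum_eq_zero_iff_of_nonneg (fun x _ => hw₂0 x)).mp hs x₂
          (Finset.mem_filter.mpr ⟨Finset.mem_univ _, rfl⟩)
      have hm0 : ∀ s, 0 ≤ m s := by
        intro s
        rw [← hA s]
        exact Finset.sum_nonneg fun x _ => hw₁0 x
      set ν : (((i : {a // a ∈ W₁}) → Fin (d i.1)) × ((i : {a // a ∈ W₂}) → Fin (d i.1))) → ℝ :=
        fun pr => if sres₁ pr.1 = sres₂ pr.2 ∧ m (sres₁ pr.1) ≠ 0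
          then w₁ pr.1 * w₂ pr.2 / m (sres₁ pr.1) else 0 with hν
      have hν0 : ∀ pr, 0 ≤ ν pr := by
        intro pr
        rw [hν]
        dsimp only
        split
        · exact div_nonneg (mul_nonneg (hw₁0 _) (hw₂0 _)) (hm0 _)
        · exact le_refl 0
      have hrow : ∀ x₁, (∑ x₂, ν (x₁, x₂)) = w₁ x₁ := by
        intro x₁
        refine nu_row_sum sres₁ sres₂ w₁ w₂ m ?_ hzero₁ x₁
        intro a
        rw [show (Finset.univ.filter (fun b => sres₁ a = sres₂ b))
            = Finset.univ.filter (fun b => sres₂ b = sres₁ a) from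
          Finset.filter_congr (fun b _ => by rw [eq_comm])]
        exact hB (sres₁ a)
      have hcol : ∀ x₂, (∑ x₁, ν (x₁, x₂)) = w₂ x₂ := by
        intro x₂
        have hswap : ∀ x₁, ν (x₁, x₂) = if sres₂ x₂ = sres₁ x₁ ∧ m (sres₂ x₂) ≠ 0
            then w₂ x₂ * w₁ x₁ / m (sres₂ x₂) else 0 := by
          intro x₁
          rw [hν]
          dsimp only
          by_cases h : sres₁ x₁ = sres₂ x₂
          · by_cases hmz : m (sres₁ x₁) = 0
            · rw [if_neg (fun hh => hh.2 hmz), if_neg (fun hh => hh.2 (h ▸ hmz))]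
            · rw [if_pos ⟨h, hmz⟩, if_pos ⟨h.symm, fun hh => hmz (h ▸ hh)⟩, ← h]
              ring
          · rw [if_neg (fun hh => h hh.1), if_neg (fun hh => h hh.1.symm)]
        rw [Finset.sum_congr rfl fun x₁ _ => hswap x₁]
        refine nu_row_sum sres₂ sres₁ w₂ w₁ m ?_ hzero₂ x₂
        intro a
        rw [show (Finset.univ.filter (fun b => sres₂ a = sres₁ b))
            = Finset.univ.filter (fun b => sres₁ b = sres₂ a) from
          Finset.filter_congr (fun b _ => by rw [eq_comm])]
        exact hA (sres₂ a)
      -- glue the two weight systems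
      set glue : (((i : {a // a ∈ W₁}) → Fin (d i.1)) × ((i : {a // a ∈ W₂}) → Fin (d i.1)))
          → (∀ i, Fin (d i)) := fun pr i =>
        if h : i ∈ W₁ then pr.1 ⟨i, h⟩ else if h2 : i ∈ W₂ then pr.2 ⟨i, h2⟩ else ⟨0, hd i⟩
        with hglue
      set w : (∀ i, Fin (d i)) → ℝ :=
        fun x => ∑ pr ∈ Finset.univ.filter (fun pr => glue pr = x), ν pr with hw
      have hw0 : ∀ x, 0 ≤ w x := fun x => Finset.sum_nonneg fun pr _ => hν0 pr
      have hνtot : ∑ pr, ν pr = 1 := by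
        rw [Fintype.sum_prod_type]
        rw [Finset.sum_congr rfl fun x₁ _ => hrow x₁]
        exact hw₁1
      have hwsum : ∑ x, w x = 1 := by
        rw [hw]
        rw [Finset.sum_fiberwise_of_maps_to (fun pr _ => Finset.mem_univ (glue pr)) ν]
        exact hνtot
      have hcomb : (∑ x, w x • f x) = ∑ pr, ν pr • f (glue pr) := by
        rw [← Finset.sum_fiberwise_of_maps_to (fun pr _ => Finset.mem_univ (glue pr))
          (fun pr => ν pr • f (glue pr))]
        refine Finset.sum_congr rfl fun x _ => ?_
        rw [hw]
        dsimp only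
        rw [Finset.sum_smul]
        refine Finset.sum_congr rfl fun pr hpr => ?_
        rw [(Finset.mem_filter.mp hpr).2]
      have hglue₁ : ∀ pr, restr d W₁ (glue pr) = pr.1 := by
        intro pr
        funext i
        show glue pr i.1 = pr.1 i
        rw [hglue]
        dsimp only
        rw [dif_pos i.2]
      have hρw₁ : rho Δ d W₁ (∑ x, w x • f x) = p₁ := by
        rw [hcomb, map_sum]
        simp only [LinearMap.map_smul, hf, rho_margVec]
        rw [Finset.sum_congr rfl fun pr _ => by rw [hglue₁ pr]]
        rw [Fintype.sum_prod_type]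
        have hinner : ∀ x₁, (∑ x₂, ν (x₁, x₂) • f₁ (x₁, x₂).1) = w₁ x₁ • f₁ x₁ := by
          intro x₁
          dsimp only
          rw [← Finset.sum_smul, hrow x₁]
        rw [Finset.sum_congr rfl fun x₁ _ => hinner x₁, hw₁rep]
      have hρw₂ : rho Δ d W₂ (∑ x, w x • f x) = p₂ := by
        rw [hcomb, map_sum]
        simp only [LinearMap.map_smul, hf, rho_margVec]
        have hkey : ∀ pr, ν pr • f₂ (restr d W₂ (glue pr)) = ν pr • f₂ pr.2 := by
          intro pr
          by_cases hν' : ν pr = 0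
          · rw [hν']
            simp
          · have hcond : sres₁ pr.1 = sres₂ pr.2 := by
              by_contra hcc
              exact hν' (by rw [hν]; exact if_neg (fun hh => hcc hh.1))
            congr 1
            rw [hf₂]
            funext e
            obtain ⟨⟨F₂, hF₂⟩, y⟩ := e
            show (if (∀ i : {a // a ∈ F₂}, restr d W₂ (glue pr) i.1 = y i) then (1:ℝ) else 0)
              = if (∀ i : {a // a ∈ F₂}, pr.2 i.1 = y i) then (1:ℝ) else 0
            have hval : ∀ i : {a // a ∈ F₂}, restr d W₂ (glue pr) i.1 = pr.2 i.1 := by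
              intro i
              show glue pr i.1.1 = pr.2 i.1
              rw [hglue]
              dsimp only
              by_cases hW1 : i.1.1 ∈ W₁
              · rw [dif_pos hW1]
                have hunsub : unsub F₂ ∈ Δ := (unsub_mem Δ (facets_subset hF₂)).1
                have hiS : i.1.1 ∈ S :=
                  hact (unsub F₂) hunsub i.1.1 (mem_unsub.mpr i.2) hW1 i.1.2
                have h1' : pr.1 ⟨i.1.1, hW1⟩ = sres₁ pr.1 ⟨i.1.1, hiS⟩ := rfl
                have h2' : sres₂ pr.2 ⟨i.1.1, hiS⟩ = pr.2 i.1 := rfl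
                rw [h1', hcond, h2']
              · rw [dif_neg hW1, dif_pos i.1.2]
            refine if_congr (forall_congr' fun i => ?_) rfl rfl
            rw [hval i]
        rw [Finset.sum_congr rfl fun pr _ => hkey pr]
        rw [Fintype.sum_prod_type_right]
        have hinner : ∀ x₂, (∑ x₁, ν (x₁, x₂) • f₂ (x₁, x₂).2) = w₂ x₂ • f₂ x₂ := by
          intro x₂
          dsimp only
          rw [← Finset.sum_smul, hcol x₂]
        rw [Finset.sum_congr rfl fun x₂ _ => hinner x₂, hw₂rep]
      -- conclude
      refine ⟨∑ x, w x • f x,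
        mem_convexHull_of_exists_fintype w f hw0 hwsum (fun x => Set.mem_range_self _) rfl, ?_⟩
      funext k
      revert k
      refine haddC _ ?_ ?_
      · intro j
        have h1' : π₁ (rho Δ d W₁ (∑ x, w x • f x)) j = z (Fin.castAdd N₂ j) := by
          rw [hρw₁, hp₁eq]
          exact hz₁ j
        simpa using h1'
      · intro j
        have h2' : π₂ (rho Δ d W₂ (∑ x, w x • f x)) j = z (Fin.natAdd N₁ j) := by
          rw [hρw₂, hp₂eq]
          exact hz₂ j
        simpa using h2'
end
end
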